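/- arXiv:2103.03403 — 13 statements merged into one kernel-verified Lean document; each statement's English description precedes it below -/
import Mathlib

section
/- Let F be a cumulative distribution function on [0, v̄] and R(v) = v·(1 - F(v)) the revenue function with maximizer p* and optimal value R* = R(p*). For any ε > 0 and any pair of functions x : [0,v̄] → [0,1], t : [0,v̄] → ℝ satisfying individual rationality (v·x(v) - t(v) ≥ 0 for all v) and ε-incentive compatibility (v·x(v) - t(v) ≥ v·x(v') - t(v') - ε for all v, v'), the expected revenue satisfies E[t(v)] - R* ≤ 2·δ·R* + ε/δ for every δ ∈ (0, 1/2], where the expectation is over v ~ F. -/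
/-!
Nisan's rounding: offer the same menu with every payment discounted by the factor `1 - δ`. A
nearly optimal choice `w` of type `v` in the discounted menu pays `t w ≥ t v - ε / δ`, since the
discount rewards paying more while `ε`-IC limits what `v` gains by switching to `w`. The indirect
utility `U` of the discounted menu is convex and its right derivative `g` is a monotone allocation
rule with values in `[0, 1]`; as `x w` is nearly a subgradient of `U` at `v`,
`(1 - δ) t w ≤ v g(v) - U v` in the limit, and `U v ≥ U 0 + ∫₀ᵛ g` with `U 0 ≥ 0` by IR. Hence
`(1 - δ) (t v - ε / δ)` is at most the Myerson payment `v g(v) - ∫₀ᵛ g`. Writing `g` as a lottery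
over the posted prices `thresholdPrice g θ`, `θ` uniform on `[0, 1]`, bounds the expected Myerson
payment by the best posted-price revenue `R*`. So `(1 - δ) (E t - ε / δ) ≤ R*`, and
`1 / (1 - δ) ≤ 1 + 2δ` for `δ ≤ 1/2`.
-/

open MeasureTheory Set Filter Topology
open scoped ENNReal

theorem ConvexOn.monotone_rightDeriv {f : ℝ → ℝ} (hf : ConvexOn ℝ univ f) :
    Monotone fun x => derivWithin f (Ioi x) x := fun _ _ hxy =>
  hf.monotoneOn_rightDeriv (by simp) (by simp) hxy

theorem ConvexOn.integral_rightDeriv_le_sub {f : ℝ → ℝ} (hf : ConvexOn ℝ univ f) {a b : ℝ}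
    (hab : a ≤ b) : ∫ x in a..b, derivWithin f (Ioi x) x ≤ f b - f a :=
  intervalIntegral.integral_le_sub_of_hasDeriv_right_of_le hab
    ((hf.continuousOn isOpen_univ).mono (subset_univ _))
    (fun _ _ => hf.hasDerivWithinAt_rightDeriv_of_mem_interior (by simp))
    ((hf.monotone_rightDeriv.monotoneOn _).integrableOn_isCompact isCompact_Icc)
    fun _ _ => le_rfl

section IndirectUtility

variable {ι : Type*} {S : Set ι} {a b : ι → ℝ} {v w c : ℝ}

noncomputable def indirectUtility (S : Set ι) (a b : ι → ℝ) (v : ℝ) : ℝ :=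
  ⨆ i : S, v * a i - b i

theorem bddAbove_range_mul_sub (ha : ∀ i ∈ S, a i ∈ Icc (0 : ℝ) 1) (hb : BddBelow (b '' S))
    (v : ℝ) : BddAbove (range fun i : S => v * a i - b i) := by
  obtain ⟨m, hm⟩ := hb
  refine ⟨|v| - m, ?_⟩
  rintro _ ⟨⟨i, hi⟩, rfl⟩
  have hbi := hm (mem_image_of_mem b hi)
  obtain ⟨ha0, ha1⟩ := ha i hi
  nlinarith [le_abs_self v, abs_nonneg v]

theorem le_indirectUtility (ha : ∀ i ∈ S, a i ∈ Icc (0 : ℝ) 1) (hb : BddBelow (b '' S))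
    {i : ι} (hi : i ∈ S) (v : ℝ) : v * a i - b i ≤ indirectUtility S a b v :=
  le_ciSup (f := fun i : S => v * a i - b i) (bddAbove_range_mul_sub ha hb v) ⟨i, hi⟩

theorem indirectUtility_le (hS : S.Nonempty) (h : ∀ i ∈ S, v * a i - b i ≤ c) :
    indirectUtility S a b v ≤ c :=
  have := hS.to_subtype
  ciSup_le fun i => h i i.2

theorem exists_lt_sub_of_lt_indirectUtility (hS : S.Nonempty) (h : c < indirectUtility S a b v) :
    ∃ i ∈ S, c < v * a i - b i :=
  have := hS.to_subtype
  let ⟨i, hi⟩ := exists_lt_of_lt_ciSup h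
  ⟨i, i.2, hi⟩

theorem convexOn_indirectUtility (ha : ∀ i ∈ S, a i ∈ Icc (0 : ℝ) 1) (hb : BddBelow (b '' S))
    (hS : S.Nonempty) : ConvexOn ℝ univ (indirectUtility S a b) := by
  refine ⟨convex_univ, fun v _ w _ p q hp hq hpq => indirectUtility_le hS fun i hi => ?_⟩
  have hv := mul_le_mul_of_nonneg_left (le_indirectUtility ha hb hi v) hp
  have hw := mul_le_mul_of_nonneg_left (le_indirectUtility ha hb hi w) hq
  simp only [smul_eq_mul]
  linear_combination hv + hw + b i * hpq

theorem monotone_indirectUtility (ha : ∀ i ∈ S, a i ∈ Icc (0 : ℝ) 1) (hb : BddBelow (b '' S))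
    (hS : S.Nonempty) : Monotone (indirectUtility S a b) := fun v w hvw =>
  indirectUtility_le hS fun i hi => by
    have := le_indirectUtility ha hb hi w
    nlinarith [(ha i hi).1]

theorem indirectUtility_le_add_sub (ha : ∀ i ∈ S, a i ∈ Icc (0 : ℝ) 1) (hb : BddBelow (b '' S))
    (hS : S.Nonempty) (hvw : v ≤ w) : indirectUtility S a b w ≤ indirectUtility S a b v + (w - v) :=
  indirectUtility_le hS fun i hi => by
    have := le_indirectUtility ha hb hi v
    nlinarith [(ha i hi).2]

theorem rightDeriv_indirectUtility_mem_Icc (ha : ∀ i ∈ S, a i ∈ Icc (0 : ℝ) 1)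
    (hb : BddBelow (b '' S)) (hS : S.Nonempty) (v : ℝ) :
    derivWithin (indirectUtility S a b) (Ioi v) v ∈ Icc (0 : ℝ) 1 := by
  refine ⟨((monotone_indirectUtility ha hb hS).monotoneOn _).derivWithin_nonneg, ?_⟩
  calc derivWithin (indirectUtility S a b) (Ioi v) v
      ≤ slope (indirectUtility S a b) v (v + 1) :=
        (convexOn_indirectUtility ha hb hS).rightDeriv_le_slope_of_mem_interior (by simp)
          (mem_univ _) (lt_add_one v)
    _ ≤ 1 := by
        rw [slope_def_field, add_sub_cancel_left, div_one]
        linarith [indirectUtility_le_add_sub ha hb hS (lt_add_one v).le]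

end IndirectUtility

noncomputable def myersonPayment (g : ℝ → ℝ) (v : ℝ) : ℝ :=
  v * g v - ∫ s in (0 : ℝ)..v, g s

section Mechanism

variable {S : Set ℝ} {x t : ℝ → ℝ} {ε δ v : ℝ}

local notation "Uδ" => indirectUtility S x fun w => (1 - δ) * t w

def IsEpsIC (S : Set ℝ) (x t : ℝ → ℝ) (ε : ℝ) : Prop :=
  ∀ v ∈ S, ∀ v' ∈ S, v * x v' - t v' - ε ≤ v * x v - t v

theorem IsEpsIC.bddBelow_image (hIC : IsEpsIC S x t ε) (h0 : 0 ∈ S) : BddBelow (t '' S) :=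
  ⟨t 0 - ε, by
    rintro _ ⟨w, hw, rfl⟩
    linarith [hIC 0 h0 w hw]⟩

theorem bddBelow_image_const_mul {c : ℝ} (hc : 0 ≤ c) (ht : BddBelow (t '' S)) :
    BddBelow ((fun w => c * t w) '' S) := by
  simpa only [image_image] using (monotone_mul_left_of_nonneg hc).map_bddBelow ht

theorem IsEpsIC.payment_le_of_lt_sub (hIC : IsEpsIC S x t ε) (hx : ∀ w ∈ S, x w ∈ Icc (0 : ℝ) 1)
    (ht : BddBelow (t '' S)) (hδ : δ ∈ Ioc (0 : ℝ) 1) (hv : v ∈ S) (hv0 : 0 ≤ v) {u w η : ℝ}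
    (hvu : v < u) (hw : w ∈ S)
    (hopt : Uδ v - η < v * x w - (1 - δ) * t w) :
    (1 - δ) * t v ≤ v * ((Uδ u - Uδ v + η) / (u - v)) - Uδ v + η + (1 - δ) * ((ε + η) / δ) := by
  obtain ⟨hδ0, hδ1⟩ := hδ
  have hb := bddBelow_image_const_mul (sub_nonneg.2 hδ1) ht
  have hpay : t v - t w ≤ (ε + η) / δ := by
    rw [le_div_iff₀ hδ0]
    linarith [hIC v hv w hw, le_indirectUtility hx hb hv v]
  have hxw : x w ≤ (Uδ u - Uδ v + η) / (u - v) := by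
    rw [le_div_iff₀ (sub_pos.2 hvu)]
    linarith [le_indirectUtility hx hb hw u]
  nlinarith [mul_le_mul_of_nonneg_left hpay (sub_nonneg.2 hδ1), mul_le_mul_of_nonneg_left hxw hv0]

theorem IsEpsIC.payment_le_rightDeriv (hIC : IsEpsIC S x t ε) (hx : ∀ w ∈ S, x w ∈ Icc (0 : ℝ) 1)
    (ht : BddBelow (t '' S)) (hδ : δ ∈ Ioc (0 : ℝ) 1) (hv : v ∈ S) (hv0 : 0 ≤ v) :
    (1 - δ) * t v ≤ v * derivWithin Uδ (Ioi v) v - Uδ v + (1 - δ) * (ε / δ) := by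
  have hS : S.Nonempty := ⟨v, hv⟩
  have hb := bddBelow_image_const_mul (sub_nonneg.2 hδ.2) ht
  have hslope : ∀ u, v < u → (1 - δ) * t v ≤ v * slope Uδ v u - Uδ v + (1 - δ) * (ε / δ) := by
    intro u hvu
    have hcont : Continuous fun η =>
        v * ((Uδ u - Uδ v + η) / (u - v)) - Uδ v + η + (1 - δ) * ((ε + η) / δ) := by
      fun_prop
    refine ge_of_tendsto (x := 𝓝[>] (0 : ℝ)) (by
      simpa [slope_def_field] using (hcont.tendsto 0).mono_left nhdsWithin_le_nhds) ?_
    filter_upwards [self_mem_nhdsWithin] with η (hη : 0 < η)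
    obtain ⟨w, hw, hopt⟩ := exists_lt_sub_of_lt_indirectUtility hS (sub_lt_self (Uδ v) hη)
    exact hIC.payment_le_of_lt_sub hx ht hδ hv hv0 hvu hw hopt
  have hderiv := (convexOn_indirectUtility hx hb hS).hasDerivWithinAt_rightDeriv_of_mem_interior
    (x := v) (by simp)
  have hlim := (hasDerivWithinAt_iff_tendsto_slope' self_notMem_Ioi).mp hderiv
  exact ge_of_tendsto (((hlim.const_mul v).sub_const (Uδ v)).add_const _)
    (eventually_nhdsWithin_of_forall hslope)

theorem IsEpsIC.sub_le_myersonPayment (hIC : IsEpsIC S x t ε)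
    (hx : ∀ w ∈ S, x w ∈ Icc (0 : ℝ) 1) (h0 : 0 ∈ S) (ht0 : t 0 ≤ 0) (hδ : δ ∈ Ioc (0 : ℝ) 1)
    (hv : v ∈ S) (hv0 : 0 ≤ v) :
    (1 - δ) * t v - (1 - δ) * (ε / δ) ≤ myersonPayment (fun v => derivWithin Uδ (Ioi v) v) v := by
  have ht := hIC.bddBelow_image h0
  have hb := bddBelow_image_const_mul (sub_nonneg.2 hδ.2) ht
  have hU0 := le_indirectUtility hx hb h0 0
  have hFTC := (convexOn_indirectUtility hx hb ⟨0, h0⟩).integral_rightDeriv_le_sub hv0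
  have := hIC.payment_le_rightDeriv hx ht hδ hv hv0
  rw [myersonPayment]
  nlinarith [hδ.2]

end Mechanism

theorem integral_le_of_lintegral_ofReal_le {α : Type*} [MeasurableSpace α] {μ : Measure α}
    {f : α → ℝ} (hf : Integrable f μ) {C : ℝ} (hC : 0 ≤ C)
    (h : ∫⁻ a, ENNReal.ofReal (f a) ∂μ ≤ ENNReal.ofReal C) : ∫ a, f a ∂μ ≤ C := by
  rw [integral_eq_lintegral_pos_part_sub_lintegral_neg_part hf]
  exact (sub_le_self _ ENNReal.toReal_nonneg).trans (ENNReal.toReal_le_of_le_ofReal hC h)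

section PostedPrices

variable {P : Measure ℝ} {g : ℝ → ℝ} {R : ℝ}

theorem ofReal_mul_measure_Ici_le [IsFiniteMeasure P] {C : ℝ≥0∞}
    (h : ∀ q, ENNReal.ofReal q * P (Ioi q) ≤ C) (p : ℝ) : ENNReal.ofReal p * P (Ici p) ≤ C := by
  have hlim : Tendsto (fun q => ENNReal.ofReal q * P (Ici p)) (𝓝[<] p)
      (𝓝 (ENNReal.ofReal p * P (Ici p))) :=
    ENNReal.Tendsto.mul_const ((ENNReal.continuous_ofReal.tendsto p).mono_left nhdsWithin_le_nhds)
      (Or.inr (measure_ne_top P _))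
  refine le_of_tendsto hlim (eventually_nhdsWithin_of_forall fun q (hq : q < p) => ?_)
  calc ENNReal.ofReal q * P (Ici p) ≤ ENNReal.ofReal q * P (Ioi q) := by
        gcongr
    _ ≤ C := h q

-- Valued in `ℝ≥0∞`, so that it is `⊤` rather than a junk `0` when `g` never exceeds `θ`; this
-- keeps it monotone in `θ`.
noncomputable def thresholdPrice (g : ℝ → ℝ) (θ : ℝ) : ℝ≥0∞ :=
  ⨅ (s : ℝ) (_ : 0 ≤ s ∧ θ < g s), ENNReal.ofReal s

theorem monotone_thresholdPrice : Monotone (thresholdPrice g) :=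
  fun _ _ hθ => biInf_mono fun _ hs => ⟨hs.1, hθ.trans_lt hs.2⟩

theorem myersonPayment_eq_setIntegral (hg : Monotone g) {v : ℝ} (hv : 0 ≤ v) :
    myersonPayment g v = ∫ s in Ioc 0 v, (g v - g s) := by
  have hconst : IntegrableOn (fun _ => g v) (Ioc 0 v) := integrableOn_const (by simp)
  rw [integral_sub hconst (hg.intervalIntegrable (a := 0) (b := v)).1,
    setIntegral_const, myersonPayment, intervalIntegral.integral_of_le hv]
  simp [measureReal_def, hv]

theorem ofReal_myersonPayment_le (hg : Monotone g) (hg0 : ∀ v, 0 ≤ g v) (hg1 : ∀ v, g v ≤ 1)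
    {v : ℝ} (hv : 0 ≤ v) :
    ENNReal.ofReal (myersonPayment g v) ≤
      ∫⁻ θ in Ico 0 1, (Iio (g v)).indicator (thresholdPrice g) θ := by
  have hgm := hg.measurable
  calc ENNReal.ofReal (myersonPayment g v)
      = ∫⁻ s in Ioc 0 v, ENNReal.ofReal (g v - g s) := by
        rw [myersonPayment_eq_setIntegral hg hv]
        refine ofReal_integral_eq_lintegral_ofReal
          ((integrableOn_const (by simp)).sub (hg.intervalIntegrable (a := 0) (b := v)).1) ?_
        filter_upwards [ae_restrict_mem measurableSet_Ioc] with s hs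
        exact sub_nonneg.2 (hg hs.2)
    _ = ∫⁻ s in Ioc 0 v, ∫⁻ θ in Ico 0 1, (Ico (g s) (g v)).indicator 1 θ := by
        refine setLIntegral_congr_fun measurableSet_Ioc fun s _ => ?_
        rw [lintegral_indicator_one measurableSet_Ico, Measure.restrict_apply measurableSet_Ico,
          inter_eq_self_of_subset_left, Real.volume_Ico]
        exact Ico_subset_Ico (hg0 s) (hg1 v)
    _ = ∫⁻ θ in Ico 0 1, ∫⁻ s in Ioc 0 v, (Ico (g s) (g v)).indicator 1 θ := by
        refine lintegral_lintegral_swap (Measurable.aemeasurable ?_)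
        refine Measurable.indicator measurable_const ?_
        exact (measurableSet_le (hgm.comp measurable_fst) measurable_snd).inter
          (measurableSet_lt measurable_snd measurable_const)
    _ ≤ ∫⁻ θ in Ico 0 1, (Iio (g v)).indicator (thresholdPrice g) θ := by
        refine lintegral_mono fun θ => ?_
        by_cases hθ : θ < g v
        · have hset : MeasurableSet {s | g s ≤ θ} := measurableSet_le hgm measurable_const
          have hind : ∀ s, (Ico (g s) (g v)).indicator 1 θ =
              {s | g s ≤ θ}.indicator (1 : ℝ → ℝ≥0∞) s := fun s => by simp [indicator, hθ]
          simp_rw [hind, indicator_of_mem (mem_Iio.2 hθ)]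
          rw [lintegral_indicator_one hset, Measure.restrict_apply hset]
          refine le_iInf₂ fun y ⟨_, hy⟩ => ?_
          calc volume ({s | g s ≤ θ} ∩ Ioc 0 v) ≤ volume (Ioc 0 y) :=
                measure_mono fun s ⟨hs, hs'⟩ =>
                  ⟨hs'.1, not_lt.1 fun hys => (hy.trans_le (hg hys.le)).not_ge hs⟩
            _ = ENNReal.ofReal y := by simp [Real.volume_Ioc]
        · simp [indicator, hθ]

theorem lintegral_indicator_thresholdPrice_le [IsFiniteMeasure P] (hgm : Measurable g)
    (hP : ∀ᵐ v ∂P, 0 ≤ v) (hR : ∀ p, ENNReal.ofReal p * P (Ioi p) ≤ ENNReal.ofReal R) (θ : ℝ) :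
    ∫⁻ v, (Iio (g v)).indicator (thresholdPrice g) θ ∂P ≤ ENNReal.ofReal R := by
  have hind : ∀ v, (Iio (g v)).indicator (thresholdPrice g) θ =
      {v | θ < g v}.indicator (fun _ => thresholdPrice g θ) v := fun v => by simp [indicator]
  have hnull : P (Ici 0)ᶜ = 0 := ae_iff.1 hP
  simp_rw [hind]
  rw [lintegral_indicator_const (measurableSet_lt measurable_const hgm),
    ← measure_inter_conull hnull]
  rcases eq_empty_or_nonempty ({v | θ < g v} ∩ Ici 0) with h | ⟨v₀, hv₀θ, hv₀⟩
  · simp [h]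
  have hne : thresholdPrice g θ ≠ ⊤ :=
    ne_top_of_le_ne_top ENNReal.ofReal_ne_top (iInf₂_le v₀ ⟨hv₀, hv₀θ⟩)
  rw [← ENNReal.ofReal_toReal hne]
  refine le_trans ?_ (ofReal_mul_measure_Ici_le hR (thresholdPrice g θ).toReal)
  gcongr
  rintro v ⟨hvθ, hv⟩
  exact ENNReal.toReal_le_of_le_ofReal hv (iInf₂_le v ⟨hv, hvθ⟩)

theorem lintegral_myersonPayment_le [IsFiniteMeasure P] (hg : Monotone g) (hg0 : ∀ v, 0 ≤ g v)
    (hg1 : ∀ v, g v ≤ 1) (hP : ∀ᵐ v ∂P, 0 ≤ v)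
    (hR : ∀ p, ENNReal.ofReal p * P (Ioi p) ≤ ENNReal.ofReal R) :
    ∫⁻ v, ENNReal.ofReal (myersonPayment g v) ∂P ≤ ENNReal.ofReal R :=
  calc ∫⁻ v, ENNReal.ofReal (myersonPayment g v) ∂P
      ≤ ∫⁻ v, (∫⁻ θ in Ico 0 1, (Iio (g v)).indicator (thresholdPrice g) θ) ∂P :=
        lintegral_mono_ae (hP.mono fun _ hv => ofReal_myersonPayment_le hg hg0 hg1 hv)
    _ = ∫⁻ θ in Ico 0 1, ∫⁻ v, (Iio (g v)).indicator (thresholdPrice g) θ ∂P := by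
        refine lintegral_lintegral_swap (Measurable.aemeasurable ?_)
        exact Measurable.ite (measurableSet_lt measurable_snd (hg.measurable.comp measurable_fst))
          (monotone_thresholdPrice.measurable.comp measurable_snd) measurable_const
    _ ≤ ∫⁻ _ in Ico (0 : ℝ) 1, ENNReal.ofReal R :=
        lintegral_mono fun θ => lintegral_indicator_thresholdPrice_le hg.measurable hP hR θ
    _ = ENNReal.ofReal R := by simp

theorem integral_le_of_ae_le_myersonPayment [IsFiniteMeasure P] (hg : Monotone g)
    (hg0 : ∀ v, 0 ≤ g v) (hg1 : ∀ v, g v ≤ 1) (hP : ∀ᵐ v ∂P, 0 ≤ v)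
    (hR : ∀ p, ENNReal.ofReal p * P (Ioi p) ≤ ENNReal.ofReal R) (hR0 : 0 ≤ R) {f : ℝ → ℝ}
    (hf : Integrable f P) (hfg : ∀ᵐ v ∂P, f v ≤ myersonPayment g v) : ∫ v, f v ∂P ≤ R :=
  integral_le_of_lintegral_ofReal_le hf hR0
    ((lintegral_mono_ae (hfg.mono fun _ hv => ENNReal.ofReal_le_ofReal hv)).trans
      (lintegral_myersonPayment_le hg hg0 hg1 hP hR))

end PostedPrices

theorem ofReal_mul_measure_Ioi_le_of_support {P : Measure ℝ} [IsProbabilityMeasure P] {vbar R : ℝ}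
    (hsupp : P (Icc 0 vbar) = 1) (hR : ∀ p ∈ Icc 0 vbar, p * P.real (Ioi p) ≤ R) (p : ℝ) :
    ENNReal.ofReal p * P (Ioi p) ≤ ENNReal.ofReal R := by
  rcases lt_or_ge p 0 with hp | hp
  · simp [ENNReal.ofReal_of_nonpos hp.le]
  rcases le_or_gt p vbar with hpv | hpv
  · rw [← ENNReal.ofReal_toReal (measure_ne_top P (Ioi p)), ← ENNReal.ofReal_mul hp]
    exact ENNReal.ofReal_le_ofReal (hR p ⟨hp, hpv⟩)
  · have hnull : P (Icc 0 vbar)ᶜ = 0 := by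
      rw [prob_compl_eq_one_sub measurableSet_Icc, hsupp, tsub_self]
    have hsub : Ioi p ⊆ (Icc 0 vbar)ᶜ := fun y (hy : p < y) hy' => hpv.not_ge (hy'.2.trans' hy.le)
    simp [measure_mono_null hsub hnull]

theorem nisan_rounding_bound_general
    (vbar : ℝ) (P : Measure ℝ) [IsProbabilityMeasure P]
    (hsupp : P (Set.Icc 0 vbar) = 1)
    (F : ℝ → ℝ) (hF : ∀ v, F v = (P (Set.Iic v)).toReal)
    (R : ℝ → ℝ) (hR : ∀ v, R v = v * (1 - F v))
    (pstar : ℝ) (hpstar : pstar ∈ Set.Icc 0 vbar)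
    (hmax : ∀ v ∈ Set.Icc 0 vbar, R v ≤ R pstar)
    (ε : ℝ)
    (x t : ℝ → ℝ)
    (hx : ∀ v ∈ Set.Icc 0 vbar, x v ∈ Set.Icc (0:ℝ) 1)
    (hIR : ∀ v ∈ Set.Icc 0 vbar, 0 ≤ v * x v - t v)
    (hIC : ∀ v ∈ Set.Icc 0 vbar, ∀ v' ∈ Set.Icc 0 vbar,
      v * x v' - t v' - ε ≤ v * x v - t v)
    (ht : Integrable t P)
    (δ : ℝ) (hδ : δ ∈ Set.Ioc (0:ℝ) (1/2)) :
    (∫ v, t v ∂P) - R pstar ≤ 2 * δ * R pstar + ε / δ := by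
  obtain ⟨hδ0, hδ2⟩ := hδ
  have hδ1 : δ ∈ Ioc (0 : ℝ) 1 := ⟨hδ0, by linarith⟩
  have h0 : (0 : ℝ) ∈ Icc 0 vbar := ⟨le_rfl, hpstar.1.trans hpstar.2⟩
  have hR0 : 0 ≤ R pstar := by simpa [hR] using hmax 0 h0
  have hb := bddBelow_image_const_mul (sub_nonneg.2 hδ1.2) (IsEpsIC.bddBelow_image hIC h0)
  have hU := convexOn_indirectUtility hx hb ⟨0, h0⟩
  have hg := rightDeriv_indirectUtility_mem_Icc hx hb ⟨0, h0⟩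
  have hprice : ∀ p ∈ Icc 0 vbar, p * P.real (Ioi p) ≤ R pstar := fun p hp => by
    rw [← compl_Iic, probReal_compl_eq_one_sub measurableSet_Iic, measureReal_def, ← hF, ← hR]
    exact hmax p hp
  have hsupp' : ∀ᵐ v ∂P, v ∈ Icc 0 vbar := (mem_ae_iff_prob_eq_one measurableSet_Icc).2 hsupp
  have hrev := integral_le_of_ae_le_myersonPayment hU.monotone_rightDeriv (fun v => (hg v).1)
    (fun v => (hg v).2) (hsupp'.mono fun _ hv => hv.1)
    (ofReal_mul_measure_Ioi_le_of_support hsupp hprice) hR0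
    (f := fun v => (1 - δ) * t v - (1 - δ) * (ε / δ))
    ((ht.const_mul (1 - δ)).sub (integrable_const _))
    (hsupp'.mono fun v hv => IsEpsIC.sub_le_myersonPayment hIC hx h0
      (by linarith [hIR 0 h0]) hδ1 hv hv.1)
  rw [integral_sub (ht.const_mul _) (integrable_const _), integral_const_mul] at hrev
  simp only [integral_const, probReal_univ, one_smul] at hrev
  nlinarith [mul_nonneg (mul_nonneg hδ0.le (by linarith : (0 : ℝ) ≤ 1 - 2 * δ)) hR0]

/-- Nisan's rounding upper bound: for any IR, ε-IC mechanism `(x, t)` on `[0, v̄]`,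
the expected revenue exceeds the optimal posted-price revenue `R* = R(p*)` by at most
`2·δ·R* + ε/δ` for every `δ ∈ (0, 1/2]`. -/
theorem nisan_rounding_bound
    (vbar : ℝ) (P : Measure ℝ) [IsProbabilityMeasure P]
    (hsupp : P (Set.Icc 0 vbar) = 1)
    (F : ℝ → ℝ) (hF : ∀ v, F v = (P (Set.Iic v)).toReal)
    (R : ℝ → ℝ) (hR : ∀ v, R v = v * (1 - F v))
    (pstar : ℝ) (hpstar : pstar ∈ Set.Icc 0 vbar)
    (hmax : ∀ v ∈ Set.Icc 0 vbar, R v ≤ R pstar)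
    (ε : ℝ) (hε : 0 < ε)
    (x t : ℝ → ℝ)
    (hx : ∀ v ∈ Set.Icc 0 vbar, x v ∈ Set.Icc (0:ℝ) 1)
    (hIR : ∀ v ∈ Set.Icc 0 vbar, 0 ≤ v * x v - t v)
    (hIC : ∀ v ∈ Set.Icc 0 vbar, ∀ v' ∈ Set.Icc 0 vbar,
      v * x v' - t v' - ε ≤ v * x v - t v)
    (ht : Integrable t P)
    (δ : ℝ) (hδ : δ ∈ Set.Ioc (0:ℝ) (1/2)) :
    (∫ v, t v ∂P) - R pstar ≤ 2 * δ * R pstar + ε / δ :=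
  nisan_rounding_bound_general vbar P hsupp F hF R hR pstar hpstar hmax ε x t hx hIR hIC ht δ hδ
end

section
/- Let F be a CDF with density f on [0, v̄], and let w : [0, ν₀] → [μ, v̄] be strictly increasing and differentiable with w(v) > v. Define the thresholds ν_{-1} = v̄, ν_k = w^{-1}(ν_{k-1}), and let λ satisfy λ(v) = f(v) on [ν₀, v̄] and λ(v) = f(v) + w'(v)·λ(w(v)) on [μ, ν₀]. Then for each k ∈ {0, …, K} and almost every v ∈ [ν_k, ν_{k-1}] with v ≥ μ, λ(v) = (d/dv) Σ_{j=0}^{k} F(w^j(v)), where w^j denotes the j-th composition of w and w^0(v) = v. -/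
/-!
Since `w` is increasing and `w (ν (k + 1)) = ν k`, it maps `[ν (k + 2), ν (k + 1)]` into
`[ν (k + 1), ν k]`. Splitting off the `j = 0` term,
`∑_{j ≤ k+1} F (wʲ v) = F v + ∑_{j ≤ k} F (wʲ (w v))`, so by the chain rule and induction
on `k` its derivative is `f v + w' v · λ (w v) = λ v`. The identity in fact holds at every
point of the interval, not just almost everywhere.
-/

open Set MeasureTheory

theorem sum_range_succ_iterate {α M : Type*} [AddCommMonoid M] (F : α → M) (w : α → α)
    (n : ℕ) (u : α) :
    ∑ j ∈ Finset.range (n + 1), F (w^[j] u) =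
      F u + ∑ j ∈ Finset.range n, F (w^[j] (w u)) := by
  rw [Finset.sum_range_succ', add_comm]
  simp only [Function.iterate_succ_apply, Function.iterate_zero_apply]

theorem HasDerivAt.sum_range_succ_iterate {F w : ℝ → ℝ} {n : ℕ} {v f' w' L : ℝ}
    (hF : HasDerivAt F f' v) (hw : HasDerivAt w w' v)
    (hsum : HasDerivAt (fun u => ∑ j ∈ Finset.range n, F (w^[j] u)) L (w v)) :
    HasDerivAt (fun u => ∑ j ∈ Finset.range (n + 1), F (w^[j] u)) (f' + w' * L) v := by
  simp only [_root_.sum_range_succ_iterate]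
  rw [mul_comm]
  exact hF.fun_add (hsum.comp v hw)

section Thresholds

variable {w : ℝ → ℝ} {ν₀ : ℝ} {ν : ℕ → ℝ} {K : ℕ}

theorem threshold_one_eq
    (hrec : ∀ k ≤ K, ν (k + 1) ∈ Icc 0 ν₀ ∧ w (ν (k + 1)) = ν k)
    (hwmono : StrictMonoOn w (Icc 0 ν₀)) (hwν₀ : w ν₀ = ν 0) :
    ν 1 = ν₀ := by
  obtain ⟨hν1, hwν1⟩ := hrec 0 K.zero_le
  exact hwmono.injOn hν1 ⟨hν1.1.trans hν1.2, le_rfl⟩ (hwν1.trans hwν₀.symm)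

theorem mapsTo_threshold_Icc
    (hrec : ∀ k ≤ K, ν (k + 1) ∈ Icc 0 ν₀ ∧ w (ν (k + 1)) = ν k)
    (hwmono : MonotoneOn w (Icc 0 ν₀)) {k : ℕ} (hk : k + 1 ≤ K) :
    MapsTo w (Icc (ν (k + 2)) (ν (k + 1))) (Icc (ν (k + 1)) (ν k)) := by
  obtain ⟨hν2, hwν2⟩ := hrec (k + 1) hk
  obtain ⟨hν1, hwν1⟩ := hrec k (Nat.le_of_succ_le hk)
  have hmaps := (hwmono.mono (Icc_subset_Icc hν2.1 hν1.2)).mapsTo_Icc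
  rwa [hwν2, hwν1] at hmaps

end Thresholds

theorem hasDerivAt_sum_iterate_of_mem_threshold_Icc {F f lam w : ℝ → ℝ} {μ₀ ν₀ : ℝ}
    {ν : ℕ → ℝ} {K : ℕ}
    (hF : ∀ v, HasDerivAt F (f v) v)
    (hwmono : MonotoneOn w (Icc 0 ν₀))
    (hwdiff : ∀ v ∈ Icc 0 ν₀, DifferentiableAt ℝ w v)
    (hwgt : ∀ v ∈ Icc 0 ν₀, v < w v)
    (hrec : ∀ k ≤ K, ν (k + 1) ∈ Icc 0 ν₀ ∧ w (ν (k + 1)) = ν k)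
    (hν1 : ν 1 = ν₀)
    (hlam1 : ∀ v ∈ Icc ν₀ (ν 0), lam v = f v)
    (hlam2 : ∀ v ∈ Icc μ₀ ν₀, lam v = f v + deriv w v * lam (w v)) :
    ∀ k ≤ K, ∀ v ∈ Icc (ν (k + 1)) (ν k), μ₀ ≤ v →
      HasDerivAt (fun u => ∑ j ∈ Finset.range (k + 1), F (w^[j] u)) (lam v) v := by
  intro k
  induction k with
  | zero =>
    intro _ v hv _
    rw [hlam1 v (hν1 ▸ hv)]
    simpa only [zero_add, Finset.sum_range_one, Function.iterate_zero_apply] using hF v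
  | succ k ih =>
    intro hk v hv hμv
    have hv₀ : v ∈ Icc 0 ν₀ :=
      ⟨(hrec (k + 1) hk).1.1.trans hv.1, hv.2.trans (hrec k (by omega)).1.2⟩
    have hwv := ih (by omega) (w v) (mapsTo_threshold_Icc hrec hwmono hk hv)
      (hμv.trans (hwgt v hv₀).le)
    rw [hlam2 v ⟨hμv, hv₀.2⟩]
    exact (hF v).sum_range_succ_iterate (hwdiff v hv₀).hasDerivAt hwv

-- `ν 0 = vbar` is the paper's `ν₋₁`, and `ν (k + 1)` is its `ν_k`.
theorem dual_variable_closed_form_general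
    (vbar μ₀ ν₀ : ℝ)
    (F f lam w : ℝ → ℝ)
    (hF : ∀ v, HasDerivAt F (f v) v)
    (hwmono : StrictMonoOn w (Set.Icc 0 ν₀))
    (hwdiff : ∀ v ∈ Set.Icc 0 ν₀, DifferentiableAt ℝ w v)
    (hwgt : ∀ v ∈ Set.Icc 0 ν₀, v < w v)
    (hwν₀ : w ν₀ = vbar)
    (ν : ℕ → ℝ) (hν0 : ν 0 = vbar)
    (K : ℕ)
    (hrec : ∀ k ≤ K, ν (k + 1) ∈ Set.Icc 0 ν₀ ∧ w (ν (k + 1)) = ν k)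
    (hlam1 : ∀ v ∈ Set.Icc ν₀ vbar, lam v = f v)
    (hlam2 : ∀ v ∈ Set.Icc μ₀ ν₀, lam v = f v + deriv w v * lam (w v)) :
    ∀ k ≤ K,
      ∀ᵐ v ∂(volume.restrict (Set.Icc (ν (k + 1)) (ν k) ∩ Set.Ici μ₀)),
        lam v = deriv (fun u => ∑ j ∈ Finset.range (k + 1), F (w^[j] u)) v := by
  subst hν0
  have hν1 : ν 1 = ν₀ := threshold_one_eq hrec hwmono hwν₀
  intro k hk
  refine ae_restrict_of_forall_mem (measurableSet_Icc.inter measurableSet_Ici) fun v hv => ?_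
  exact (hasDerivAt_sum_iterate_of_mem_threshold_Icc hF hwmono.monotoneOn hwdiff hwgt hrec hν1
    hlam1 hlam2 k hk v hv.1 hv.2).deriv.symm

/-- Solution to the dual functional equation: the dual variable `λ` satisfying
`λ(v) = f(v)` on `[ν₀, v̄]` and `λ(v) = f(v) + w'(v)·λ(w(v))` on `[μ₀, ν₀]`
equals, for each `k ∈ {0,…,K}` and almost every `v ∈ [ν_k, ν_{k-1}]` with `v ≥ μ₀`,
the derivative of `Σ_{j=0}^k F(wʲ(v))`.  (Shifted indexing: `ν 0 = v̄` is `ν₋₁` and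
`ν (k+1)` is `ν_k`.) -/
theorem dual_variable_closed_form
    (vbar μ₀ ν₀ : ℝ) (hμ : 0 < μ₀) (hμν : μ₀ < ν₀) (hν₀ : ν₀ < vbar)
    (F f lam w : ℝ → ℝ)
    (hF : ∀ v, HasDerivAt F (f v) v)
    (hwmono : StrictMonoOn w (Set.Icc 0 ν₀))
    (hwdiff : ∀ v ∈ Set.Icc 0 ν₀, DifferentiableAt ℝ w v)
    (hwgt : ∀ v ∈ Set.Icc 0 ν₀, v < w v)
    (hw0 : w 0 = μ₀) (hwν₀ : w ν₀ = vbar)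
    (ν : ℕ → ℝ) (hν0 : ν 0 = vbar)
    (K : ℕ)
    (hrec : ∀ k ≤ K, ν (k + 1) ∈ Set.Icc 0 ν₀ ∧ w (ν (k + 1)) = ν k)
    (hK : ν (K + 1) ≤ μ₀ ∧ μ₀ ≤ ν K)
    (hlam1 : ∀ v ∈ Set.Icc ν₀ vbar, lam v = f v)
    (hlam2 : ∀ v ∈ Set.Icc μ₀ ν₀, lam v = f v + deriv w v * lam (w v)) :
    ∀ k ≤ K,
      ∀ᵐ v ∂(volume.restrict (Set.Icc (ν (k + 1)) (ν k) ∩ Set.Ici μ₀)),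
        lam v = deriv (fun u => ∑ j ∈ Finset.range (k + 1), F (w^[j] u)) v :=
  dual_variable_closed_form_general vbar μ₀ ν₀ F f lam w hF hwmono hwdiff hwgt hwν₀ ν hν0 K hrec
    hlam1 hlam2
end

section
/- Under the setting of the path-based dual (λ(v) = (d/dv) Σ_{j=0}^{k} F(w^j(v)) on [ν_k, ν_{k-1}], with thresholds ν_k defined by ν_k = w^{-1}(ν_{k-1}), ν_{-1} = v̄, and K the number of steps), the integral of the dual variable satisfies ∫_μ^{v̄} λ(v) dv ≤ K + 1. -/
/-!
Write `G k u = ∑_{j ≤ k} F (wʲ u)` (`pathSum F w k u`), so that `λ = G k'` on the `k`-th step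
`[ν (k+1), ν k]` (here `ν 0 = v̄` is the paper's `ν₋₁`). Since `w^{k+1} (ν (k+1)) = v̄`, the primitives
`G k - k F(v̄)` agree at the thresholds: `G (k+1) (ν (k+1)) = G k (ν (k+1)) + F(v̄)`.
Hence `∫_x^{v̄} λ = (k+1) F(v̄) - G k x` on the `k`-th step, and at `x = μ₀` this is at most
`K + 1` because `0 ≤ F ≤ 1`.
-/

open Set MeasureTheory intervalIntegral

def pathSum (F w : ℝ → ℝ) (k : ℕ) (u : ℝ) : ℝ :=
  ∑ j ∈ Finset.range (k + 1), F (w^[j] u)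

section PathSum

variable {F w : ℝ → ℝ} {k : ℕ} {u : ℝ}

@[simp]
theorem pathSum_zero (F w : ℝ → ℝ) (u : ℝ) : pathSum F w 0 u = F u := by
  simp [pathSum]

theorem pathSum_succ (F w : ℝ → ℝ) (k : ℕ) (u : ℝ) :
    pathSum F w (k + 1) u = pathSum F w k u + F (w^[k + 1] u) :=
  Finset.sum_range_succ _ _

theorem pathSum_nonneg (hF : ∀ v, 0 ≤ F v) : 0 ≤ pathSum F w k u :=
  Finset.sum_nonneg fun _ _ => hF _

theorem differentiableAt_pathSum (hF : Differentiable ℝ F)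
    (hw : ∀ j ≤ k, DifferentiableAt ℝ w^[j] u) : DifferentiableAt ℝ (pathSum F w k) u :=
  DifferentiableAt.fun_sum fun j hj =>
    (hF _).comp u (hw j (Nat.lt_succ_iff.mp (Finset.mem_range.mp hj)))

end PathSum

section BackwardOrbit

variable {w : ℝ → ℝ} {s : Set ℝ} {ν : ℕ → ℝ} {K : ℕ}

theorem iterate_apply_eq_zeroth (hstep : ∀ k ≤ K, w (ν (k + 1)) = ν k) :
    ∀ n ≤ K + 1, w^[n] (ν n) = ν 0
  | 0, _ => rfl
  | n + 1, hn => by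
    rw [Function.iterate_succ_apply, hstep n (by omega), iterate_apply_eq_zeroth hstep n (by omega)]

theorem le_zeroth_of_succ_le (hdec : ∀ k ≤ K, ν (k + 1) ≤ ν k) : ∀ n ≤ K + 1, ν n ≤ ν 0
  | 0, _ => le_rfl
  | n + 1, hn => (hdec n (by omega)).trans (le_zeroth_of_succ_le hdec n (by omega))

variable [s.OrdConnected] (hmem : ∀ k ≤ K, ν (k + 1) ∈ s)
include hmem

theorem Icc_succ_succ_subset {m : ℕ} (hm : m + 1 ≤ K) : Icc (ν (m + 2)) (ν (m + 1)) ⊆ s :=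
  Set.OrdConnected.out ‹_› (hmem (m + 1) hm) (hmem m (by omega))

variable (hw : MonotoneOn w s) (hstep : ∀ k ≤ K, w (ν (k + 1)) = ν k)
include hw hstep

theorem apply_mem_Icc_of_mem_Icc {m : ℕ} (hm : m + 1 ≤ K) {v : ℝ}
    (hv : v ∈ Icc (ν (m + 2)) (ν (m + 1))) : w v ∈ Icc (ν (m + 1)) (ν m) := by
  have hvs := Icc_succ_succ_subset hmem hm hv
  refine ⟨?_, ?_⟩
  · rw [← hstep (m + 1) hm]
    exact hw (hmem (m + 1) hm) hvs hv.1
  · rw [← hstep m (by omega)]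
    exact hw hvs (hmem m (by omega)) hv.2

theorem differentiableAt_iterate_of_mem_Icc (hwd : ∀ v ∈ s, DifferentiableAt ℝ w v) :
    ∀ j m, j + m ≤ K → ∀ v ∈ Icc (ν (j + m + 1)) (ν (j + m)), DifferentiableAt ℝ w^[j] v
  | 0, _, _, _, _ => differentiableAt_id
  | j + 1, m, hjm, v, hv => by
    have hv' : v ∈ Icc (ν (j + m + 2)) (ν (j + m + 1)) := by
      simpa only [Nat.add_right_comm j 1 m] using hv
    rw [Function.iterate_succ]
    exact (differentiableAt_iterate_of_mem_Icc hwd j m (by omega) _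
      (apply_mem_Icc_of_mem_Icc hmem hw hstep (by omega) hv')).comp v
      (hwd v (Icc_succ_succ_subset hmem (by omega) hv'))

end BackwardOrbit

theorem integral_eq_sub_pathSum {F lam w : ℝ → ℝ} {ν : ℕ → ℝ} {K : ℕ} {a : ℝ}
    (hstep : ∀ k ≤ K, w (ν (k + 1)) = ν k) (hdec : ∀ k ≤ K, ν (k + 1) ≤ ν k)
    (hderiv : ∀ k ≤ K, ∀ v ∈ Icc (ν (k + 1)) (ν k), HasDerivAt (pathSum F w k) (lam v) v)
    (hint : IntervalIntegrable lam volume a (ν 0)) :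
    ∀ k ≤ K, ∀ x ∈ Icc (ν (k + 1)) (ν k), a ≤ x →
      ∫ v in x..ν 0, lam v = (k + 1) * F (ν 0) - pathSum F w k x := by
  have hsub {x y : ℝ} (hx : a ≤ x) (hxy : x ≤ y) (hy : y ≤ ν 0) :
      IntervalIntegrable lam volume x y :=
    hint.mono_set (uIcc_subset_uIcc (mem_uIcc_of_le hx (hxy.trans hy))
      (mem_uIcc_of_le (hx.trans hxy) hy))
  have hftc {k : ℕ} (hk : k ≤ K) {x y : ℝ} (hx : ν (k + 1) ≤ x) (hxy : x ≤ y) (hy : y ≤ ν k)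
      (hax : a ≤ x) : ∫ v in x..y, lam v = pathSum F w k y - pathSum F w k x := by
    refine integral_eq_sub_of_hasDerivAt (fun v hv => ?_)
      (hsub hax hxy (hy.trans (le_zeroth_of_succ_le hdec k (by omega))))
    rw [uIcc_of_le hxy] at hv
    exact hderiv k hk v ⟨hx.trans hv.1, hv.2.trans hy⟩
  intro k
  induction k with
  | zero =>
    intro hK x hx hax
    rw [hftc hK hx.1 hx.2 le_rfl hax]
    simp
  | succ k ih =>
    intro hk x hx hax
    have hν_le : ν (k + 1) ≤ ν 0 := le_zeroth_of_succ_le hdec (k + 1) (by omega)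
    rw [← integral_add_adjacent_intervals (hsub hax hx.2 hν_le)
        (hsub (hax.trans hx.2) hν_le le_rfl),
      hftc hk hx.1 hx.2 le_rfl hax,
      ih (by omega) (ν (k + 1)) ⟨le_rfl, hdec k (by omega)⟩ (hax.trans hx.2),
      pathSum_succ, iterate_apply_eq_zeroth hstep (k + 1) (by omega)]
    push_cast
    ring

theorem dual_variable_integral_bound_general
    (vbar μ₀ ν₀ : ℝ)
    (F f lam w : ℝ → ℝ)
    (hF : ∀ v, HasDerivAt F (f v) v)
    (hF0 : ∀ v, 0 ≤ F v) (hF1 : ∀ v, F v ≤ 1)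
    (hwmono : StrictMonoOn w (Set.Icc 0 ν₀))
    (hwdiff : ∀ v ∈ Set.Icc 0 ν₀, DifferentiableAt ℝ w v)
    (hwgt : ∀ v ∈ Set.Icc 0 ν₀, v < w v)
    (ν : ℕ → ℝ) (hν0 : ν 0 = vbar)
    (K : ℕ)
    (hrec : ∀ k ≤ K, ν (k + 1) ∈ Set.Icc 0 ν₀ ∧ w (ν (k + 1)) = ν k)
    (hK : ν (K + 1) ≤ μ₀ ∧ μ₀ ≤ ν K)
    (hlamform : ∀ k ≤ K, ∀ v ∈ Set.Icc (ν (k + 1)) (ν k),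
      lam v = deriv (fun u => ∑ j ∈ Finset.range (k + 1), F (w^[j] u)) v)
    (hint : IntervalIntegrable lam volume μ₀ vbar) :
    ∫ v in μ₀..vbar, lam v ≤ (K : ℝ) + 1 := by
  have hmem (k : ℕ) (hk : k ≤ K) : ν (k + 1) ∈ Icc 0 ν₀ := (hrec k hk).1
  have hstep (k : ℕ) (hk : k ≤ K) : w (ν (k + 1)) = ν k := (hrec k hk).2
  have hdec (k : ℕ) (hk : k ≤ K) : ν (k + 1) ≤ ν k := hstep k hk ▸ (hwgt _ (hmem k hk)).le
  have hderiv (k : ℕ) (hk : k ≤ K) (v : ℝ) (hv : v ∈ Icc (ν (k + 1)) (ν k)) :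
      HasDerivAt (pathSum F w k) (lam v) v := by
    rw [hlamform k hk v hv]
    refine (differentiableAt_pathSum (fun u => (hF u).differentiableAt) fun j hj => ?_).hasDerivAt
    obtain ⟨m, rfl⟩ := Nat.exists_eq_add_of_le hj
    exact differentiableAt_iterate_of_mem_Icc hmem hwmono.monotoneOn hstep hwdiff j m hk v hv
  subst hν0
  rw [integral_eq_sub_pathSum hstep hdec hderiv hint K le_rfl μ₀ hK le_rfl]
  have hFν := mul_le_of_le_one_right (by positivity : (0 : ℝ) ≤ K + 1) (hF1 (ν 0))
  linarith [pathSum_nonneg (w := w) (k := K) (u := μ₀) hF0]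

/-- Bound on the integral of the dual variable: if `λ` equals the derivative of
`Σ_{j=0}^k F(wʲ(·))` on each step `[ν_k, ν_{k-1}]`, then `∫_{μ₀}^{v̄} λ ≤ K + 1`,
where `K` is the number of steps.  (Shifted indexing: `ν 0 = v̄` is `ν₋₁` and
`ν (k+1)` is `ν_k`.) -/
theorem dual_variable_integral_bound
    (vbar μ₀ ν₀ : ℝ) (hμ : 0 < μ₀) (hμν : μ₀ < ν₀) (hν₀ : ν₀ < vbar)
    (F f lam w : ℝ → ℝ)
    (hF : ∀ v, HasDerivAt F (f v) v)
    (hFmono : Monotone F)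
    (hF0 : ∀ v, 0 ≤ F v) (hF1 : ∀ v, F v ≤ 1)
    (hwmono : StrictMonoOn w (Set.Icc 0 ν₀))
    (hwdiff : ∀ v ∈ Set.Icc 0 ν₀, DifferentiableAt ℝ w v)
    (hwgt : ∀ v ∈ Set.Icc 0 ν₀, v < w v)
    (hw0 : w 0 = μ₀) (hwν₀ : w ν₀ = vbar)
    (ν : ℕ → ℝ) (hν0 : ν 0 = vbar)
    (K : ℕ)
    (hrec : ∀ k ≤ K, ν (k + 1) ∈ Set.Icc 0 ν₀ ∧ w (ν (k + 1)) = ν k)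
    (hK : ν (K + 1) ≤ μ₀ ∧ μ₀ ≤ ν K)
    (hlamform : ∀ k ≤ K, ∀ v ∈ Set.Icc (ν (k + 1)) (ν k),
      lam v = deriv (fun u => ∑ j ∈ Finset.range (k + 1), F (w^[j] u)) v)
    (hlamtop : ∀ v ∈ Set.Icc ν₀ vbar, lam v = f v)
    (hint : IntervalIntegrable lam volume μ₀ vbar) :
    ∫ v in μ₀..vbar, lam v ≤ (K : ℝ) + 1 :=
  dual_variable_integral_bound_general vbar μ₀ ν₀ F f lam w hF hF0 hF1 hwmono hwdiff hwgt ν hν0 K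
    hrec hK hlamform hint
end

section
/- Let Δ(v) = v·f(v) - w'(v)·(w(v) - v)·λ(w(v))·1{v ∈ [0, ν₀]} be the dual virtual value, where λ solves the dual functional equation and w is strictly increasing with w(v) ≥ v. If Δ(v) ≥ 0 for all v in [x, ν₀] for some x ∈ [0, ν₀), then ∫_x^{v̄} Δ(v) dv ≤ x·(1 - F(x)) + 2·(w(x) - x). -/
/-!
On a rung `[ν (k+1), ν k]` the dual virtual value is the derivative of an explicit potential
built from `H_k = ∑_{j ≤ k} F ∘ w^[j]`, using `λ = H_k'` and `H_{k+1} = F + H_k ∘ w`. The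
potentials glue across rungs because `H_{k+1} (ν (k+1)) = H_k (ν (k+1)) + F v̄`, so
`∫_x^v̄ Δ = ν (p+1) F v̄ - Φ_p x` for the `p` with `x ≤ ν (p+1) ≤ w x`. Every `H_k` is nondecreasing
on its rung, so the two integrals in `Φ_p x` are bounded below by their left endpoint values; this
leaves `∫_x^v̄ Δ ≤ w x (F v̄ - F x)`, which is at most `x (1 - F x) + 2 (w x - x)`.
-/

open Set MeasureTheory intervalIntegral

theorem ContinuousOn.hasDerivAt_primitive {g : ℝ → ℝ} {a b c u : ℝ}
    (hg : ContinuousOn g (Icc a b)) (hc : c ∈ Icc a b) (hu : u ∈ Ioo a b) :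
    HasDerivAt (fun x => ∫ t in c..x, g t) (g u) u :=
  integral_hasDerivAt_right
    (hg.mono (uIcc_subset_Icc hc (Ioo_subset_Icc_self hu))).intervalIntegrable
    ((hg.mono Ioo_subset_Icc_self).stronglyMeasurableAtFilter isOpen_Ioo u hu)
    (hg.continuousAt (Icc_mem_nhds hu.1 hu.2))

theorem ContinuousOn.continuousOn_primitive {g : ℝ → ℝ} {a b c : ℝ}
    (hg : ContinuousOn g (Icc a b)) (hc : c ∈ Icc a b) :
    ContinuousOn (fun x => ∫ t in c..x, g t) (Icc a b) := by
  have hab : a ≤ b := hc.1.trans hc.2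
  rw [← uIcc_of_le hab] at hc ⊢
  exact continuousOn_primitive_interval' (hg.intervalIntegrable_of_Icc hab) hc

theorem MonotoneOn.sub_mul_le_integral {g : ℝ → ℝ} {a b : ℝ} (hg : MonotoneOn g (Icc a b))
    (hab : a ≤ b) : (b - a) * g a ≤ ∫ t in a..b, g t := by
  have hint : IntervalIntegrable g volume a b := by
    apply MonotoneOn.intervalIntegrable
    rwa [uIcc_of_le hab]
  calc (b - a) * g a = ∫ _ in a..b, g a := by simp
    _ ≤ ∫ t in a..b, g t :=
      integral_mono_on hab intervalIntegrable_const hint fun t ht =>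
        hg (left_mem_Icc.2 hab) ht ht.1

/-- Found by integrating `v f v - w' v (w v - v) G' (w v)` by parts twice, where `f = F'`. -/
noncomputable def potential (F w G : ℝ → ℝ) (l c v : ℝ) : ℝ :=
  v * F v - (w v - v) * G (w v) + (∫ t in l..w v, G t) - ∫ t in c..v, (F t + G (w t))

section Potential

variable {F f w G : ℝ → ℝ} {a b l r : ℝ}

theorem continuousOn_potential (hab : a ≤ b) (hF : Continuous F)
    (hw : ContinuousOn w (Icc a b)) (hmaps : MapsTo w (Icc a b) (Icc l r))
    (hG : ContinuousOn G (Icc l r)) :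
    ContinuousOn (potential F w G l b) (Icc a b) := by
  have hl : l ∈ Icc l r := left_mem_Icc.2 ((hmaps (left_mem_Icc.2 hab)).1.trans
    (hmaps (left_mem_Icc.2 hab)).2)
  have hGw : ContinuousOn (fun v => G (w v)) (Icc a b) := hG.comp hw hmaps
  refine ((continuousOn_id.mul hF.continuousOn).sub ((hw.sub continuousOn_id).mul hGw)).add
    ((hG.continuousOn_primitive hl).comp hw hmaps) |>.sub ?_
  exact (hF.continuousOn.add hGw).continuousOn_primitive (right_mem_Icc.2 hab)

theorem hasDerivAt_potential {v : ℝ} (hab : a ≤ b) (hF : ∀ x, HasDerivAt F (f x) x)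
    (hw : ContinuousOn w (Icc a b)) (hwv : DifferentiableAt ℝ w v)
    (hmaps : MapsTo w (Icc a b) (Icc l r)) (hG : ContinuousOn G (Icc l r))
    (hGv : DifferentiableAt ℝ G (w v)) (hv : v ∈ Ioo a b) (hwv' : w v ∈ Ioo l r) :
    HasDerivAt (potential F w G l b)
      (v * f v - deriv w v * (w v - v) * deriv G (w v)) v := by
  have hFc : Continuous F := continuous_iff_continuousAt.2 fun x => (hF x).continuousAt
  have hl : l ∈ Icc l r := ⟨le_rfl, hwv'.1.le.trans hwv'.2.le⟩
  have hH : ContinuousOn (fun t => F t + G (w t)) (Icc a b) :=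
    hFc.continuousOn.add (hG.comp hw hmaps)
  have hw' := hwv.hasDerivAt
  have := (((hasDerivAt_id v).mul (hF v)).sub ((hw'.sub (hasDerivAt_id v)).mul
    (hGv.hasDerivAt.comp v hw'))).add (((hG.hasDerivAt_primitive hl hwv').comp v hw')) |>.sub
    (hH.hasDerivAt_primitive (right_mem_Icc.2 hab) hv)
  refine this.congr_deriv ?_
  simp only [id, Function.comp_apply, Pi.sub_apply]
  ring

theorem integral_eq_potential_sub_potential {Δ : ℝ → ℝ} (hab : a ≤ b)
    (hF : ∀ x, HasDerivAt F (f x) x) (hw : ∀ v ∈ Icc a b, DifferentiableAt ℝ w v)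
    (hmaps : MapsTo w (Icc a b) (Icc l r)) (hmaps' : MapsTo w (Ioo a b) (Ioo l r))
    (hG : ∀ u ∈ Icc l r, DifferentiableAt ℝ G u)
    (hΔ : ∀ v ∈ Ioo a b, Δ v = v * f v - deriv w v * (w v - v) * deriv G (w v))
    (hint : IntervalIntegrable Δ volume a b) :
    ∫ v in a..b, Δ v = potential F w G l b b - potential F w G l b a := by
  have hFc : Continuous F := continuous_iff_continuousAt.2 fun x => (hF x).continuousAt
  have hwc : ContinuousOn w (Icc a b) := fun v hv => (hw v hv).continuousAt.continuousWithinAt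
  have hGc : ContinuousOn G (Icc l r) := fun u hu => (hG u hu).continuousAt.continuousWithinAt
  refine integral_eq_sub_of_hasDeriv_right_of_le hab
    (continuousOn_potential hab hFc hwc hmaps hGc) (fun v hv => ?_) hint
  rw [hΔ v hv]
  exact (hasDerivAt_potential hab hF hwc (hw v (Ioo_subset_Icc_self hv)) hmaps hGc
    (hG _ (Ioo_subset_Icc_self (hmaps' hv))) hv (hmaps' hv)).hasDerivWithinAt

/-- The degenerate case `w = id`, `G = 0` of `integral_eq_potential_sub_potential`. -/
theorem integral_eq_of_eq_mul_deriv {Δ : ℝ → ℝ} (hab : a ≤ b) (hF : ∀ x, HasDerivAt F (f x) x)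
    (hΔ : ∀ v ∈ Ioo a b, Δ v = v * f v) (hint : IntervalIntegrable Δ volume a b) :
    ∫ v in a..b, Δ v = b * F b - a * F a - ∫ t in a..b, F t := by
  have := integral_eq_potential_sub_potential (w := id) (G := 0) (l := a) hab hF
    (fun v _ => differentiableAt_id) (mapsTo_id _) (mapsTo_id _)
    (fun u _ => differentiableAt_const 0) (by simpa using hΔ) hint
  simp only [potential, id, Pi.zero_apply, intervalIntegral.integral_zero, add_zero, mul_zero,
    sub_zero, integral_same] at this
  rw [this, integral_symm]
  ring

theorem sub_potential_le {F w G : ℝ → ℝ} {y c M : ℝ} (hyc : y ≤ c) (hcw : c ≤ w y)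
    (hG : MonotoneOn G (Icc c (w y))) (hH : MonotoneOn (fun t => F t + G (w t)) (Icc y c))
    (hM : F c + G (w c) ≤ G c + M) :
    c * M - potential F w G c c y ≤ w y * (M - F y) := by
  have hGint := hG.sub_mul_le_integral hcw
  have hHint := hH.sub_mul_le_integral hyc
  have hHyc : F y + G (w y) ≤ F c + G (w c) := hH ⟨le_rfl, hyc⟩ ⟨hyc, le_rfl⟩ hyc
  have key := mul_le_mul_of_nonneg_left (by linarith : G (w y) - G c ≤ M - F y)
    (sub_nonneg.2 hcw)
  rw [potential, integral_symm y c]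
  nlinarith

end Potential

/-- The paper's `H_k`. -/
noncomputable def iterSum (F w : ℝ → ℝ) (k : ℕ) (v : ℝ) : ℝ :=
  ∑ j ∈ Finset.range (k + 1), F (w^[j] v)

section IterSum

variable {F w : ℝ → ℝ} {k : ℕ}

theorem iterSum_zero : iterSum F w 0 = F := by
  funext v
  simp [iterSum]

theorem iterSum_succ : iterSum F w (k + 1) = fun v => F v + iterSum F w k (w v) := by
  funext v
  simp only [iterSum, Finset.sum_range_succ' _ (k + 1), Function.iterate_succ_apply,
    Function.iterate_zero_apply]
  ring

theorem iterSum_succ_apply' (v : ℝ) :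
    iterSum F w (k + 1) v = iterSum F w k v + F (w^[k + 1] v) :=
  Finset.sum_range_succ _ _

end IterSum

/-- `ν (k+1)` is the paper's `ν_k`, and `ν 0 = v̄` plays the role of `ν_{-1}`; the rungs are the
intervals `[ν (k+1), ν k]`. -/
def IsBackwardOrbit (w : ℝ → ℝ) (ν₀ : ℝ) (ν : ℕ → ℝ) (K : ℕ) : Prop :=
  ∀ k ≤ K, ν (k + 1) ∈ Icc 0 ν₀ ∧ w (ν (k + 1)) = ν k

namespace IsBackwardOrbit

variable {F f lam w Δ : ℝ → ℝ} {ν₀ vbar y : ℝ} {ν : ℕ → ℝ} {K k : ℕ}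

theorem succ_le (h : IsBackwardOrbit w ν₀ ν K) (hwge : ∀ v ∈ Icc 0 ν₀, v ≤ w v) (hk : k ≤ K) :
    ν (k + 1) ≤ ν k :=
  (h k hk).2 ▸ hwge _ (h k hk).1

theorem Icc_subset (h : IsBackwardOrbit w ν₀ ν K) (hk : k ≤ K) (hy : 0 ≤ y) :
    Icc y (ν (k + 1)) ⊆ Icc 0 ν₀ :=
  Icc_subset_Icc hy (h k hk).1.2

theorem mapsTo_Icc (h : IsBackwardOrbit w ν₀ ν K) (hw : MonotoneOn w (Icc 0 ν₀)) (hk : k ≤ K)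
    (hy : 0 ≤ y) (hyw : ν (k + 1) ≤ w y) :
    MapsTo w (Icc y (ν (k + 1))) (Icc (ν (k + 1)) (ν k)) := by
  rw [← (h k hk).2]
  exact (hw.mono (h.Icc_subset hk hy)).mapsTo_Icc.mono_right (Icc_subset_Icc_left hyw)

theorem mapsTo_Ioo (h : IsBackwardOrbit w ν₀ ν K) (hw : StrictMonoOn w (Icc 0 ν₀)) (hk : k ≤ K)
    (hy : 0 ≤ y) (hyw : ν (k + 1) ≤ w y) :
    MapsTo w (Ioo y (ν (k + 1))) (Ioo (ν (k + 1)) (ν k)) := by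
  rw [← (h k hk).2]
  exact (hw.mono (h.Icc_subset hk hy)).mapsTo_Ioo.mono_right (Ioo_subset_Ioo_left hyw)

theorem iterate_self (h : IsBackwardOrbit w ν₀ ν K) : ∀ k ≤ K + 1, w^[k] (ν k) = ν 0
  | 0, _ => rfl
  | k + 1, hk => by
    rw [Function.iterate_succ_apply, (h k (by omega)).2, h.iterate_self k (by omega)]

theorem iterSum_succ_self (h : IsBackwardOrbit w ν₀ ν K) (hk : k ≤ K) :
    F (ν (k + 1)) + iterSum F w k (ν k) = iterSum F w k (ν (k + 1)) + F (ν 0) := by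
  rw [← (h k hk).2, ← congrFun iterSum_succ, iterSum_succ_apply', h.iterate_self _ (by omega)]

theorem iterSum_monotoneOn (h : IsBackwardOrbit w ν₀ ν K) (hF : Monotone F)
    (hw : MonotoneOn w (Icc 0 ν₀)) : ∀ k ≤ K, MonotoneOn (iterSum F w k) (Icc (ν (k + 1)) (ν k))
  | 0, _ => iterSum_zero (w := w) ▸ hF.monotoneOn _
  | k + 1, hk => by
    have hν := h (k + 1) hk
    rw [iterSum_succ]
    exact (hF.monotoneOn _).add ((h.iterSum_monotoneOn hF hw k (by omega)).comp
      (hw.mono (h.Icc_subset (by omega) hν.1.1)) (h.mapsTo_Icc hw (by omega) hν.1.1 hν.2.ge))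

theorem iterSum_differentiableAt (h : IsBackwardOrbit w ν₀ ν K) (hF : Differentiable ℝ F)
    (hw : StrictMonoOn w (Icc 0 ν₀)) (hwd : ∀ v ∈ Icc 0 ν₀, DifferentiableAt ℝ w v) :
    ∀ k ≤ K, ∀ u ∈ Icc (ν (k + 1)) (ν k), DifferentiableAt ℝ (iterSum F w k) u
  | 0, _, u, _ => iterSum_zero (w := w) ▸ hF u
  | k + 1, hk, u, hu => by
    have hν := h (k + 1) hk
    rw [iterSum_succ]
    exact (hF u).add ((h.iterSum_differentiableAt hF hw hwd k (by omega) _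
      (h.mapsTo_Icc hw.monotoneOn (by omega) hν.1.1 hν.2.ge hu)).comp u
      (hwd u (h.Icc_subset (by omega) hν.1.1 hu)))

theorem integral_rung_eq (h : IsBackwardOrbit w ν₀ ν K) (hF : ∀ x, HasDerivAt F (f x) x)
    (hw : StrictMonoOn w (Icc 0 ν₀)) (hwd : ∀ v ∈ Icc 0 ν₀, DifferentiableAt ℝ w v)
    (hlam : ∀ k ≤ K, ∀ v ∈ Icc (ν (k + 1)) (ν k), lam v = deriv (iterSum F w k) v)
    (hΔ : ∀ v ∈ Icc 0 ν₀, Δ v = v * f v - deriv w v * (w v - v) * lam (w v))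
    (hk : k ≤ K) (hy : y ∈ Icc 0 (ν (k + 1))) (hyw : ν (k + 1) ≤ w y)
    (hint : IntervalIntegrable Δ volume y (ν (k + 1))) :
    ∫ v in y..ν (k + 1), Δ v =
      potential F w (iterSum F w k) (ν (k + 1)) (ν (k + 1)) (ν (k + 1)) -
        potential F w (iterSum F w k) (ν (k + 1)) (ν (k + 1)) y := by
  have hsub := h.Icc_subset hk hy.1
  have hmaps := h.mapsTo_Icc hw.monotoneOn hk hy.1 hyw
  refine integral_eq_potential_sub_potential hy.2 hF (fun v hv => hwd v (hsub hv)) hmaps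
    (h.mapsTo_Ioo hw hk hy.1 hyw)
    (h.iterSum_differentiableAt (fun x => (hF x).differentiableAt) hw hwd k hk)
    (fun v hv => ?_) hint
  rw [hΔ v (hsub (Ioo_subset_Icc_self hv)), hlam k hk _ (hmaps (Ioo_subset_Icc_self hv))]

theorem integral_eq_sub_potential (h : IsBackwardOrbit w ν₀ ν K)
    (hF : ∀ x, HasDerivAt F (f x) x) (hw : StrictMonoOn w (Icc 0 ν₀))
    (hwd : ∀ v ∈ Icc 0 ν₀, DifferentiableAt ℝ w v) (hwge : ∀ v ∈ Icc 0 ν₀, v ≤ w v)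
    (hlam : ∀ k ≤ K, ∀ v ∈ Icc (ν (k + 1)) (ν k), lam v = deriv (iterSum F w k) v)
    (hΔ : ∀ v ∈ Icc 0 ν₀, Δ v = v * f v - deriv w v * (w v - v) * lam (w v))
    (hΔtop : ∀ v ∈ Ioo ν₀ vbar, Δ v = v * f v)
    (hν0 : ν 0 = vbar) (hν1 : ν 1 = ν₀) (hν₀ : ν₀ ≤ vbar) :
    ∀ p ≤ K, ∀ y ∈ Icc 0 (ν (p + 1)), ν (p + 1) ≤ w y → IntervalIntegrable Δ volume y vbar →
      ∫ v in y..vbar, Δ v =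
        ν (p + 1) * F vbar - potential F w (iterSum F w p) (ν (p + 1)) (ν (p + 1)) y := by
  intro p
  induction p with
  | zero =>
    intro hp y hy hyw hint
    have hc : ν 1 ∈ uIcc y vbar := mem_uIcc_of_le hy.2 (hν1 ▸ hν₀)
    have hint₁ := hint.mono_set (uIcc_subset_uIcc left_mem_uIcc hc)
    have hint₂ := hint.mono_set (uIcc_subset_uIcc hc right_mem_uIcc)
    rw [← integral_add_adjacent_intervals hint₁ hint₂,
      h.integral_rung_eq hF hw hwd hlam hΔ hp hy hyw hint₁]
    have hwν : w (ν (0 + 1)) = vbar := (h 0 hp).2.trans hν0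
    simp only [potential, hwν, iterSum_zero, integral_same]
    simp only [zero_add, hν1] at hint₂ ⊢
    rw [integral_eq_of_eq_mul_deriv hν₀ hF hΔtop hint₂]
    ring
  | succ p ih =>
    intro hp y hy hyw hint
    have hν := h (p + 1) hp
    have hc : ν (p + 2) ∈ uIcc y vbar := mem_uIcc_of_le hy.2 (hν.1.2.trans hν₀)
    have hint₁ := hint.mono_set (uIcc_subset_uIcc left_mem_uIcc hc)
    have hint₂ := hint.mono_set (uIcc_subset_uIcc hc right_mem_uIcc)
    rw [← integral_add_adjacent_intervals hint₁ hint₂,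
      h.integral_rung_eq hF hw hwd hlam hΔ hp hy hyw hint₁,
      ih (by omega) _ ⟨hν.1.1, h.succ_le hwge hp⟩ hν.2.ge hint₂]
    have hstep := h.iterSum_succ_self (F := F) (k := p) (by omega)
    simp only [potential, hν.2, (h p (by omega)).2, iterSum_succ, integral_same,
      integral_symm (ν (p + 1)) (ν (p + 2))]
    rw [hν0] at hstep
    linear_combination (ν (p + 2) - ν (p + 1)) * hstep

theorem sub_potential_le_of_rung (h : IsBackwardOrbit w ν₀ ν K) (hF : Monotone F)
    (hw : MonotoneOn w (Icc 0 ν₀)) (hk : k ≤ K) (hy : y ∈ Icc 0 (ν (k + 1)))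
    (hyw : ν (k + 1) ≤ w y) :
    ν (k + 1) * F (ν 0) - potential F w (iterSum F w k) (ν (k + 1)) (ν (k + 1)) y ≤
      w y * (F (ν 0) - F y) := by
  have hmaps := h.mapsTo_Icc hw hk hy.1 hyw
  have hG := h.iterSum_monotoneOn hF hw k hk
  refine sub_potential_le hy.2 hyw (hG.mono (Icc_subset_Icc_right (hmaps ⟨le_rfl, hy.2⟩).2))
    ((hF.monotoneOn _).add (hG.comp (hw.mono (h.Icc_subset hk hy.1)) hmaps)) ?_
  rw [(h k hk).2, h.iterSum_succ_self hk]

theorem exists_rung (h : IsBackwardOrbit w ν₀ ν K) (hw : MonotoneOn w (Icc 0 ν₀)) {x : ℝ}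
    (hx : x ∈ Icc 0 ν₀) (hx₁ : x ≤ ν 1) :
    ∀ n ≤ K, ν (n + 1) ≤ w x → ∃ p ≤ K, x ≤ ν (p + 1) ∧ ν (p + 1) ≤ w x
  | 0, _, hxn => ⟨0, K.zero_le, hx₁, hxn⟩
  | n + 1, hn, hxn => by
    by_cases hx' : x ≤ ν (n + 2)
    · exact ⟨n + 1, hn, hx', hxn⟩
    · refine h.exists_rung hw hx hx₁ n (by omega) ?_
      rw [← (h (n + 1) hn).2]
      exact hw (h (n + 1) hn).1 hx (not_le.1 hx').le

end IsBackwardOrbit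

theorem dual_virtual_value_bound_general
    (vbar μ₀ ν₀ : ℝ) (hν₀ : ν₀ < vbar)
    (F f lam w Δ : ℝ → ℝ)
    (hF : ∀ v, HasDerivAt F (f v) v)
    (hFmono : Monotone F)
    (hF0 : ∀ v, 0 ≤ F v) (hF1 : ∀ v, F v ≤ 1)
    (hwmono : StrictMonoOn w (Set.Icc 0 ν₀))
    (hwdiff : ∀ v ∈ Set.Icc 0 ν₀, DifferentiableAt ℝ w v)
    (hwge : ∀ v ∈ Set.Icc 0 ν₀, v ≤ w v)
    (hw0 : w 0 = μ₀) (hwν₀ : w ν₀ = vbar)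
    (ν : ℕ → ℝ) (hν0 : ν 0 = vbar)
    (K : ℕ)
    (hrec : ∀ k ≤ K, ν (k + 1) ∈ Set.Icc 0 ν₀ ∧ w (ν (k + 1)) = ν k)
    (hK : ν (K + 1) ≤ μ₀ ∧ μ₀ ≤ ν K)
    (hlamform : ∀ k ≤ K, ∀ v ∈ Set.Icc (ν (k + 1)) (ν k),
      lam v = deriv (fun u => ∑ j ∈ Finset.range (k + 1), F (w^[j] u)) v)
    (hΔ : ∀ v, Δ v = v * f v -
      (if v ∈ Set.Icc (0:ℝ) ν₀ then deriv w v * (w v - v) * lam (w v) else 0))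
    (x : ℝ) (hx : x ∈ Set.Ico (0:ℝ) ν₀)
    (hΔint : IntervalIntegrable Δ volume x vbar) :
    ∫ v in x..vbar, Δ v ≤ x * (1 - F x) + 2 * (w x - x) := by
  have horbit : IsBackwardOrbit w ν₀ ν K := hrec
  have hxm : x ∈ Icc 0 ν₀ := Ico_subset_Icc_self hx
  have hν₀m : ν₀ ∈ Icc 0 ν₀ := ⟨hxm.1.trans hxm.2, le_rfl⟩
  have hν1 : ν 1 = ν₀ :=
    hwmono.injOn (hrec 0 K.zero_le).1 hν₀m (by rw [(hrec 0 K.zero_le).2, hν0, hwν₀])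
  have hbot : ν (K + 1) ≤ w x := hK.1.trans (hw0 ▸ hwmono.monotoneOn ⟨le_rfl, hν₀m.1⟩ hxm hx.1)
  obtain ⟨p, hp, hxp, hpx⟩ :=
    horbit.exists_rung hwmono.monotoneOn hxm (hν1 ▸ hxm.2) K le_rfl hbot
  calc ∫ v in x..vbar, Δ v
      = ν (p + 1) * F vbar - potential F w (iterSum F w p) (ν (p + 1)) (ν (p + 1)) x :=
        horbit.integral_eq_sub_potential hF hwmono hwdiff hwge hlamform
          (fun v hv => by rw [hΔ, if_pos hv])
          (fun v hv => by rw [hΔ, if_neg fun hv' => hv.1.not_ge hv'.2, sub_zero])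
          hν0 hν1 hν₀.le p hp x ⟨hx.1, hxp⟩ hpx hΔint
    _ ≤ w x * (F vbar - F x) :=
        hν0 ▸ horbit.sub_potential_le_of_rung hFmono hwmono.monotoneOn hp ⟨hx.1, hxp⟩ hpx
    _ ≤ x * (1 - F x) + 2 * (w x - x) := by
        have hxw := hwge x hxm
        nlinarith [mul_le_mul_of_nonneg_left (hF1 vbar) (hx.1.trans hxw),
          mul_nonneg (sub_nonneg.2 hxw) (hF0 x)]

/-- Dual virtual value bound: if the dual virtual value
`Δ(v) = v·f(v) − w'(v)·(w(v) − v)·λ(w(v))·1{v ∈ [0, ν₀]}` is nonnegative on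
`[x, ν₀]`, then `∫_x^{v̄} Δ ≤ x·(1 − F(x)) + 2·(w(x) − x)`.
(Shifted indexing: `ν 0 = v̄` is `ν₋₁` and `ν (k+1)` is `ν_k`.) -/
theorem dual_virtual_value_bound
    (vbar μ₀ ν₀ : ℝ) (hμ : 0 < μ₀) (hμν : μ₀ < ν₀) (hν₀ : ν₀ < vbar)
    (F f lam w Δ : ℝ → ℝ)
    (hF : ∀ v, HasDerivAt F (f v) v)
    (hFmono : Monotone F)
    (hF0 : ∀ v, 0 ≤ F v) (hF1 : ∀ v, F v ≤ 1)
    (hwmono : StrictMonoOn w (Set.Icc 0 ν₀))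
    (hwdiff : ∀ v ∈ Set.Icc 0 ν₀, DifferentiableAt ℝ w v)
    (hwge : ∀ v ∈ Set.Icc 0 ν₀, v ≤ w v)
    (hw0 : w 0 = μ₀) (hwν₀ : w ν₀ = vbar)
    (ν : ℕ → ℝ) (hν0 : ν 0 = vbar)
    (K : ℕ)
    (hrec : ∀ k ≤ K, ν (k + 1) ∈ Set.Icc 0 ν₀ ∧ w (ν (k + 1)) = ν k)
    (hK : ν (K + 1) ≤ μ₀ ∧ μ₀ ≤ ν K)
    (hlamform : ∀ k ≤ K, ∀ v ∈ Set.Icc (ν (k + 1)) (ν k),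
      lam v = deriv (fun u => ∑ j ∈ Finset.range (k + 1), F (w^[j] u)) v)
    (hlamtop : ∀ v ∈ Set.Icc ν₀ vbar, lam v = f v)
    (hΔ : ∀ v, Δ v = v * f v -
      (if v ∈ Set.Icc (0:ℝ) ν₀ then deriv w v * (w v - v) * lam (w v) else 0))
    (x : ℝ) (hx : x ∈ Set.Ico (0:ℝ) ν₀)
    (hpos : ∀ v ∈ Set.Icc x ν₀, 0 ≤ Δ v)
    (hΔint : IntervalIntegrable Δ volume x vbar) :
    ∫ v in x..vbar, Δ v ≤ x * (1 - F x) + 2 * (w x - x) :=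
  dual_virtual_value_bound_general vbar μ₀ ν₀ hν₀ F f lam w Δ hF hFmono hF0 hF1 hwmono hwdiff hwge
    hw0 hwν₀ ν hν0 K hrec hK hlamform hΔ x hx hΔint
end

section
/- Consider an IR and ε-IC deterministic mechanism (x, t) with x : [0, v̄] → {0, 1} right-continuous, and let r = inf{v : x(v) = 1} with x(v) = 0 for v < r. Then the transfers satisfy t(v) ≤ 0 for v < r, t(v) ≤ v·x(v) for v ∈ [r, r+ε), and t(v) ≤ r + ε for v ∈ [r+ε, v̄]. -/
/-! A bidder of value `v` may always report the threshold `r`, winning at price `t r ≤ r`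
(IR at `r`); ε-IC then caps `t v` at `t r + ε` minus the surplus `v (1 - x v) ≥ 0` lost by not
deviating. Below `r` the bidder never wins, so IR alone forces `t v ≤ 0`. -/

theorem transfer_le_add_of_deviation_to_threshold {v r ε xv tv tr : ℝ} (hv : 0 ≤ v)
    (hxv : xv ≤ 1) (hIRr : 0 ≤ r - tr) (hIC : v - tr - ε ≤ v * xv - tv) :
    tv ≤ r + ε := by
  have hsurplus : v * xv ≤ v := mul_le_of_le_one_right hv hxv
  linarith

theorem deterministic_transfer_bounds_general
    (vbar ε : ℝ)
    (x t : ℝ → ℝ)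
    (hdet : ∀ v ∈ Set.Icc 0 vbar, x v = 0 ∨ x v = 1)
    (hIR : ∀ v ∈ Set.Icc 0 vbar, 0 ≤ v * x v - t v)
    (hIC : ∀ v ∈ Set.Icc 0 vbar, ∀ v' ∈ Set.Icc 0 vbar,
      v * x v' - t v' - ε ≤ v * x v - t v)
    (r : ℝ)
    (hrmem : r ∈ Set.Icc 0 vbar)
    (hbelow : ∀ v ∈ Set.Icc 0 vbar, v < r → x v = 0)
    (hxr : x r = 1) :
    ∀ v ∈ Set.Icc 0 vbar,
      (v < r → t v ≤ 0) ∧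
      (r ≤ v → v < r + ε → t v ≤ v * x v) ∧
      (r + ε ≤ v → t v ≤ r + ε) := by
  intro v hv
  refine ⟨fun hvr => ?_, fun _ _ => by linarith [hIR v hv], fun _ => ?_⟩
  · simpa [hbelow v hv hvr] using hIR v hv
  · have hxv : x v ≤ 1 := by rcases hdet v hv with h | h <;> simp [h]
    have hIRr := hIR r hrmem
    have hICr := hIC v hv r hrmem
    rw [hxr, mul_one] at hIRr hICr
    exact transfer_le_add_of_deviation_to_threshold hv.1 hxv hIRr hICr

/-- Transfer bounds for a deterministic IR, ε-IC mechanism: with threshold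
`r = inf{v : x(v) = 1}` (and `x(v) = 0` below `r`, `x` right-continuous),
the transfers satisfy `t ≤ 0` below `r`, `t(v) ≤ v·x(v)` on `[r, r+ε)`, and
`t(v) ≤ r + ε` on `[r+ε, v̄]`. -/
theorem deterministic_transfer_bounds
    (vbar ε : ℝ) (hvbar : 0 < vbar) (hε : 0 < ε)
    (x t : ℝ → ℝ)
    (hdet : ∀ v ∈ Set.Icc 0 vbar, x v = 0 ∨ x v = 1)
    (hrc : ∀ v ∈ Set.Ico 0 vbar, ContinuousWithinAt x (Set.Ici v) v)
    (hIR : ∀ v ∈ Set.Icc 0 vbar, 0 ≤ v * x v - t v)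
    (hIC : ∀ v ∈ Set.Icc 0 vbar, ∀ v' ∈ Set.Icc 0 vbar,
      v * x v' - t v' - ε ≤ v * x v - t v)
    (r : ℝ) (hrdef : r = sInf {v | v ∈ Set.Icc 0 vbar ∧ x v = 1})
    (hrmem : r ∈ Set.Icc 0 vbar)
    (hbelow : ∀ v ∈ Set.Icc 0 vbar, v < r → x v = 0)
    (hxr : x r = 1) :
    ∀ v ∈ Set.Icc 0 vbar,
      (v < r → t v ≤ 0) ∧
      (r ≤ v → v < r + ε → t v ≤ v * x v) ∧
      (r + ε ≤ v → t v ≤ r + ε) :=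
  deterministic_transfer_bounds_general vbar ε x t hdet hIR hIC r hrmem hbelow hxr
end

section
/- Let F be a CDF on [0, v̄] with bounded density, and suppose the optimal posted price p* ∈ argmax_v v(1-F(v)) is interior (0 < p* < v̄). Then there exist constants c > 0 and ε₀ > 0 such that for all ε ∈ (0, ε₀], the supremum of expected revenue over IR, ε-IC deterministic mechanisms is at least R(p*) + (1-F(p*))·ε − f̄·ε², where f̄ bounds the density; in particular the deterministic gain is at least c·ε. Moreover, for any IR, ε-IC deterministic mechanism the revenue is at most R(p*) + ε. Hence the optimal deterministic gain is Θ(ε). -/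
/-!
The hard/soft floor mechanism with floors `(p*, p* + ε)` is `ε`-IC and earns at least
`R(p*) + ε (1 - F(p* + ε))`, which is at least `R(p*) + (1 - F(p*)) ε - f̄ ε²` because `F` is
`f̄`-Lipschitz.
Conversely, in an `ε`-IC deterministic mechanism all winners pay within `ε` of one another and at
most their value, so payments are dominated by a floor mechanism `(r, r + ε)`, whose revenue
`(r + ε)(1 - F r)` is at most `R(p*) + ε`. Interiority of `p*` gives `F(p*) < 1`, since
`R(p*) ≥ R(v) > 0` for small `v > 0`; hence `c = (1 - F(p*)) / 2` works for small `ε`.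
-/

open Set MeasureTheory intervalIntegral Filter Topology

section Mechanism

variable (vbar ε : ℝ) (x t : ℝ → ℝ)

def IsDeterministicOn : Prop := ∀ v ∈ Icc 0 vbar, x v = 0 ∨ x v = 1

def IsIndividuallyRationalOn : Prop := ∀ v ∈ Icc 0 vbar, 0 ≤ v * x v - t v

def IsApproxIncentiveCompatibleOn : Prop :=
  ∀ v ∈ Icc 0 vbar, ∀ v' ∈ Icc 0 vbar, v * x v' - t v' - ε ≤ v * x v - t v

variable {vbar ε x t}

lemma IsIndividuallyRationalOn.payment_nonpos_of_lose (hIR : IsIndividuallyRationalOn vbar x t)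
    {v : ℝ} (hv : v ∈ Icc 0 vbar) (hx : x v = 0) : t v ≤ 0 := by
  simpa [hx] using hIR v hv

lemma IsIndividuallyRationalOn.payment_le_of_win (hIR : IsIndividuallyRationalOn vbar x t)
    {v : ℝ} (hv : v ∈ Icc 0 vbar) (hx : x v = 1) : t v ≤ v := by
  simpa [hx] using hIR v hv

lemma IsApproxIncentiveCompatibleOn.payment_le_add_of_win
    (hIC : IsApproxIncentiveCompatibleOn vbar ε x t) {v w : ℝ} (hv : v ∈ Icc 0 vbar)
    (hw : w ∈ Icc 0 vbar) (hxv : x v = 1) (hxw : x w = 1) : t v ≤ t w + ε := by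
  have := hIC v hv w hw
  rw [hxv, hxw] at this
  linarith

/-- Winners pay within `ε` of the cheapest winner's payment `τ`, and IR puts `τ` below every
winner's value; take `r = max τ 0`. -/
theorem exists_payment_le_floor (hvbar : 0 ≤ vbar) (hε : 0 ≤ ε)
    (hdet : IsDeterministicOn vbar x) (hIR : IsIndividuallyRationalOn vbar x t)
    (hIC : IsApproxIncentiveCompatibleOn vbar ε x t) :
    ∃ r ∈ Icc 0 vbar, ∀ v ∈ Icc 0 vbar, t v ≤ (Ici r).indicator (fun _ => r + ε) v := by
  have hlose : ∀ r ≥ 0, ∀ v ∈ Icc 0 vbar, x v = 0 →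
      t v ≤ (Ici r).indicator (fun _ => r + ε) v := fun r hr v hv hx =>
    (hIR.payment_nonpos_of_lose hv hx).trans
      (indicator_nonneg (fun _ _ => by positivity) v)
  by_cases hwin : ∃ w ∈ Icc 0 vbar, x w = 1
  · obtain ⟨w, hw, hxw⟩ := hwin
    set T := t '' {v | v ∈ Icc 0 vbar ∧ x v = 1}
    have hT : BddBelow T := ⟨t w - ε, by
      rintro _ ⟨v, ⟨hv, hxv⟩, rfl⟩
      linarith [hIC.payment_le_add_of_win hw hv hxw hxv]⟩
    have hτ_le : ∀ v ∈ Icc 0 vbar, x v = 1 → sInf T ≤ t v :=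
      fun v hv hxv => csInf_le hT ⟨v, ⟨hv, hxv⟩, rfl⟩
    have hle_τ : ∀ v ∈ Icc 0 vbar, x v = 1 → t v ≤ sInf T + ε := fun v hv hxv => by
      have : t v - ε ≤ sInf T := le_csInf ⟨t w, w, ⟨hw, hxw⟩, rfl⟩ <| by
        rintro _ ⟨v', ⟨hv', hxv'⟩, rfl⟩
        linarith [hIC.payment_le_add_of_win hv hv' hxv hxv']
      linarith
    refine ⟨max (sInf T) 0, ⟨le_max_right _ _, max_le ?_ hvbar⟩, fun v hv => ?_⟩
    · linarith [hτ_le w hw hxw, hIR.payment_le_of_win hw hxw, hw.2]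
    rcases hdet v hv with hxv | hxv
    · exact hlose _ (le_max_right _ _) v hv hxv
    · have hrv : max (sInf T) 0 ≤ v :=
        max_le ((hτ_le v hv hxv).trans (hIR.payment_le_of_win hv hxv)) hv.1
      rw [indicator_of_mem (show v ∈ Ici _ from hrv)]
      linarith [hle_τ v hv hxv, le_max_left (sInf T) 0]
  · push Not at hwin
    refine ⟨0, ⟨le_rfl, hvbar⟩, fun v hv => hlose 0 le_rfl v hv ?_⟩
    exact (hdet v hv).resolve_right (hwin v hv)

end Mechanism

section FloorMechanism

/-- The hard/soft floor mechanism with floors `(p, q)`. -/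
noncomputable def floorAllocation (p : ℝ) : ℝ → ℝ := (Ici p).indicator 1

noncomputable def floorPayment (p q : ℝ) : ℝ → ℝ := (Ici p).indicator fun v => min v q

variable {vbar ε p q : ℝ}

lemma isDeterministicOn_floor : IsDeterministicOn vbar (floorAllocation p) := by
  intro v _
  by_cases h : p ≤ v <;> simp [floorAllocation, indicator, h]

lemma isIndividuallyRationalOn_floor :
    IsIndividuallyRationalOn vbar (floorAllocation p) (floorPayment p q) := by
  intro v _
  by_cases h : p ≤ v <;> simp [floorAllocation, floorPayment, indicator, h]

lemma isApproxIncentiveCompatibleOn_floor (hpq : p ≤ q) (hq : q ≤ p + ε) :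
    IsApproxIncentiveCompatibleOn vbar ε (floorAllocation p) (floorPayment p q) := by
  intro v _ v' _
  by_cases h : p ≤ v <;> by_cases h' : p ≤ v' <;>
    simp only [floorAllocation, floorPayment, indicator, mem_Ici, h, h', if_true, if_false,
      Pi.one_apply] <;>
    grind

end FloorMechanism

lemma IntervalIntegrable.indicator {G : ℝ → ℝ} {s : Set ℝ} {a b : ℝ}
    (hG : IntervalIntegrable G volume a b) (hs : MeasurableSet s) :
    IntervalIntegrable (s.indicator G) volume a b :=
  ⟨hG.1.indicator hs, hG.2.indicator hs⟩

lemma intervalIntegral_indicator_Ici {G : ℝ → ℝ} {a b c : ℝ} (hc : c ∈ Icc a b) :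
    ∫ v in a..b, (Ici c).indicator G v = ∫ v in c..b, G v := by
  have hae : (Ici c).indicator G =ᵐ[volume] (Ioi c).indicator G :=
    indicator_ae_eq_of_ae_eq_set Ioi_ae_eq_Ici.symm
  rw [integral_congr_ae (hae.mono fun _ h _ => h), integral_of_le (hc.1.trans hc.2),
    integral_of_le hc.2, MeasureTheory.integral_indicator measurableSet_Ioi,
    Measure.restrict_restrict measurableSet_Ioi, inter_comm, Ioc_inter_Ioi,
    sup_eq_right.mpr hc.1]

section Revenue

variable {F f : ℝ → ℝ} {vbar ε : ℝ}

lemma integral_density_eq_sub (hf : ∀ v, HasDerivAt F (f v) v) (hfcont : Continuous f)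
    (a b : ℝ) :
    ∫ v in a..b, f v = F b - F a :=
  integral_eq_sub_of_hasDerivAt (fun v _ => hf v) (hfcont.intervalIntegrable a b)

theorem integral_payment_mul_le_add (hf : ∀ v, HasDerivAt F (f v) v) (hfcont : Continuous f)
    (hfnonneg : ∀ v, 0 ≤ f v) (hF0 : F 0 = 0) (hFvbar : F vbar = 1) {M : ℝ}
    (hM : ∀ v ∈ Icc 0 vbar, v * (1 - F v) ≤ M) (hvbar : 0 ≤ vbar) (hε : 0 ≤ ε)
    {x t : ℝ → ℝ} (hdet : IsDeterministicOn vbar x) (hIR : IsIndividuallyRationalOn vbar x t)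
    (hIC : IsApproxIncentiveCompatibleOn vbar ε x t)
    (hint : IntervalIntegrable (fun v => t v * f v) volume 0 vbar) :
    ∫ v in 0..vbar, t v * f v ≤ M + ε := by
  obtain ⟨r, hr, ht⟩ := exists_payment_le_floor hvbar hε hdet hIR hIC
  have hFr : 0 ≤ F r := hF0 ▸ monotone_of_hasDerivAt_nonneg hf hfnonneg hr.1
  have hbound : ∀ v ∈ Icc 0 vbar, t v * f v ≤ (Ici r).indicator (fun v => (r + ε) * f v) v :=
    fun v hv => by
      rw [indicator_mul_left (Ici r) (fun _ => r + ε) f]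
      exact mul_le_mul_of_nonneg_right (ht v hv) (hfnonneg v)
  calc ∫ v in 0..vbar, t v * f v
      ≤ ∫ v in 0..vbar, (Ici r).indicator (fun v => (r + ε) * f v) v :=
        integral_mono_on hvbar hint
          ((continuous_const.mul hfcont).intervalIntegrable _ _ |>.indicator measurableSet_Ici)
          hbound
    _ = r * (1 - F r) + ε * (1 - F r) := by
        rw [intervalIntegral_indicator_Ici hr, intervalIntegral.integral_const_mul,
          integral_density_eq_sub hf hfcont, hFvbar]
        ring
    _ ≤ M + ε := by nlinarith [hM r hr]

variable {p q : ℝ}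

lemma floorPayment_mul_eq_indicator :
    (fun v => floorPayment p q v * f v) = (Ici p).indicator fun v => min v q * f v :=
  funext fun _ => (indicator_mul_left _ _ _).symm

lemma intervalIntegrable_floorPayment_mul (hfcont : Continuous f) (a b : ℝ) :
    IntervalIntegrable (fun v => floorPayment p q v * f v) volume a b := by
  rw [floorPayment_mul_eq_indicator]
  exact ((continuous_id.min continuous_const).mul hfcont).intervalIntegrable a b
    |>.indicator measurableSet_Ici

lemma integral_floorPayment_mul (hf : ∀ v, HasDerivAt F (f v) v) (hfcont : Continuous f)
    (hFvbar : F vbar = 1) (hp : 0 ≤ p) (hpq : p ≤ q) (hq : q ≤ vbar) :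
    ∫ v in 0..vbar, floorPayment p q v * f v = (∫ v in p..q, v * f v) + q * (1 - F q) := by
  have hcont : Continuous fun v => min v q * f v := (continuous_id.min continuous_const).mul hfcont
  rw [floorPayment_mul_eq_indicator, intervalIntegral_indicator_Ici ⟨hp, hpq.trans hq⟩,
    ← integral_add_adjacent_intervals (hcont.intervalIntegrable p q)
      (hcont.intervalIntegrable q vbar)]
  congr 1
  · refine integral_congr fun v hv => ?_
    rw [uIcc_of_le hpq] at hv
    simp only [min_eq_left hv.2]
  · rw [← hFvbar, ← integral_density_eq_sub hf hfcont, ← intervalIntegral.integral_const_mul]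
    refine integral_congr fun v hv => ?_
    rw [uIcc_of_le hq] at hv
    simp only [min_eq_right hv.1]

lemma le_integral_floorPayment_mul (hf : ∀ v, HasDerivAt F (f v) v) (hfcont : Continuous f)
    (hfnonneg : ∀ v, 0 ≤ f v) {fbar : ℝ} (hfbar : ∀ v, f v ≤ fbar) (hFvbar : F vbar = 1)
    (hp : 0 ≤ p) (hpq : p ≤ q) (hq : q ≤ vbar) :
    p * (1 - F p) + (1 - F p) * (q - p) - fbar * (q - p) ^ 2
      ≤ ∫ v in 0..vbar, floorPayment p q v * f v := by
  have hlow : p * (F q - F p) ≤ ∫ v in p..q, v * f v := by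
    rw [← integral_density_eq_sub hf hfcont, ← intervalIntegral.integral_const_mul]
    exact integral_mono_on hpq ((continuous_const.mul hfcont).intervalIntegrable _ _)
      ((continuous_id.mul hfcont).intervalIntegrable _ _)
      fun v hv => mul_le_mul_of_nonneg_right hv.1 (hfnonneg v)
  have hlip : F q - F p ≤ fbar * (q - p) :=
    image_sub_le_mul_sub_of_deriv_le (fun v => (hf v).differentiableAt)
      (fun v => (hf v).deriv ▸ hfbar v) hpq
  rw [integral_floorPayment_mul hf hfcont hFvbar hp hpq hq]
  nlinarith [mul_le_mul_of_nonneg_left hlip (sub_nonneg.2 hpq)]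

end Revenue

lemma cdf_lt_one_of_revenue_max {F : ℝ → ℝ} (hFc : ContinuousAt F 0) (hF0 : F 0 = 0)
    {vbar p : ℝ} (hp : p ∈ Ioo 0 vbar)
    (hmax : ∀ v ∈ Icc 0 vbar, v * (1 - F v) ≤ p * (1 - F p)) : F p < 1 := by
  have hnear : ∀ᶠ v in 𝓝 0, F v < 1 := hFc.eventually (gt_mem_nhds (by simp [hF0]))
  obtain ⟨s, hFs, hs⟩ := ((hnear.filter_mono nhdsWithin_le_nhds).and
    (Ioo_mem_nhdsGT (hp.1.trans hp.2))).exists (f := 𝓝[>] (0 : ℝ))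
  have hRs : 0 < s * (1 - F s) := mul_pos hs.1 (by linarith)
  by_contra! h
  nlinarith [hmax s (Ioo_subset_Icc_self hs), hp.1]

theorem deterministic_gain_theta_eps_general
    (vbar : ℝ)
    (F f : ℝ → ℝ) (fbar : ℝ)
    (hf : ∀ v, HasDerivAt F (f v) v)
    (hfcont : Continuous f)
    (hfnonneg : ∀ v, 0 ≤ f v)
    (hfbar : ∀ v, f v ≤ fbar)
    (hF0 : F 0 = 0) (hFvbar : F vbar = 1)
    (R : ℝ → ℝ) (hR : ∀ v, R v = v * (1 - F v))
    (pstar : ℝ) (hpstar : pstar ∈ Set.Ioo 0 vbar)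
    (hmax : ∀ v ∈ Set.Icc 0 vbar, R v ≤ R pstar) :
    ∃ c > 0, ∃ ε₀ > 0, ∀ ε ∈ Set.Ioc (0:ℝ) ε₀,
      (∃ x t : ℝ → ℝ,
        (∀ v ∈ Set.Icc 0 vbar, x v = 0 ∨ x v = 1) ∧
        (∀ v ∈ Set.Icc 0 vbar, 0 ≤ v * x v - t v) ∧
        (∀ v ∈ Set.Icc 0 vbar, ∀ v' ∈ Set.Icc 0 vbar,
          v * x v' - t v' - ε ≤ v * x v - t v) ∧
        IntervalIntegrable (fun v => t v * f v) volume 0 vbar ∧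
        R pstar + (1 - F pstar) * ε - fbar * ε ^ 2 ≤ ∫ v in (0:ℝ)..vbar, t v * f v ∧
        R pstar + c * ε ≤ ∫ v in (0:ℝ)..vbar, t v * f v) ∧
      (∀ x t : ℝ → ℝ,
        (∀ v ∈ Set.Icc 0 vbar, x v = 0 ∨ x v = 1) →
        (∀ v ∈ Set.Icc 0 vbar, 0 ≤ v * x v - t v) →
        (∀ v ∈ Set.Icc 0 vbar, ∀ v' ∈ Set.Icc 0 vbar,
          v * x v' - t v' - ε ≤ v * x v - t v) →
        IntervalIntegrable (fun v => t v * f v) volume 0 vbar →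
        (∫ v in (0:ℝ)..vbar, t v * f v) ≤ R pstar + ε) := by
  have hM : ∀ v ∈ Icc 0 vbar, v * (1 - F v) ≤ R pstar := fun v hv => hR v ▸ hmax v hv
  have hgap : 0 < 1 - F pstar := sub_pos.2 <|
    cdf_lt_one_of_revenue_max (hf 0).continuousAt hF0 hpstar (hR pstar ▸ hM)
  have hfbar1 : 0 < fbar + 1 := by linarith [hfnonneg 0, hfbar 0]
  refine ⟨(1 - F pstar) / 2, by positivity, min (vbar - pstar) ((1 - F pstar) / (2 * (fbar + 1))),
    lt_min (by linarith [hpstar.2]) (by positivity), fun ε ⟨hε, hεε₀⟩ => ⟨?_, ?_⟩⟩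
  · have hq : pstar + ε ≤ vbar := by linarith [hεε₀.trans (min_le_left _ _)]
    have hfbarε : fbar * ε ≤ (1 - F pstar) / 2 := by
      have := (le_div_iff₀ (by positivity)).1 (hεε₀.trans (min_le_right _ _))
      nlinarith
    have hrev := le_integral_floorPayment_mul hf hfcont hfnonneg hfbar hFvbar hpstar.1.le
      (le_add_of_nonneg_right hε.le) hq
    rw [add_sub_cancel_left, ← hR] at hrev
    refine ⟨floorAllocation pstar, floorPayment pstar (pstar + ε), isDeterministicOn_floor,
      isIndividuallyRationalOn_floor, isApproxIncentiveCompatibleOn_floor (by linarith) le_rfl,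
      intervalIntegrable_floorPayment_mul hfcont 0 vbar, hrev, ?_⟩
    nlinarith
  · exact fun x t => integral_payment_mul_le_add hf hfcont hfnonneg hF0 hFvbar hM
      (hpstar.1.trans hpstar.2).le hε.le

/-- Optimal deterministic gain is `Θ(ε)`: there exist `c > 0`, `ε₀ > 0` such that
for all `ε ∈ (0, ε₀]` there is an IR, ε-IC deterministic mechanism with expected
revenue at least `R(p*) + (1 − F(p*))·ε − f̄·ε²`, in particular at least
`R(p*) + c·ε`; and every IR, ε-IC deterministic mechanism has expected revenue
at most `R(p*) + ε`. -/
theorem deterministic_gain_theta_eps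
    (vbar : ℝ) (hvbar : 0 < vbar)
    (F f : ℝ → ℝ) (fbar : ℝ)
    (hf : ∀ v, HasDerivAt F (f v) v)
    (hfcont : Continuous f)
    (hfnonneg : ∀ v, 0 ≤ f v)
    (hfbar : ∀ v, f v ≤ fbar)
    (hF0 : F 0 = 0) (hFvbar : F vbar = 1)
    (R : ℝ → ℝ) (hR : ∀ v, R v = v * (1 - F v))
    (pstar : ℝ) (hpstar : pstar ∈ Set.Ioo 0 vbar)
    (hmax : ∀ v ∈ Set.Icc 0 vbar, R v ≤ R pstar) :
    ∃ c > 0, ∃ ε₀ > 0, ∀ ε ∈ Set.Ioc (0:ℝ) ε₀,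
      (∃ x t : ℝ → ℝ,
        (∀ v ∈ Set.Icc 0 vbar, x v = 0 ∨ x v = 1) ∧
        (∀ v ∈ Set.Icc 0 vbar, 0 ≤ v * x v - t v) ∧
        (∀ v ∈ Set.Icc 0 vbar, ∀ v' ∈ Set.Icc 0 vbar,
          v * x v' - t v' - ε ≤ v * x v - t v) ∧
        IntervalIntegrable (fun v => t v * f v) volume 0 vbar ∧
        R pstar + (1 - F pstar) * ε - fbar * ε ^ 2 ≤ ∫ v in (0:ℝ)..vbar, t v * f v ∧
        R pstar + c * ε ≤ ∫ v in (0:ℝ)..vbar, t v * f v) ∧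
      (∀ x t : ℝ → ℝ,
        (∀ v ∈ Set.Icc 0 vbar, x v = 0 ∨ x v = 1) →
        (∀ v ∈ Set.Icc 0 vbar, 0 ≤ v * x v - t v) →
        (∀ v ∈ Set.Icc 0 vbar, ∀ v' ∈ Set.Icc 0 vbar,
          v * x v' - t v' - ε ≤ v * x v - t v) →
        IntervalIntegrable (fun v => t v * f v) volume 0 vbar →
        (∫ v in (0:ℝ)..vbar, t v * f v) ≤ R pstar + ε) :=
  deterministic_gain_theta_eps_general vbar F f fbar hf hfcont hfnonneg hfbar hF0 hFvbar R hR pstar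
    hpstar hmax
end

section
/- Define Γ(t) = Σ_{j=0}^{⌊t⌋+1} ((-1)^j e^{-j}/j!)·(t+1-j)^j for t ≥ 0. Then 2(t+1)·e^{-1}·e^{-t} < Γ(t) ≤ 2(t+2)·e^{-(t+1)} for all t ≥ 0. -/
/-!
`Γ(t) = e^{-(t+1)} U(t+1)`, where `U = m + 1` satisfies the renewal equation
`U(s) = 1 + ∫_{s-1}^s U` for `s ≥ 0` (with `U = 0` on `[-1, 0)`). Affine functions `2s + a` solve
the same equation, and the equation preserves order from one unit interval to the next: if
`U ≥ L` on `[c - 1, c]`, then `D = U - L` satisfies `D(s) = g(s) + ∫_c^s D` with `g ≥ 0`, and a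
Grönwall argument (`e^{-s} ∫_c^s D` is nondecreasing) gives `D ≥ 0` on `[c, c + 1]`. Starting from
`U = 0 ≤ 2s + 2` on `[-1, 0]` and `2s + 1/2 ≤ e^s = U(s)` on `[0, 1]`, induction gives
`2s + 1/2 ≤ U(s) ≤ 2s + 2` for all `s ≥ 0`.
-/

open Real

noncomputable def GammaDDE (t : ℝ) : ℝ :=
  ∑ j ∈ Finset.range (⌊t⌋₊ + 2),
    ((-1 : ℝ) ^ j * Real.exp (-(j : ℝ)) / (Nat.factorial j)) * (t + 1 - (j : ℝ)) ^ j

open Set intervalIntegral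
open scoped Nat

lemma hasDerivAt_exp_mul_sum_range_neg_pow_div_factorial (k : ℕ) (x : ℝ) :
    HasDerivAt (fun y => exp y * ∑ i ∈ Finset.range (k + 1), (-y) ^ i / i !)
      (exp x * (-x) ^ k / k !) x := by
  induction k with
  | zero => simpa using hasDerivAt_exp x
  | succ k ih =>
    have hlast := (hasDerivAt_exp x).fun_mul
      (((hasDerivAt_neg x).fun_pow (k + 1)).div_const ((k + 1)! : ℝ))
    have hsplit : (fun y => exp y * ∑ i ∈ Finset.range (k + 1 + 1), (-y) ^ i / i !) =
        fun y => exp y * ∑ i ∈ Finset.range (k + 1), (-y) ^ i / i ! +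
          exp y * ((-y) ^ (k + 1) / (k + 1)!) := by
      funext y
      rw [Finset.sum_range_succ _ (k + 1), mul_add]
    rw [hsplit]
    refine (ih.fun_add hlast).congr_deriv ?_
    rw [Nat.factorial_succ, Nat.add_sub_cancel]
    push_cast
    field_simp
    ring

noncomputable def renewalTerm (k : ℕ) (s : ℝ) : ℝ := exp (s - k) * (k - s) ^ k / k !

noncomputable def renewalTermPrimitive (k : ℕ) (s : ℝ) : ℝ :=
  exp (s - k) * ∑ i ∈ Finset.range (k + 1), (k - s) ^ i / i !

lemma hasDerivAt_renewalTermPrimitive (k : ℕ) (s : ℝ) :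
    HasDerivAt (renewalTermPrimitive k) (renewalTerm k s) s := by
  have h := (hasDerivAt_exp_mul_sum_range_neg_pow_div_factorial k (s - k)).comp_sub_const s k
  unfold renewalTermPrimitive renewalTerm
  simpa only [neg_sub] using h

lemma renewalTermPrimitive_natCast_self (k : ℕ) : renewalTermPrimitive k k = 1 := by
  simp [renewalTermPrimitive, Finset.sum_range_succ']

lemma renewalTermPrimitive_zero (s : ℝ) : renewalTermPrimitive 0 s = renewalTerm 0 s := by
  simp [renewalTermPrimitive, renewalTerm]

lemma renewalTermPrimitive_succ (k : ℕ) (s : ℝ) :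
    renewalTermPrimitive (k + 1) s = renewalTermPrimitive k (s - 1) + renewalTerm (k + 1) s := by
  have hshift : s - 1 - k = s - (k + 1 : ℕ) := by push_cast; ring
  have hshift' : (k : ℝ) - (s - 1) = (k + 1 : ℕ) - s := by push_cast; ring
  rw [renewalTermPrimitive, renewalTermPrimitive, renewalTerm, hshift, hshift',
    Finset.sum_range_succ _ (k + 1), mul_add, mul_div_assoc]

/-- On `[n - 1, n]`, `renewalPartialSum n` is `m + 1`, where `m` is the renewal function of
Uniform[0,1] interarrival times. -/
noncomputable def renewalPartialSum (n : ℕ) (s : ℝ) : ℝ := ∑ k ∈ Finset.range n, renewalTerm k s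

noncomputable def renewalPartialSumPrimitive (n : ℕ) (s : ℝ) : ℝ :=
  ∑ k ∈ Finset.range n, renewalTermPrimitive k s

lemma continuous_renewalPartialSum (n : ℕ) : Continuous (renewalPartialSum n) := by
  unfold renewalPartialSum renewalTerm
  fun_prop

lemma integral_renewalPartialSum (n : ℕ) (a b : ℝ) :
    ∫ u in a..b, renewalPartialSum n u =
      renewalPartialSumPrimitive n b - renewalPartialSumPrimitive n a :=
  integral_eq_sub_of_hasDerivAt
    (fun s _ => HasDerivAt.fun_sum fun k _ => hasDerivAt_renewalTermPrimitive k s)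
    ((continuous_renewalPartialSum n).intervalIntegrable a b)

lemma renewalPartialSumPrimitive_succ (n : ℕ) (s : ℝ) :
    renewalPartialSumPrimitive (n + 1) s =
      renewalPartialSumPrimitive n (s - 1) + renewalPartialSum (n + 1) s := by
  induction n with
  | zero => simp [renewalPartialSumPrimitive, renewalPartialSum, renewalTermPrimitive_zero]
  | succ n ih =>
    simp only [renewalPartialSumPrimitive, renewalPartialSum, Finset.sum_range_succ] at ih ⊢
    rw [ih, renewalTermPrimitive_succ]
    ring

lemma renewalPartialSumPrimitive_succ_natCast_self (n : ℕ) :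
    renewalPartialSumPrimitive (n + 1) n = renewalPartialSumPrimitive n n + 1 := by
  rw [renewalPartialSumPrimitive, Finset.sum_range_succ, renewalTermPrimitive_natCast_self,
    renewalPartialSumPrimitive]

lemma renewalPartialSum_succ_eq_one_add_integral (n : ℕ) (s : ℝ) :
    renewalPartialSum (n + 1) s =
      1 + (∫ u in (s - 1)..n, renewalPartialSum n u) + ∫ u in n..s, renewalPartialSum (n + 1) u := by
  rw [integral_renewalPartialSum, integral_renewalPartialSum,
    renewalPartialSumPrimitive_succ n s, renewalPartialSumPrimitive_succ_natCast_self]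
  ring

lemma nonneg_of_eq_add_integral {D g : ℝ → ℝ} {a b : ℝ} (hD : Continuous D)
    (hg : ∀ s ∈ Icc a b, 0 ≤ g s) (hDg : ∀ s ∈ Icc a b, D s = g s + ∫ u in a..s, D u)
    {s : ℝ} (hs : s ∈ Icc a b) : 0 ≤ D s := by
  set Φ : ℝ → ℝ := fun x => ∫ u in a..x, D u
  have hΦ : ∀ x, HasDerivAt Φ (D x) x := fun x => (hD.integral_hasStrictDerivAt a x).hasDerivAt
  have hmono : MonotoneOn (fun x => exp (-x) * Φ x) (Icc a b) := by
    refine monotoneOn_of_hasDerivWithinAt_nonneg (f' := fun x => exp (-x) * g x) (convex_Icc a b)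
      (Continuous.continuousOn ?_) (fun x hx => ?_)
      (fun x hx => mul_nonneg (exp_pos _).le (hg x (interior_subset hx)))
    · exact (continuous_exp.comp continuous_neg).mul
        (continuous_iff_continuousAt.2 fun x => (hΦ x).continuousAt)
    · refine ((hasDerivAt_neg x).exp.mul (hΦ x)).hasDerivWithinAt.congr_deriv ?_
      rw [hDg x (interior_subset hx)]
      ring
  have hΦs : 0 ≤ Φ s := by
    have h := hmono ⟨le_rfl, hs.1.trans hs.2⟩ hs hs.1
    simp only [Φ, integral_same, mul_zero] at h
    exact nonneg_of_mul_nonneg_right h (exp_pos _)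
  rw [hDg s hs]
  exact add_nonneg (hg s hs) hΦs

lemma le_of_eq_add_integral_delay {f P Q P' Q' : ℝ → ℝ} {c : ℝ}
    (hP : Continuous P) (hQ : Continuous Q) (hP' : Continuous P') (hQ' : Continuous Q')
    (hQP : ∀ s ∈ Icc c (c + 1), Q s = f s + (∫ u in (s - 1)..c, P u) + ∫ u in c..s, Q u)
    (hQP' : ∀ s ∈ Icc c (c + 1), Q' s = f s + (∫ u in (s - 1)..c, P' u) + ∫ u in c..s, Q' u)
    (hPP' : ∀ u ∈ Icc (c - 1) c, P u ≤ P' u) {s : ℝ} (hs : s ∈ Icc c (c + 1)) :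
    Q s ≤ Q' s := by
  refine sub_nonneg.1 <| nonneg_of_eq_add_integral (D := Q' - Q)
    (g := fun s => ∫ u in (s - 1)..c, (P' u - P u)) (hQ'.sub hQ) (fun s hs => ?_) (fun s hs => ?_) hs
  · refine integral_nonneg (by linarith [hs.2]) fun u hu => sub_nonneg.2 (hPP' u ⟨?_, hu.2⟩)
    linarith [hu.1, hs.1]
  · simp only [Pi.sub_apply]
    rw [integral_sub (hP'.intervalIntegrable _ _) (hP.intervalIntegrable _ _),
      integral_sub (hQ'.intervalIntegrable _ _) (hQ.intervalIntegrable _ _), hQP s hs, hQP' s hs]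
    ring

lemma two_mul_add_eq_one_add_integral (a c s : ℝ) :
    2 * s + a = 1 + (∫ u in (s - 1)..c, (2 * u + a)) + ∫ u in c..s, (2 * u + a) := by
  have hL : Continuous fun u : ℝ => 2 * u + a := by fun_prop
  rw [add_assoc, integral_add_adjacent_intervals (hL.intervalIntegrable _ _)
    (hL.intervalIntegrable _ _)]
  have h2 : Continuous fun u : ℝ => 2 * u := by fun_prop
  rw [integral_add (h2.intervalIntegrable _ _) intervalIntegrable_const,
    integral_const_mul, integral_id, integral_const, smul_eq_mul]
  ring

lemma renewalPartialSum_le_two_mul_add_two (n : ℕ) :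
    ∀ s ∈ Icc ((n : ℝ) - 1) n, renewalPartialSum n s ≤ 2 * s + 2 := by
  induction n with
  | zero =>
    intro s hs
    simp only [renewalPartialSum, Finset.range_zero, Finset.sum_empty]
    linarith [hs.1]
  | succ n ih =>
    intro s hs
    rw [Nat.cast_succ, add_sub_cancel_right] at hs
    exact le_of_eq_add_integral_delay (continuous_renewalPartialSum n)
      (continuous_renewalPartialSum (n + 1)) (by fun_prop) (by fun_prop)
      (fun s _ => renewalPartialSum_succ_eq_one_add_integral n s)
      (fun s _ => two_mul_add_eq_one_add_integral 2 n s) (by simpa using ih) hs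

lemma two_mul_add_half_le_exp {s : ℝ} (hs : 0 ≤ s) : 2 * s + 1 / 2 ≤ exp s := by
  nlinarith [quadratic_le_exp_of_nonneg hs, sq_nonneg (s - 1)]

lemma two_mul_add_half_le_renewalPartialSum (n : ℕ) (hn : 1 ≤ n) :
    ∀ s ∈ Icc ((n : ℝ) - 1) n, 2 * s + 1 / 2 ≤ renewalPartialSum n s := by
  induction n, hn using Nat.le_induction with
  | base =>
    intro s hs
    simpa [renewalPartialSum, renewalTerm] using two_mul_add_half_le_exp (by simpa using hs.1)
  | succ n _ ih =>
    intro s hs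
    rw [Nat.cast_succ, add_sub_cancel_right] at hs
    exact le_of_eq_add_integral_delay (by fun_prop) (by fun_prop) (continuous_renewalPartialSum n)
      (continuous_renewalPartialSum (n + 1))
      (fun s _ => two_mul_add_eq_one_add_integral (1 / 2) n s)
      (fun s _ => renewalPartialSum_succ_eq_one_add_integral n s) (by simpa using ih) hs

lemma GammaDDE_eq_exp_mul_renewalPartialSum (t : ℝ) :
    GammaDDE t = exp (-(t + 1)) * renewalPartialSum (⌊t⌋₊ + 2) (t + 1) := by
  rw [GammaDDE, renewalPartialSum, Finset.mul_sum]
  refine Finset.sum_congr rfl fun j _ => ?_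
  have hexp : exp (-(t + 1)) * exp (t + 1 - j) = exp (-j) := by rw [← exp_add]; ring_nf
  rw [renewalTerm, show (j : ℝ) - (t + 1) = -(t + 1 - j) by ring, neg_pow (t + 1 - j), ← hexp]
  ring

/-- Two-sided renewal-theoretic bounds on `Γ`:
`2(t+1)e⁻¹e⁻ᵗ < Γ(t) ≤ 2(t+2)e^{−(t+1)}` for all `t ≥ 0`. -/
theorem GammaDDE_bounds (t : ℝ) (ht : 0 ≤ t) :
    2 * (t + 1) * Real.exp (-1) * Real.exp (-t) < GammaDDE t ∧
    GammaDDE t ≤ 2 * (t + 2) * Real.exp (-(t + 1)) := by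
  have hs : t + 1 ∈ Icc (((⌊t⌋₊ + 2 : ℕ) : ℝ) - 1) (⌊t⌋₊ + 2 : ℕ) := by
    push_cast
    constructor <;> linarith [Nat.floor_le ht, Nat.lt_floor_add_one t]
  have hlow := two_mul_add_half_le_renewalPartialSum _ (by omega) _ hs
  have hup := renewalPartialSum_le_two_mul_add_two _ _ hs
  rw [GammaDDE_eq_exp_mul_renewalPartialSum]
  constructor
  · calc 2 * (t + 1) * exp (-1) * exp (-t) = exp (-(t + 1)) * (2 * (t + 1)) := by
          rw [mul_assoc, ← exp_add, mul_comm]; ring_nf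
      _ < exp (-(t + 1)) * renewalPartialSum (⌊t⌋₊ + 2) (t + 1) := by gcongr; linarith
  · calc exp (-(t + 1)) * renewalPartialSum (⌊t⌋₊ + 2) (t + 1)
        ≤ exp (-(t + 1)) * (2 * (t + 2)) := by gcongr; linarith
      _ = 2 * (t + 2) * exp (-(t + 1)) := mul_comm _ _
end

section
/- For a renewal process with i.i.d. Uniform[0,1] interarrival times, the renewal function m(t) = E[N(t)] satisfies, for every integer n ≥ 0 and all t ∈ [n, n+1], m(t) = Σ_{k=0}^{n} (-1)^k · e^{t-k} · (t-k)^k / k! − 1. -/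
open MeasureTheory ProbabilityTheory Set
open scoped Nat ENNReal

/-!
By independence, `P(Z_{ℓ+1} ≤ t) = ∫₀¹ P(Z_ℓ ≤ t - x) dx`; integrating the truncated powers
`max (t - k) 0 ^ ℓ` and applying Pascal's rule shows inductively that `Z_ℓ` has the Irwin–Hall
distribution function. The partial sums increase, so `N(t)` counts the `ℓ ≥ 1` with `Z_ℓ ≤ t`
(a finite number, almost surely, by Borel–Cantelli) and `m(t) = Σ_{ℓ ≥ 1} P(Z_ℓ ≤ t)`.
For `t ∈ [n, n+1]` only the terms `k ≤ n` of the Irwin–Hall formula survive, and there the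
`ℓ`-th one factors as `(-1)^k (t-k)^k / k! · (t-k)^(ℓ-k) / (ℓ-k)!`; summing over `ℓ` yields
`e^(t-k)`, and the `ℓ = 0` term of the formula, which equals `1`, is the one subtracted.
-/

open Finset in
theorem sum_range_alternating_choose_succ_mul {R : Type*} [CommRing R] (j : ℕ) (q : ℕ → R) :
    ∑ k ∈ range (j + 2), (-1) ^ k * ((j + 1).choose k : R) * q k =
      ∑ k ∈ range (j + 1), (-1) ^ k * (j.choose k : R) * (q k - q (k + 1)) := by
  have hshift : ∑ k ∈ range (j + 1), (-1) ^ (k + 1) * (j.choose (k + 1) : R) * q (k + 1) =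
      ∑ k ∈ range (j + 1), (-1) ^ k * (j.choose k : R) * q k - q 0 := by
    rw [sum_range_succ' (fun k => (-1) ^ k * (j.choose k : R) * q k), sum_range_succ]
    simp
  rw [sum_range_succ' _ (j + 1)]
  simp only [Nat.choose_succ_succ', Nat.cast_add, mul_add, add_mul, sum_add_distrib]
  rw [hshift]
  simp only [pow_succ, mul_neg_one, neg_mul, sum_neg_distrib, mul_sub, sum_sub_distrib,
    pow_zero, Nat.choose_zero_right, Nat.cast_one, one_mul]
  ring

/-- For `ℓ = 0` this is the constant `1` (as `x ^ 0 = 1`), not the distribution function of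
`Z₀ = 0`. -/
noncomputable def irwinHallCDF (ℓ : ℕ) (t : ℝ) : ℝ :=
  (∑ k ∈ Finset.range (ℓ + 1), (-1) ^ k * (ℓ.choose k : ℝ) * max (t - k) 0 ^ ℓ) / ℓ !

theorem irwinHallCDF_zero (t : ℝ) : irwinHallCDF 0 t = 1 := by simp [irwinHallCDF]

theorem irwinHallCDF_one (t : ℝ) : irwinHallCDF 1 t = max t 0 - max (t - 1) 0 := by
  simp [irwinHallCDF, Finset.sum_range_succ]
  ring

theorem integral_max_pow {ℓ : ℕ} (hℓ : ℓ ≠ 0) (a b : ℝ) :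
    ∫ u in a..b, max u 0 ^ ℓ = (max b 0 ^ (ℓ + 1) - max a 0 ^ (ℓ + 1)) / (ℓ + 1) := by
  have hprimitive : ∀ c : ℝ, ∫ u in (0 : ℝ)..c, max u 0 ^ ℓ = max c 0 ^ (ℓ + 1) / (ℓ + 1) := by
    intro c
    rcases le_total 0 c with hc | hc
    · rw [intervalIntegral.integral_congr (g := fun u => u ^ ℓ), integral_pow, max_eq_left hc]
      · simp
      · intro u hu
        simp [max_eq_left (uIcc_of_le hc ▸ hu).1]
    · rw [intervalIntegral.integral_congr (g := fun _ => 0), max_eq_right hc]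
      · simp [hℓ]
      · intro u hu
        simp [max_eq_right (uIcc_of_ge hc ▸ hu).2, hℓ]
  have hint : ∀ c d : ℝ, IntervalIntegrable (fun u : ℝ => max u 0 ^ ℓ) volume c d := fun c d =>
    ((continuous_id.max continuous_const).pow ℓ).intervalIntegrable c d
  rw [← intervalIntegral.integral_interval_sub_left (hint 0 b) (hint 0 a), hprimitive,
    hprimitive, sub_div]

theorem integral_irwinHallCDF_sub {ℓ : ℕ} (hℓ : ℓ ≠ 0) (t : ℝ) :
    ∫ x in (0 : ℝ)..1, irwinHallCDF ℓ (t - x) = irwinHallCDF (ℓ + 1) t := by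
  have hterm : ∀ k : ℕ, ∫ u in t - 1..t, max (u - k) 0 ^ ℓ =
      (max (t - k) 0 ^ (ℓ + 1) - max (t - (k + 1 : ℕ)) 0 ^ (ℓ + 1)) / (ℓ + 1) := by
    intro k
    rw [intervalIntegral.integral_comp_sub_right (fun u => max u 0 ^ ℓ), integral_max_pow hℓ]
    push_cast
    ring_nf
  rw [intervalIntegral.integral_comp_sub_left (irwinHallCDF ℓ), sub_zero]
  unfold irwinHallCDF
  rw [intervalIntegral.integral_div, intervalIntegral.integral_finsetSum]
  · simp only [intervalIntegral.integral_const_mul, hterm, ← mul_div_assoc, ← Finset.sum_div]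
    rw [sum_range_alternating_choose_succ_mul ℓ (fun k => max (t - k) 0 ^ (ℓ + 1)),
      Nat.factorial_succ, Nat.cast_mul, Nat.cast_succ, div_div]
  · intro k _
    exact Continuous.intervalIntegrable (by fun_prop) _ _

theorem hasSum_ite_le_pow_sub_div_factorial (k : ℕ) (x : ℝ) :
    HasSum (fun ℓ => if k ≤ ℓ then x ^ (ℓ - k) / (ℓ - k)! else 0) (Real.exp x) := by
  rw [← hasSum_nat_add_iff' k, Finset.sum_eq_zero fun i hi => if_neg (by simpa using hi)]
  simpa [Real.exp_eq_exp_ℝ] using NormedSpace.expSeries_div_hasSum_exp x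

theorem irwinHallCDF_eq_sum_of_mem_Icc {n : ℕ} {t : ℝ} (ht : t ∈ Icc (n : ℝ) (n + 1)) (ℓ : ℕ) :
    irwinHallCDF ℓ t = ∑ k ∈ Finset.range (n + 1),
      (-1) ^ k * (t - k) ^ k / k ! * if k ≤ ℓ then (t - k) ^ (ℓ - k) / (ℓ - k)! else 0 := by
  have hfilter :
      (Finset.range (ℓ + 1)).filter (· ≤ n) = (Finset.range (n + 1)).filter (· ≤ ℓ) := by
    ext k
    simp only [Finset.mem_filter, Finset.mem_range]
    omega
  unfold irwinHallCDF
  rw [Finset.sum_div, ← Finset.sum_filter_of_ne (p := (· ≤ n)), hfilter, Finset.sum_filter]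
  · refine Finset.sum_congr rfl fun k hk => ?_
    split_ifs with hkℓ
    · have hkt : (k : ℝ) ≤ t :=
        le_trans (by exact_mod_cast Finset.mem_range_succ_iff.1 hk) ht.1
      obtain ⟨m, rfl⟩ := Nat.exists_eq_add_of_le hkℓ
      rw [max_eq_left (sub_nonneg.2 hkt), Nat.cast_choose ℝ hkℓ, Nat.add_sub_cancel_left,
        pow_add]
      field_simp
    · rw [mul_zero]
  · intro k hk hne
    by_contra hkn
    have hkt : t ≤ k := le_trans ht.2 (by exact_mod_cast Nat.lt_of_not_le hkn)
    have hℓ : ℓ ≠ 0 := by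
      have := Finset.mem_range_succ_iff.1 hk
      omega
    simp [max_eq_right (sub_nonpos.2 hkt), hℓ] at hne

theorem hasSum_irwinHallCDF {n : ℕ} {t : ℝ} (ht : t ∈ Icc (n : ℝ) (n + 1)) :
    HasSum (fun ℓ => irwinHallCDF ℓ t)
      (∑ k ∈ Finset.range (n + 1), (-1) ^ k * Real.exp (t - k) * (t - k) ^ k / k !) := by
  have hterm : ∀ k : ℕ, (-1) ^ k * Real.exp (t - k) * (t - k) ^ k / k ! =
      (-1) ^ k * (t - k) ^ k / k ! * Real.exp (t - k) := fun k => by ring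
  simp_rw [irwinHallCDF_eq_sum_of_mem_Icc ht, hterm]
  exact hasSum_sum fun k _ => (hasSum_ite_le_pow_sub_div_factorial k (t - k)).mul_left _

section Probability

variable {Ω : Type*} [MeasurableSpace Ω] {P : Measure Ω} [IsFiniteMeasure P]

theorem measure_add_le_eq_lintegral {W Y : Ω → ℝ} (hW : Measurable W) (hY : Measurable Y)
    (hWY : IndepFun W Y P) (t : ℝ) :
    P {ω | W ω + Y ω ≤ t} = ∫⁻ x, P {ω | Y ω ≤ t - x} ∂(P.map W) := by
  have hs : MeasurableSet {p : ℝ × ℝ | p.1 + p.2 ≤ t} :=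
    measurableSet_le (by fun_prop) (by fun_prop)
  change P ((fun ω => (W ω, Y ω)) ⁻¹' {p : ℝ × ℝ | p.1 + p.2 ≤ t}) = _
  rw [← Measure.map_apply (hW.prodMk hY) hs,
    (indepFun_iff_map_prod_eq_prod_map_map hW.aemeasurable hY.aemeasurable).1 hWY,
    Measure.prod_apply hs]
  refine lintegral_congr fun x => ?_
  rw [Measure.map_apply hY (measurable_prodMk_left hs)]
  congr 1 with ω
  simp [le_sub_iff_add_le']

theorem measureReal_add_le_eq_integral {W Y : Ω → ℝ} (hW : Measurable W) (hY : Measurable Y)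
    (hWY : IndepFun W Y P) (hunif : P.map W = volume.restrict (Icc 0 1)) (t : ℝ) :
    P.real {ω | W ω + Y ω ≤ t} = ∫ x in (0 : ℝ)..1, P.real {ω | Y ω ≤ t - x} := by
  have hanti : Antitone fun x => P {ω | Y ω ≤ t - x} := fun x y hxy =>
    measure_mono fun ω (hω : Y ω ≤ t - y) => show Y ω ≤ t - x by linarith
  rw [measureReal_def, measure_add_le_eq_lintegral hW hY hWY, hunif,
    ← integral_toReal hanti.measurable.aemeasurable (ae_of_all _ fun _ => measure_lt_top _ _),
    intervalIntegral.integral_of_le zero_le_one, integral_Icc_eq_integral_Ioc]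
  rfl

theorem measureReal_restrict_Icc_Iic (t : ℝ) :
    (volume.restrict (Icc (0 : ℝ) 1)).real (Iic t) = irwinHallCDF 1 t := by
  have hinter : Iic t ∩ Icc 0 1 = Icc 0 (min t 1) := by
    ext x
    simp only [mem_inter_iff, mem_Iic, mem_Icc, le_min_iff]
    tauto
  rw [irwinHallCDF_one, measureReal_restrict_apply measurableSet_Iic, hinter,
    Real.volume_real_Icc]
  rcases le_total t 0 with h | h
  · simp [h, h.trans zero_le_one]
  rcases le_total t 1 with h' | h' <;> simp [h, h']

theorem measureReal_sum_range_le_eq_irwinHallCDF {X : ℕ → Ω → ℝ}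
    (hmeas : ∀ i, Measurable (X i)) (hindep : iIndepFun X P)
    (hunif : ∀ i, P.map (X i) = volume.restrict (Icc 0 1)) (ℓ : ℕ) (t : ℝ) :
    P.real {ω | ∑ i ∈ Finset.range (ℓ + 1), X i ω ≤ t} = irwinHallCDF (ℓ + 1) t := by
  induction ℓ generalizing t with
  | zero =>
    rw [← measureReal_restrict_Icc_Iic, ← hunif 0,
      map_measureReal_apply (hmeas 0) measurableSet_Iic]
    simp [preimage, Iic]
  | succ ℓ ih =>
    have hind : IndepFun (X (ℓ + 1)) (fun ω => ∑ i ∈ Finset.range (ℓ + 1), X i ω) P := by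
      simpa only [Finset.sum_fn] using (hindep.indepFun_finsetSum_of_notMem hmeas (by simp)).symm
    simp_rw [Finset.sum_range_succ_comm _ (ℓ + 1)]
    rw [measureReal_add_le_eq_integral (hmeas _) (Finset.measurable_sum _ fun i _ => hmeas i) hind
      (hunif _)]
    simp_rw [ih, integral_irwinHallCDF_sub ℓ.succ_ne_zero]

theorem cast_sSup_setOf_le_eq_tsum {z : ℕ → ℝ} (hz : Monotone z) {t : ℝ}
    (hfin : {k | z k ≤ t}.Finite) :
    ((sSup {k | z k ≤ t} : ℕ) : ℝ) = ∑' k, if z (k + 1) ≤ t then 1 else 0 := by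
  have hiff : ∀ k, z (k + 1) ≤ t ↔ k < sSup {k | z k ≤ t} := fun k =>
    ⟨fun hk => le_csSup hfin.bddAbove hk, fun hk =>
      have hne : {k | z k ≤ t}.Nonempty := nonempty_iff_ne_empty.2 fun h => by simp [h] at hk
      (hz hk).trans (Nat.sSup_mem hne hfin.bddAbove)⟩
  simp_rw [hiff]
  rw [tsum_eq_sum (s := Finset.range (sSup {k | z k ≤ t})) (by simp),
    Finset.sum_ite_of_true fun k hk => Finset.mem_range.1 hk]
  simp

theorem integral_cast_sSup_setOf_le_eq_tsum {Z : ℕ → Ω → ℝ} (hZ : ∀ k, Measurable (Z k))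
    (hmono : ∀ᵐ ω ∂P, Monotone fun k => Z k ω) (t : ℝ)
    (hsum : Summable fun k => P.real {ω | Z (k + 1) ω ≤ t}) :
    ∫ ω, ((sSup {k | Z k ω ≤ t} : ℕ) : ℝ) ∂P = ∑' k, P.real {ω | Z (k + 1) ω ≤ t} := by
  have hA : ∀ k, MeasurableSet {ω | Z k ω ≤ t} := fun k =>
    measurableSet_le (hZ k) measurable_const
  have htsum : ∑' k, P {ω | Z k ω ≤ t} ≠ ∞ := by
    rw [tsum_congr fun k => (ofReal_measureReal (measure_ne_top P _)).symm,
      ← ENNReal.ofReal_tsum_of_nonneg (fun _ => measureReal_nonneg)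
      ((summable_nat_add_iff (f := fun k => P.real {ω | Z k ω ≤ t}) 1).1 hsum)]
    exact ENNReal.ofReal_ne_top
  have hcount : (fun ω => ((sSup {k | Z k ω ≤ t} : ℕ) : ℝ)) =ᵐ[P]
      fun ω => ∑' k, {ω | Z (k + 1) ω ≤ t}.indicator 1 ω := by
    filter_upwards [hmono, ae_finite_setOfPred_mem htsum] with ω hω hfin
    rw [cast_sSup_setOf_le_eq_tsum hω hfin]
    simp [Set.indicator_apply]
  rw [integral_congr_ae hcount, ← integral_tsum_of_summable_integral_norm]
  · simp_rw [integral_indicator_one (hA _)]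
  · exact fun k => (integrable_const 1).indicator (hA _)
  · simpa only [norm_indicator_eq_indicator_norm, Pi.one_apply, norm_one,
      integral_indicator_const _ (hA _), smul_eq_mul, mul_one] using hsum

end Probability

/-- Closed form of the renewal function for i.i.d. Uniform[0,1] interarrival
times: for `t ∈ [n, n+1]`,
`m(t) = E[N(t)] = Σ_{k=0}^{n} (−1)ᵏ e^{t−k} (t−k)ᵏ/k! − 1`,
where `N(t) = sup{k : Z_k ≤ t}` and `Z_k = X₁ + ⋯ + X_k`. -/
theorem renewal_function_uniform_closed_form
    {Ω : Type*} [MeasurableSpace Ω] (P : Measure Ω) [IsProbabilityMeasure P]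
    (X : ℕ → Ω → ℝ)
    (hmeas : ∀ i, Measurable (X i))
    (hindep : iIndepFun X P)
    (hunif : ∀ i, Measure.map (X i) P = volume.restrict (Set.Icc (0:ℝ) 1))
    (Z : ℕ → Ω → ℝ) (hZ : ∀ k ω, Z k ω = ∑ i ∈ Finset.range k, X i ω)
    (N : ℝ → Ω → ℕ) (hN : ∀ t ω, N t ω = sSup {k : ℕ | Z k ω ≤ t})
    (n : ℕ) (t : ℝ) (ht : t ∈ Set.Icc (n : ℝ) ((n : ℝ) + 1)) :
    ∫ ω, ((N t ω : ℝ)) ∂P =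
      (∑ k ∈ Finset.range (n + 1),
        (-1 : ℝ) ^ k * Real.exp (t - k) * (t - (k : ℝ)) ^ k / (Nat.factorial k)) - 1 := by
  obtain rfl : N = fun t ω => sSup {k | Z k ω ≤ t} := funext₂ hN
  obtain rfl : Z = fun k ω => ∑ i ∈ Finset.range k, X i ω := funext₂ hZ
  have hmono : ∀ᵐ ω ∂P, Monotone fun k => ∑ i ∈ Finset.range k, X i ω := by
    have hX : ∀ i, ∀ᵐ ω ∂P, X i ω ∈ Icc 0 1 := fun i =>
      ae_of_ae_map (hmeas i).aemeasurable ((hunif i).symm ▸ ae_restrict_mem measurableSet_Icc)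
    filter_upwards [ae_all_iff.2 hX] with ω hω
    exact monotone_nat_of_le_succ fun k => by simp [Finset.sum_range_succ, (hω k).1]
  have hsum : HasSum (fun ℓ => irwinHallCDF (ℓ + 1) t)
      ((∑ k ∈ Finset.range (n + 1), (-1) ^ k * Real.exp (t - k) * (t - k) ^ k / k !) - 1) := by
    simpa [irwinHallCDF_zero] using (hasSum_nat_add_iff' 1).2 (hasSum_irwinHallCDF ht)
  simp_rw [← measureReal_sum_range_le_eq_irwinHallCDF hmeas hindep hunif] at hsum
  rw [integral_cast_sSup_setOf_le_eq_tsum (fun k => Finset.measurable_sum _ fun i _ => hmeas i)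
    hmono t hsum.summable, hsum.tsum_eq]
end

section
/- For every integer n ≥ 0 and every real t, Σ_{k=0}^{n} Σ_{ℓ=0}^{n-k} ((-1)^k (t-k)^k / k!) · ((t-k)^ℓ / ℓ!) = n + 1. -/
/-!
Gathering the terms with `k + ℓ = m`, the double sum becomes `∑_{m ≤ n} (1/m!) ∑_{k ≤ m}
(-1)ᵏ C(m,k) (t-k)ᵐ`. The inner sum is, after reflecting `k ↦ m - k`, the `m`-th forward
difference of `x ↦ xᵐ` at `t - m`, which is `m!`; so every `m` contributes `1`.
-/

open Finset Nat

theorem sum_range_neg_one_pow_mul_choose_mul_sub_pow {R : Type*} [CommRing R] (m : ℕ) (t : R) :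
    ∑ k ∈ range (m + 1), (-1) ^ k * (m.choose k : R) * (t - k) ^ m = m ! := by
  have hdiff := fwdDiff_iter_eq_sum_shift (1 : R) (fun r ↦ r ^ m) m (t - m)
  rw [fwdDiff_iter_eq_factorial, Pi.natCast_apply, ← sum_range_reflect] at hdiff
  rw [hdiff]
  refine sum_congr rfl fun k hk ↦ ?_
  have hkm : k ≤ m := Nat.lt_succ_iff.mp (mem_range.mp hk)
  rw [add_tsub_cancel_right, Nat.sub_sub_self hkm, Nat.choose_symm hkm, nsmul_one,
    Nat.cast_sub hkm, zsmul_eq_mul]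
  push_cast
  ring

theorem sum_range_neg_one_pow_mul_sub_pow_div_factorial {K : Type*} [Field K] [CharZero K]
    (m : ℕ) (t : K) :
    ∑ k ∈ range (m + 1), ((-1) ^ k * (t - k) ^ k / k !) * ((t - k) ^ (m - k) / (m - k) !) = 1 := by
  have hm : (m ! : K) ≠ 0 := Nat.cast_ne_zero.mpr m.factorial_ne_zero
  have hterm : ∀ k ∈ range (m + 1),
      ((-1) ^ k * (t - k) ^ k / k !) * ((t - k) ^ (m - k) / (m - k) !)
        = (-1) ^ k * (m.choose k : K) * (t - k) ^ m / m ! := by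
    intro k hk
    have hkm : k ≤ m := Nat.lt_succ_iff.mp (mem_range.mp hk)
    rw [Nat.cast_choose K hkm, ← pow_mul_pow_sub (t - k) hkm]
    field_simp
  rw [sum_congr rfl hterm, ← sum_div, sum_range_neg_one_pow_mul_choose_mul_sub_pow,
    div_self hm]

/-- Combinatorial identity used in the closed form of the renewal function:
`Σ_{k=0}^{n} Σ_{ℓ=0}^{n−k} ((−1)ᵏ (t−k)ᵏ/k!)·((t−k)ˡ/ℓ!) = n + 1`
for every integer `n ≥ 0` and real `t`. -/
theorem renewal_combinatorial_identity (n : ℕ) (t : ℝ) :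
    ∑ k ∈ Finset.range (n + 1), ∑ l ∈ Finset.range (n - k + 1),
      ((-1 : ℝ) ^ k * (t - (k : ℝ)) ^ k / (Nat.factorial k)) *
        ((t - (k : ℝ)) ^ l / (Nat.factorial l)) = (n : ℝ) + 1 := by
  set f : ℕ → ℕ → ℝ := fun k l ↦ ((-1) ^ k * (t - k) ^ k / k !) * ((t - k) ^ l / l !)
  calc ∑ k ∈ range (n + 1), ∑ l ∈ range (n - k + 1), f k l
      = ∑ k ∈ range (n + 1), ∑ l ∈ range (n + 1 - k), f k l :=
        sum_congr rfl fun k hk ↦ by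
          rw [Nat.sub_add_comm (Nat.lt_succ_iff.mp (mem_range.mp hk))]
    _ = ∑ m ∈ range (n + 1), ∑ k ∈ range (m + 1), f k (m - k) := (sum_range_diag_flip _ f).symm
    _ = ∑ m ∈ range (n + 1), (1 : ℝ) :=
        sum_congr rfl fun m _ ↦ sum_range_neg_one_pow_mul_sub_pow_div_factorial m t
    _ = n + 1 := by simp
end

section
/- Let μ, ε > 0 with μ > ε·e. Then there exists δ > 0 with δ ∈ [μ²/(4ε) − μ, μ²/(4ε)] satisfying Γ(2δ/μ) = (μ/(eε))·e^{−2δ/μ}, where Γ(t) = Σ_{j=0}^{⌊t⌋+1} ((-1)^j e^{-j}/j!)·(t+1-j)^j. -/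
/-!
Put `u(t) = Γ(t) eᵗ`. On `[n, n + 1]` the function `Γ` is a polynomial, and the pieces satisfy
`Γ'(t) = -e⁻¹ Γ(t - 1)`; hence `u' = u - u(· - 1)` for `t ≥ 1`, which integrates to
`u(t) = e⁻¹ + ∫_{t-1}^t u`. A line `ℓ` of slope `2/e` satisfies the same identity, so `u - ℓ`
equals its own average over `[t - 1, t]`; such a function keeps the sign it has on `[0, 1]`.
Comparing with the lines through `0` and `4/e` gives `2t/e ≤ u(t) ≤ 2(t + 2)/e` for `t ≥ 0`.
The equation for `δ` reads `u(2δ/μ) = μ/(eε)`, and the intermediate value theorem on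
`[b - 2, b]`, `b = μ/(2ε)`, produces the root together with its bracket.
-/

open Real

open Set Filter Topology intervalIntegral

noncomputable def gammaCoeff (j : ℕ) : ℝ := (-1) ^ j * exp (-(j : ℝ)) / j.factorial

noncomputable def gammaPiece (n : ℕ) (t : ℝ) : ℝ :=
  ∑ j ∈ Finset.range (n + 2), gammaCoeff j * (t + 1 - j) ^ j

lemma gammaPiece_succ_natCast (n : ℕ) : gammaPiece (n + 1) (n + 1) = gammaPiece n (n + 1) := by
  rw [gammaPiece, Finset.sum_range_succ, ← gammaPiece]
  push_cast
  ring_nf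

-- Stated with `n ≤ ⌊t⌋₊` rather than `n ≤ t` so that `n = 0` also covers `t < 0`.
lemma GammaDDE_eq_gammaPiece {n : ℕ} {t : ℝ} (hn : n ≤ ⌊t⌋₊) (ht : t ≤ n + 1) :
    GammaDDE t = gammaPiece n t := by
  rcases hn.eq_or_lt with h | h
  · exact h ▸ rfl
  · obtain rfl : t = n + 1 :=
      le_antisymm ht (by exact_mod_cast (Nat.le_floor_iff' n.succ_ne_zero).1 h)
    have hfloor : ⌊(n + 1 : ℝ)⌋₊ = n + 1 := by exact_mod_cast Nat.floor_natCast (n + 1)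
    rw [← gammaPiece_succ_natCast, ← hfloor]
    rfl

lemma continuous_gammaPiece (n : ℕ) : Continuous (gammaPiece n) := by
  unfold gammaPiece
  fun_prop

lemma continuousOn_GammaDDE_Icc (k : ℤ) : ContinuousOn GammaDDE (Icc (k : ℝ) (k + 1)) := by
  refine (continuous_gammaPiece k.toNat).continuousOn.congr fun t ht => ?_
  rcases lt_or_ge k 0 with hk | hk
  · have hk' : (k : ℝ) + 1 ≤ 0 := by exact_mod_cast hk
    rw [Int.toNat_eq_zero.2 hk.le]
    exact GammaDDE_eq_gammaPiece (Nat.zero_le _) (by push_cast; linarith [ht.2])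
  · have hcast : ((k.toNat : ℕ) : ℝ) = k := by exact_mod_cast Int.toNat_of_nonneg hk
    exact GammaDDE_eq_gammaPiece (Nat.le_floor (hcast ▸ ht.1)) (hcast ▸ ht.2)

theorem continuous_GammaDDE : Continuous GammaDDE :=
  (locallyFinite_Icc_of_tendsto tendsto_intCast_atTop_atTop
      (tendsto_atBot_add_const_right _ 1 (tendsto_intCast_atBot_iff.2 tendsto_id))).continuous
    (iUnion_Icc_intCast ℝ) (fun _ => isClosed_Icc) continuousOn_GammaDDE_Icc

lemma gammaCoeff_succ_mul (k : ℕ) : gammaCoeff (k + 1) * (k + 1) = -exp (-1) * gammaCoeff k := by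
  have hexp : exp (-((k + 1 : ℕ) : ℝ)) = exp (-1) * exp (-k) := by
    rw [← exp_add]; push_cast; ring_nf
  simp only [gammaCoeff, hexp, Nat.factorial_succ, pow_succ]
  push_cast
  field_simp

lemma hasDerivAt_gammaPiece_succ (n : ℕ) (t : ℝ) :
    HasDerivAt (gammaPiece (n + 1)) (-exp (-1) * gammaPiece n (t - 1)) t := by
  have hterm : ∀ j ∈ Finset.range (n + 3), HasDerivAt (fun s => gammaCoeff j * (s + 1 - j) ^ j)
      (gammaCoeff j * (j * (t + 1 - j) ^ (j - 1))) t := fun j _ => by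
    simpa using ((((hasDerivAt_id t).add_const 1).sub_const (j : ℝ)).pow j).const_mul (gammaCoeff j)
  refine (HasDerivAt.fun_sum hterm).congr_deriv ?_
  rw [Finset.sum_range_succ', gammaPiece, Finset.mul_sum]
  simp only [CharP.cast_eq_zero, zero_mul, mul_zero, add_zero]
  refine Finset.sum_congr rfl fun k _ => ?_
  rw [← mul_assoc, ← mul_assoc, ← gammaCoeff_succ_mul, Nat.add_sub_cancel]
  push_cast
  ring_nf

lemma hasDerivWithinAt_GammaDDE {t : ℝ} (ht : 1 ≤ t) :
    HasDerivWithinAt GammaDDE (-exp (-1) * GammaDDE (t - 1)) (Ici t) t := by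
  obtain ⟨m, hm⟩ : ∃ m, ⌊t⌋₊ = m + 1 :=
    ⟨⌊t⌋₊ - 1, by have := Nat.le_floor (n := 1) (by exact_mod_cast ht); omega⟩
  have hlow : (m + 1 : ℝ) ≤ t := by exact_mod_cast hm ▸ Nat.floor_le (by linarith)
  have hup : t < m + 2 := by
    have := Nat.lt_floor_add_one t
    rw [hm] at this
    push_cast at this
    linarith
  have hev : GammaDDE =ᶠ[𝓝[≥] t] gammaPiece (m + 1) := by
    filter_upwards [Ico_mem_nhdsGE hup] with s hs
    exact GammaDDE_eq_gammaPiece (hm ▸ Nat.floor_mono hs.1) (by push_cast; linarith [hs.2])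
  have hshift : GammaDDE (t - 1) = gammaPiece m (t - 1) :=
    GammaDDE_eq_gammaPiece (Nat.le_floor (by linarith)) (by linarith)
  rw [hshift]
  exact (hasDerivAt_gammaPiece_succ m t).hasDerivWithinAt.congr_of_eventuallyEq hev
    (hev.eq_of_nhdsWithin self_mem_Ici)

noncomputable def scaledGamma (t : ℝ) : ℝ := GammaDDE t * exp t

@[fun_prop]
lemma continuous_scaledGamma : Continuous scaledGamma :=
  continuous_GammaDDE.mul continuous_exp

lemma scaledGamma_of_le_one {t : ℝ} (ht : t ≤ 1) :
    scaledGamma t = (1 - exp (-1) * t) * exp t := by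
  rw [scaledGamma, GammaDDE_eq_gammaPiece (n := 0) (Nat.zero_le _) (by simpa using ht)]
  simp [gammaPiece, gammaCoeff, Finset.sum_range_succ]
  ring

lemma hasDerivWithinAt_scaledGamma {t : ℝ} (ht : 1 ≤ t) :
    HasDerivWithinAt scaledGamma (scaledGamma t - scaledGamma (t - 1)) (Ici t) t := by
  refine ((hasDerivWithinAt_GammaDDE ht).mul (hasDerivAt_exp t).hasDerivWithinAt).congr_deriv ?_
  rw [scaledGamma, scaledGamma, exp_sub, exp_neg]
  field_simp
  ring

lemma integral_scaledGamma_zero_one : ∫ s in (0 : ℝ)..1, scaledGamma s = exp 1 - 1 - exp (-1) := by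
  have hprim : ∀ s ∈ uIcc (0 : ℝ) 1,
      HasDerivAt (fun s => (1 + exp (-1) - exp (-1) * s) * exp s) ((1 - exp (-1) * s) * exp s) s :=
    fun s _ => by
      refine (((hasDerivAt_id' s).const_mul (exp (-1))).const_sub (1 + exp (-1))).mul
        (hasDerivAt_exp s) |>.congr_deriv ?_
      ring
  have hcont : Continuous fun s => (1 - exp (-1) * s) * exp s := by fun_prop
  rw [integral_congr fun s hs =>
      scaledGamma_of_le_one (by rw [uIcc_of_le zero_le_one] at hs; exact hs.2),
    integral_eq_sub_of_hasDerivAt hprim (hcont.intervalIntegrable _ _)]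
  simp
  ring

theorem scaledGamma_eq_add_integral {t : ℝ} (ht : 1 ≤ t) :
    scaledGamma t = exp (-1) + ∫ s in (t - 1)..t, scaledGamma s := by
  set Φ : ℝ → ℝ := fun x => ∫ s in (0 : ℝ)..x, scaledGamma s
  have hΦ (x : ℝ) : HasDerivAt Φ (scaledGamma x) x :=
    (continuous_scaledGamma.integral_hasStrictDerivAt 0 x).hasDerivAt
  have hwindow (x : ℝ) : ∫ s in (x - 1)..x, scaledGamma s = Φ x - Φ (x - 1) :=
    (integral_interval_sub_left (continuous_scaledGamma.intervalIntegrable _ _)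
      (continuous_scaledGamma.intervalIntegrable _ _)).symm
  have hΦcont : Continuous Φ := continuous_iff_continuousAt.2 fun x => (hΦ x).continuousAt
  have hconst := constant_of_has_deriv_right_zero (a := 1) (b := t)
    (f := fun x => scaledGamma x - (Φ x - Φ (x - 1))) (by fun_prop) (fun x hx => by
      refine ((hasDerivWithinAt_scaledGamma hx.1).sub ((hΦ x).sub
        ((hΦ (x - 1)).comp_sub_const x 1)).hasDerivWithinAt).congr_deriv ?_
      ring) t ⟨ht, le_rfl⟩
  have hΦ1 : Φ 1 - Φ (1 - 1) = exp 1 - 1 - exp (-1) := by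
    simp [Φ, integral_scaledGamma_zero_one]
  rw [hwindow]
  simp only [hΦ1, scaledGamma_of_le_one le_rfl] at hconst
  have he : exp (-1) * exp 1 = 1 := by rw [← exp_add]; simp
  linear_combination hconst - he

section WindowAverage

variable {g : ℝ → ℝ}

lemma nonpos_Icc_add_half_of_eq_integral_sub_one (hg : Continuous g)
    (hrec : ∀ t, 1 ≤ t → g t = ∫ s in (t - 1)..t, g s) {a : ℝ} (ha : 1 ≤ a)
    (hprev : ∀ t ∈ Icc 0 a, g t ≤ 0) : ∀ t ∈ Icc 0 (a + 1 / 2), g t ≤ 0 := by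
  obtain ⟨t₀, ht₀, hmax⟩ := (isCompact_Icc (a := (0 : ℝ)) (b := a + 1 / 2)).exists_isMaxOn
    (nonempty_Icc.2 (by linarith)) hg.continuousOn
  suffices g t₀ ≤ 0 from fun t ht => (hmax ht).trans this
  rcases le_or_gt t₀ a with hle | hlt
  · exact hprev t₀ ⟨ht₀.1, hle⟩
  -- Beyond `a`, `g t₀ = ∫_{t₀-1}^a g + ∫_a^{t₀} g ≤ (t₀ - a) g t₀` with `t₀ - a ≤ 1/2`.
  have hpast : ∫ s in (t₀ - 1)..a, g s ≤ 0 := by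
    simpa using integral_mono_on (μ := MeasureTheory.volume) (by linarith [ht₀.2])
      (hg.intervalIntegrable _ _) intervalIntegrable_const
      fun s hs => hprev s ⟨by linarith [hs.1, ht₀.2], hs.2⟩
  have hrecent : ∫ s in a..t₀, g s ≤ (t₀ - a) * g t₀ := by
    simpa using integral_mono_on (μ := MeasureTheory.volume) hlt.le
      (hg.intervalIntegrable _ _) intervalIntegrable_const
      fun s hs => hmax ⟨by linarith [hs.1], hs.2.trans ht₀.2⟩
  have hsplit : g t₀ = (∫ s in (t₀ - 1)..a, g s) + ∫ s in a..t₀, g s := by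
    rw [hrec t₀ (by linarith), integral_add_adjacent_intervals (hg.intervalIntegrable _ _)
      (hg.intervalIntegrable _ _)]
  nlinarith [ht₀.2]

theorem nonpos_of_eq_integral_sub_one (hg : Continuous g)
    (hrec : ∀ t, 1 ≤ t → g t = ∫ s in (t - 1)..t, g s) (hbase : ∀ t ∈ Icc 0 1, g t ≤ 0)
    {t : ℝ} (ht : 0 ≤ t) : g t ≤ 0 := by
  have hstep (k : ℕ) : ∀ s ∈ Icc 0 (1 + k / 2 : ℝ), g s ≤ 0 := by
    induction k with
    | zero => simpa using hbase
    | succ k ih =>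
      convert nonpos_Icc_add_half_of_eq_integral_sub_one hg hrec
        (le_add_of_nonneg_right (by positivity)) ih using 4
      push_cast
      ring
  exact hstep ⌈2 * t⌉₊ t ⟨ht, by linarith [Nat.le_ceil (2 * t)]⟩

theorem nonneg_of_eq_integral_sub_one (hg : Continuous g)
    (hrec : ∀ t, 1 ≤ t → g t = ∫ s in (t - 1)..t, g s) (hbase : ∀ t ∈ Icc 0 1, 0 ≤ g t)
    {t : ℝ} (ht : 0 ≤ t) : 0 ≤ g t :=
  neg_nonpos.1 <| nonpos_of_eq_integral_sub_one (g := fun s => -g s) hg.neg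
    (fun s hs => by rw [integral_neg, hrec s hs]) (fun s hs => neg_nonpos.2 (hbase s hs)) ht

end WindowAverage

lemma integral_line (β t : ℝ) :
    ∫ s in (t - 1)..t, 2 * exp (-1) * (s + β) = 2 * exp (-1) * (t + β) - exp (-1) := by
  simp [integral_const_mul, integral_add, integral_id]
  ring

lemma scaledGamma_sub_line_eq_integral (β : ℝ) {t : ℝ} (ht : 1 ≤ t) :
    scaledGamma t - 2 * exp (-1) * (t + β) =
      ∫ s in (t - 1)..t, (scaledGamma s - 2 * exp (-1) * (s + β)) := by
  rw [integral_sub (continuous_scaledGamma.intervalIntegrable _ _)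
    ((by fun_prop : Continuous fun s : ℝ => 2 * exp (-1) * (s + β)).intervalIntegrable _ _),
    integral_line, scaledGamma_eq_add_integral ht]
  ring

lemma line_le_scaledGamma_of_mem_Icc {t : ℝ} (ht : t ∈ Icc (0 : ℝ) 1) :
    2 * exp (-1) * t ≤ scaledGamma t := by
  rw [scaledGamma_of_le_one ht.2]
  have hκ := exp_neg_one_lt_d9
  have hpos : 0 ≤ 1 - exp (-1) * t := by nlinarith [ht.2, exp_pos (-1)]
  calc 2 * exp (-1) * t ≤ (1 - exp (-1) * t) * (t + 1) := by
        nlinarith [mul_nonneg (mul_nonneg (exp_pos (-1)).le ht.1) (sub_nonneg.2 ht.2),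
          mul_le_mul_of_nonneg_right hκ.le ht.1]
    _ ≤ (1 - exp (-1) * t) * exp t := mul_le_mul_of_nonneg_left (add_one_le_exp t) hpos

lemma scaledGamma_le_line_of_mem_Icc {t : ℝ} (ht : t ∈ Icc (0 : ℝ) 1) :
    scaledGamma t ≤ 2 * exp (-1) * (t + 2) := by
  rw [scaledGamma_of_le_one ht.2]
  have hκ := exp_neg_one_lt_d9
  have hκ' := exp_neg_one_gt_d9
  have he : exp (-1) * exp 1 = 1 := by rw [← exp_add]; simp
  have hE := exp_one_lt_d9
  have hpos : 0 ≤ 1 - exp (-1) * t := by nlinarith [ht.2, exp_pos (-1)]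
  have hchord : exp t ≤ 1 - t + t * exp 1 := by
    simpa using convexOn_exp.2 (mem_univ 0) (mem_univ 1) (sub_nonneg.2 ht.2) ht.1 (by ring)
  calc (1 - exp (-1) * t) * exp t ≤ (1 - exp (-1) * t) * (1 - t + t * exp 1) :=
        mul_le_mul_of_nonneg_left hchord hpos
    _ = (1 - t) * (1 - exp (-1) * t) + t * exp 1 - t ^ 2 := by linear_combination (-t ^ 2) * he
    _ ≤ 2 * exp (-1) * (t + 2) := by
      nlinarith [mul_nonneg (mul_nonneg (sub_nonneg.2 ht.2) ht.1) (sub_nonneg.2 hκ'.le),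
        mul_le_mul_of_nonneg_left hE.le ht.1, sq_nonneg (t - 1 / 2)]

theorem line_le_scaledGamma {t : ℝ} (ht : 0 ≤ t) : 2 * exp (-1) * t ≤ scaledGamma t := by
  simpa using nonneg_of_eq_integral_sub_one
    (g := fun s => scaledGamma s - 2 * exp (-1) * (s + 0)) (by fun_prop)
    (fun s hs => scaledGamma_sub_line_eq_integral 0 hs)
    (fun s hs => by simpa using line_le_scaledGamma_of_mem_Icc hs) ht

theorem scaledGamma_le_line {t : ℝ} (ht : 0 ≤ t) : scaledGamma t ≤ 2 * exp (-1) * (t + 2) :=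
  sub_nonpos.1 <| nonpos_of_eq_integral_sub_one
    (g := fun s => scaledGamma s - 2 * exp (-1) * (s + 2)) (by fun_prop)
    (fun s hs => scaledGamma_sub_line_eq_integral 2 hs)
    (fun s hs => sub_nonpos.2 (scaledGamma_le_line_of_mem_Icc hs)) ht

theorem exists_scaledGamma_eq {b : ℝ} (hb : 1 < 2 * exp (-1) * b) :
    ∃ z, 0 < z ∧ z ∈ Icc (b - 2) b ∧ scaledGamma z = 2 * exp (-1) * b := by
  have hb0 : 0 < b := pos_of_mul_pos_right (one_pos.trans hb) (by positivity)
  have hzero : scaledGamma 0 = 1 := by simp [scaledGamma_of_le_one zero_le_one]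
  have hleft : scaledGamma (max (b - 2) 0) ≤ 2 * exp (-1) * b := by
    rcases le_total b 2 with h | h
    · rw [max_eq_right (by linarith), hzero]
      exact hb.le
    · simpa [max_eq_left (sub_nonneg.2 h)] using scaledGamma_le_line (sub_nonneg.2 h)
  obtain ⟨z, hz, hzb⟩ := intermediate_value_Icc (max_le (by linarith) hb0.le)
    continuous_scaledGamma.continuousOn ⟨hleft, line_le_scaledGamma hb0.le⟩
  have hz0 : 0 ≤ z := (le_max_right _ _).trans hz.1
  refine ⟨z, hz0.lt_of_ne ?_, ⟨(le_max_left _ _).trans hz.1, hz.2⟩, hzb⟩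
  rintro rfl
  linarith

/-- Existence of the feasibility parameter `δ`: for `μ > ε·e > 0` there exists
`δ > 0` with `δ ∈ [μ²/(4ε) − μ, μ²/(4ε)]` solving
`Γ(2δ/μ) = (μ/(eε))·e^{−2δ/μ}`. -/
theorem exists_delta_root (μ ε : ℝ) (hε : 0 < ε) (hμ : ε * Real.exp 1 < μ) :
    ∃ δ : ℝ, 0 < δ ∧ δ ∈ Set.Icc (μ ^ 2 / (4 * ε) - μ) (μ ^ 2 / (4 * ε)) ∧
      GammaDDE (2 * δ / μ) = (μ / (Real.exp 1 * ε)) * Real.exp (-(2 * δ / μ)) := by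
  have hμ0 : 0 < μ := (by positivity : 0 < ε * exp 1).trans hμ
  have hc : μ / (exp 1 * ε) = 2 * exp (-1) * (μ / (2 * ε)) := by
    rw [exp_neg]
    field_simp
  obtain ⟨z, hz0, ⟨hzl, hzu⟩, hz⟩ := exists_scaledGamma_eq (b := μ / (2 * ε))
    (by rw [← hc, one_lt_div (by positivity)]; linarith)
  have hsq : μ ^ 2 / (4 * ε) = μ / 2 * (μ / (2 * ε)) := by field_simp; ring
  refine ⟨μ / 2 * z, by positivity, ⟨?_, ?_⟩, ?_⟩
  · rw [hsq]
    linarith [mul_le_mul_of_nonneg_left hzl (by positivity : 0 ≤ μ / 2)]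
  · rw [hsq]
    exact mul_le_mul_of_nonneg_left hzu (by positivity)
  · rw [show 2 * (μ / 2 * z) / μ = z by field_simp, hc, ← hz, scaledGamma, exp_neg]
    field_simp
end

section
/- Let x : [p*-δ-μ, p*+δ] → ℝ be a continuous solution of the delayed differential equation x'(v) = (x(v) − x(v−μ))/μ on [p*-δ, p*+δ] such that x is nondecreasing on the initial interval [p*-δ-μ, p*-δ]. Then x is nondecreasing on all of [p*-δ-μ, p*+δ]. -/
/-!
On each window `[c, c + μ]` the delayed term `x (v - μ)` is bounded by `x c`, by monotonicity
on the previous window. Hence `y = x - x c` satisfies `μ y' ≥ y` with `y c = 0`, so `y ≥ 0`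
(compare with the exponential), and then `μ x' = x v - x (v - μ) ≥ x c - x (v - μ) ≥ 0`.
Monotonicity therefore propagates from `[a - μ, a]` window by window up to any `b`.
-/

open Set

theorem nonneg_of_mul_le_hasDerivAt {f f' : ℝ → ℝ} {c d k : ℝ}
    (hf : ContinuousOn f (Icc c d)) (hf' : ∀ v ∈ Ioo c d, HasDerivAt f (f' v) v)
    (hle : ∀ v ∈ Ioo c d, k * f v ≤ f' v) (hc : 0 ≤ f c) :
    ∀ v ∈ Icc c d, 0 ≤ f v := by
  set z : ℝ → ℝ := fun v => Real.exp (-k * v) * f v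
  have hz' : ∀ v ∈ Ioo c d,
      HasDerivAt z (Real.exp (-k * v) * (f' v - k * f v)) v := by
    intro v hv
    have hexp : HasDerivAt (fun v => Real.exp (-k * v)) (Real.exp (-k * v) * -k) v := by
      simpa using ((hasDerivAt_id v).const_mul (-k)).exp
    exact (hexp.mul (hf' v hv)).congr_deriv (by ring)
  have hzmono : MonotoneOn z (Icc c d) := by
    refine monotoneOn_of_hasDerivWithinAt_nonneg
      (f' := fun v => Real.exp (-k * v) * (f' v - k * f v)) (convex_Icc c d)
      ((continuous_const.mul continuous_id).rexp.continuousOn.mul hf) ?_ ?_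
    all_goals rw [interior_Icc]; intro v hv
    · exact (hz' v hv).hasDerivWithinAt
    · exact mul_nonneg (Real.exp_pos _).le (sub_nonneg.2 (hle v hv))
  intro v hv
  have hzv : z c ≤ z v := hzmono (left_mem_Icc.2 (hv.1.trans hv.2)) hv hv.1
  exact nonneg_of_mul_nonneg_right ((mul_nonneg (Real.exp_pos _).le hc).trans hzv)
    (Real.exp_pos _)

section DelayEquation

variable {x : ℝ → ℝ} {μ : ℝ}

theorem monotoneOn_Icc_of_delayed_le (hμ : 0 < μ) {c d : ℝ} (hx : ContinuousOn x (Icc c d))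
    (hdde : ∀ v ∈ Ioo c d, HasDerivAt x ((x v - x (v - μ)) / μ) v)
    (hdelay : ∀ v ∈ Ioo c d, x (v - μ) ≤ x c) : MonotoneOn x (Icc c d) := by
  have hge : ∀ v ∈ Icc c d, x c ≤ x v := by
    intro v hv
    refine sub_nonneg.1 (nonneg_of_mul_le_hasDerivAt (f := fun v => x v - x c) (k := μ⁻¹)
      (hx.sub continuousOn_const) (fun v hv => (hdde v hv).sub_const (x c)) ?_ (by simp) v hv)
    intro v hv
    rw [inv_mul_eq_div]
    exact div_le_div_of_nonneg_right (by linarith [hdelay v hv]) hμ.le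
  refine monotoneOn_of_hasDerivWithinAt_nonneg (f' := fun v => (x v - x (v - μ)) / μ)
    (convex_Icc c d) hx ?_ ?_
  all_goals rw [interior_Icc]; intro v hv
  · exact (hdde v hv).hasDerivWithinAt
  · exact div_nonneg (by linarith [hdelay v hv, hge v (Ioo_subset_Icc_self hv)]) hμ.le

theorem MonotoneOn.extend_by_delay (hμ : 0 < μ) {L c d : ℝ} (hmono : MonotoneOn x (Icc L c))
    (hLc : L ≤ c - μ) (hcd : c ≤ d) (hdc : d ≤ c + μ) (hx : ContinuousOn x (Icc c d))
    (hdde : ∀ v ∈ Ioo c d, HasDerivAt x ((x v - x (v - μ)) / μ) v) :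
    MonotoneOn x (Icc L d) := by
  have hL : L ≤ c := by linarith
  have hwindow : MonotoneOn x (Icc c d) :=
    monotoneOn_Icc_of_delayed_le hμ hx hdde fun v hv =>
      hmono ⟨by linarith [hv.1], by linarith [hv.2]⟩ (right_mem_Icc.2 hL) (by linarith [hv.2])
  rw [← Icc_union_Icc_eq_Icc hL hcd]
  exact hmono.union_right hwindow (isGreatest_Icc hL) (isLeast_Icc hcd)

theorem monotoneOn_of_delay_equation (hμ : 0 < μ) {a b : ℝ}
    (hx : ContinuousOn x (Icc (a - μ) b))
    (hdde : ∀ v ∈ Ioo a b, HasDerivAt x ((x v - x (v - μ)) / μ) v)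
    (hinit : MonotoneOn x (Icc (a - μ) a)) : MonotoneOn x (Icc (a - μ) b) := by
  rcases le_total b a with hba | hab
  · exact hinit.mono (Icc_subset_Icc_right hba)
  have hwindows :
      ∀ n : ℕ, ∀ d ∈ Icc a b, d ≤ a + n * μ → MonotoneOn x (Icc (a - μ) d) := by
    intro n
    induction n with
    | zero =>
      intro d hd hdn
      exact hinit.mono (Icc_subset_Icc_right (by simpa using hdn))
    | succ n ih =>
      intro d hd hdn
      set c := min d (a + n * μ)
      have hac : a ≤ c := le_min hd.1 (le_add_of_nonneg_right (by positivity))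
      have hdc : d ≤ c + μ := by
        rw [← min_add_add_right]
        exact le_min (by linarith) (by push_cast at hdn; linarith)
      refine (ih c ⟨hac, (min_le_left _ _).trans hd.2⟩ (min_le_right _ _)).extend_by_delay hμ
        (by linarith) (min_le_left _ _) hdc
        (hx.mono (Icc_subset_Icc (by linarith) hd.2))
        fun v hv => hdde v (Ioo_subset_Ioo hac hd.2 hv)
  obtain ⟨n, hn⟩ := exists_nat_ge ((b - a) / μ)
  exact hwindows n b ⟨hab, le_rfl⟩ (by rw [div_le_iff₀ hμ] at hn; linarith)

end DelayEquation

theorem dde_solution_monotone_general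
    (pstar δ μ : ℝ) (hμ : 0 < μ)
    (x : ℝ → ℝ)
    (hxcont : ContinuousOn x (Set.Icc (pstar - δ - μ) (pstar + δ)))
    (hdde : ∀ v ∈ Set.Icc (pstar - δ) (pstar + δ),
      HasDerivWithinAt x ((x v - x (v - μ)) / μ)
        (Set.Icc (pstar - δ) (pstar + δ)) v)
    (hinit : MonotoneOn x (Set.Icc (pstar - δ - μ) (pstar - δ))) :
    MonotoneOn x (Set.Icc (pstar - δ - μ) (pstar + δ)) :=
  monotoneOn_of_delay_equation hμ hxcont
    (fun v hv => (hdde v (Ioo_subset_Icc_self hv)).hasDerivAt (Icc_mem_nhds hv.1 hv.2)) hinit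

/-- Monotonicity of the perturbed delayed allocation: a continuous solution of
the delayed differential equation `x'(v) = (x(v) − x(v−μ))/μ` on
`[p*−δ, p*+δ]` which is nondecreasing on the initial interval
`[p*−δ−μ, p*−δ]` is nondecreasing on all of `[p*−δ−μ, p*+δ]`. -/
theorem dde_solution_monotone
    (pstar δ μ : ℝ) (hμ : 0 < μ) (hδ : 0 < δ)
    (x : ℝ → ℝ)
    (hxcont : ContinuousOn x (Set.Icc (pstar - δ - μ) (pstar + δ)))
    (hdde : ∀ v ∈ Set.Icc (pstar - δ) (pstar + δ),
      HasDerivWithinAt x ((x v - x (v - μ)) / μ)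
        (Set.Icc (pstar - δ) (pstar + δ)) v)
    (hinit : MonotoneOn x (Set.Icc (pstar - δ - μ) (pstar - δ))) :
    MonotoneOn x (Set.Icc (pstar - δ - μ) (pstar + δ)) :=
  dde_solution_monotone_general pstar δ μ hμ x hxcont hdde hinit
end

section
/- Suppose R : (0, v̄) → ℝ is differentiable, locally concave around an interior maximizer p*, and satisfies κ̃_L·|v−p*|^α ≤ R(p*) − R(v) ≤ κ̃_U·|v−p*|^α for all v in a neighborhood of p*, where α > 1 and κ̃_L, κ̃_U > 0. Then there exist constants κ_L, κ_U > 0 and a (possibly smaller) neighborhood of p* on which κ_L·α·|v−p*|^α ≤ (p*−v)·R'(v) ≤ κ_U·α·|v−p*|^α; in particular one may take κ_U = e·κ̃_U (up to the factor α) on that neighborhood. Conversely, the derivative condition implies the value condition with constants κ_L, κ_U by integration. -/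
/-!
Both directions rest on the supporting line of the concave function `R` at a point `v`,
`R z ≤ R v + R'(v) (z - v)`. Evaluated at `z = p*` it gives `R(p*) - R(v) ≤ (p* - v) R'(v)`,
the upper bound on values from the derivative form and the lower bound on the derivative from
the value form. Evaluated at the reflected point `z = 2v - p*` it gives
`(p* - v) R'(v) ≤ R(v) - R(2v - p*) ≤ R(p*) - R(2v - p*)`, so the derivative is controlled by
the value gap at twice the distance (constant `2^α`). Finally, the supporting line at the
midpoint `m` of `v` and `p*` bounds `R(p*) - R(v) ≥ R(m) - R(v)` from below by
`(p* - m) R'(m)`, which is the derivative form at half the distance (constant `2^(-α)`).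
-/

open Set Real

theorem ConcaveOn.apply_le_add_deriv_mul_sub {S : Set ℝ} {f : ℝ → ℝ} (hf : ConcaveOn ℝ S f)
    {x y : ℝ} (hx : x ∈ S) (hy : y ∈ S) (hfx : DifferentiableAt ℝ f x) :
    f y ≤ f x + deriv f x * (y - x) := by
  rcases lt_trichotomy x y with hxy | rfl | hyx
  · have := hf.slope_le_deriv hx hy hxy hfx
    rw [slope_def_field, div_le_iff₀ (sub_pos.2 hxy)] at this
    linarith
  · simp
  · have := hf.deriv_le_slope hy hx hyx hfx
    rw [slope_def_field, le_div_iff₀ (sub_pos.2 hyx)] at this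
    linarith

def ValueEnvelope (R : ℝ → ℝ) (p α κL κU ℓ : ℝ) : Prop :=
  ∀ v ∈ Ioo (p - ℓ) (p + ℓ), κL * |v - p| ^ α ≤ R p - R v ∧ R p - R v ≤ κU * |v - p| ^ α

/-- The paper's constants `κ · α` of the derivative form appear here as `κL`, `κU`. -/
def DerivEnvelope (R : ℝ → ℝ) (p α κL κU ℓ : ℝ) : Prop :=
  ∀ v ∈ Ioo (p - ℓ) (p + ℓ),
    κL * |v - p| ^ α ≤ (p - v) * deriv R v ∧ (p - v) * deriv R v ≤ κU * |v - p| ^ α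

variable {R : ℝ → ℝ} {p α κL κU ℓ ℓ' : ℝ}

theorem ValueEnvelope.mono (h : ValueEnvelope R p α κL κU ℓ) (hℓ : ℓ' ≤ ℓ) :
    ValueEnvelope R p α κL κU ℓ' := fun v hv =>
  h v ⟨by linarith [hv.1], by linarith [hv.2]⟩

theorem DerivEnvelope.mono (h : DerivEnvelope R p α κL κU ℓ) (hℓ : ℓ' ≤ ℓ) :
    DerivEnvelope R p α κL κU ℓ' := fun v hv =>
  h v ⟨by linarith [hv.1], by linarith [hv.2]⟩

theorem abs_rpow_mul_two (x α : ℝ) : |2 * x| ^ α = 2 ^ α * |x| ^ α := by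
  rw [abs_mul, abs_two, mul_rpow zero_le_two (abs_nonneg x)]

theorem ValueEnvelope.derivEnvelope (h : ValueEnvelope R p α κL κU ℓ) (hκL : 0 ≤ κL)
    (hconc : ConcaveOn ℝ (Ioo (p - ℓ) (p + ℓ)) R)
    (hdiff : ∀ v ∈ Ioo (p - ℓ) (p + ℓ), DifferentiableAt ℝ R v) :
    DerivEnvelope R p α κL (κU * 2 ^ α) (ℓ / 2) := by
  rintro v ⟨hv₁, hv₂⟩
  have hvℓ : v ∈ Ioo (p - ℓ) (p + ℓ) := ⟨by linarith, by linarith⟩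
  have hpℓ : p ∈ Ioo (p - ℓ) (p + ℓ) := ⟨by linarith, by linarith⟩
  have hzℓ : 2 * v - p ∈ Ioo (p - ℓ) (p + ℓ) := ⟨by linarith, by linarith⟩
  have hgap_p := hconc.apply_le_add_deriv_mul_sub hvℓ hpℓ (hdiff v hvℓ)
  have hgap_z := hconc.apply_le_add_deriv_mul_sub hvℓ hzℓ (hdiff v hvℓ)
  obtain ⟨hvL, -⟩ := h v hvℓ
  obtain ⟨-, hzU⟩ := h _ hzℓ
  rw [show 2 * v - p - p = 2 * (v - p) by ring, abs_rpow_mul_two] at hzU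
  have hvL_nonneg : 0 ≤ κL * |v - p| ^ α := by positivity
  exact ⟨by linarith, by linarith⟩

theorem abs_rpow_half (x α : ℝ) : |x / 2| ^ α = |x| ^ α / 2 ^ α := by
  rw [abs_div, abs_two, div_rpow (abs_nonneg x) zero_le_two]

theorem DerivEnvelope.valueEnvelope (h : DerivEnvelope R p α κL κU ℓ)
    (hconc : ConcaveOn ℝ (Ioo (p - ℓ) (p + ℓ)) R)
    (hdiff : ∀ v ∈ Ioo (p - ℓ) (p + ℓ), DifferentiableAt ℝ R v)
    (hmax : ∀ v ∈ Ioo (p - ℓ) (p + ℓ), R v ≤ R p) :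
    ValueEnvelope R p α (κL / 2 ^ α) κU ℓ := by
  intro v hv
  have ⟨hv₁, hv₂⟩ := hv
  have hpℓ : p ∈ Ioo (p - ℓ) (p + ℓ) := ⟨by linarith, by linarith⟩
  have hmℓ : (v + p) / 2 ∈ Ioo (p - ℓ) (p + ℓ) := ⟨by linarith, by linarith⟩
  have hgap_v := hconc.apply_le_add_deriv_mul_sub hv hpℓ (hdiff v hv)
  have hgap_m := hconc.apply_le_add_deriv_mul_sub hmℓ hv (hdiff _ hmℓ)
  obtain ⟨-, hvU⟩ := h v hv
  obtain ⟨hmL, -⟩ := h _ hmℓ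
  rw [show (v + p) / 2 - p = (v - p) / 2 by ring, abs_rpow_half] at hmL
  have hm_max := hmax _ hmℓ
  rw [div_mul_eq_mul_div, mul_div_assoc]
  exact ⟨by linarith, by linarith⟩

theorem alpha_power_envelope_equivalence_general
    (vbar pstar α : ℝ) (hα : 1 < α)
    (R : ℝ → ℝ)
    (hdiff : ∀ v ∈ Set.Ioo (0:ℝ) vbar, DifferentiableAt ℝ R v)
    (hmax : ∀ v ∈ Set.Ioo (0:ℝ) vbar, R v ≤ R pstar)
    (ℓc : ℝ) (hℓc : 0 < ℓc)
    (hsub : Set.Icc (pstar - ℓc) (pstar + ℓc) ⊆ Set.Ioo (0:ℝ) vbar)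
    (hconc : ConcaveOn ℝ (Set.Icc (pstar - ℓc) (pstar + ℓc)) R) :
    ((∃ κL κU ℓ : ℝ, 0 < κL ∧ 0 < κU ∧ 0 < ℓ ∧
        Set.Ioo (pstar - ℓ) (pstar + ℓ) ⊆ Set.Ioo (0:ℝ) vbar ∧
        ∀ v ∈ Set.Ioo (pstar - ℓ) (pstar + ℓ),
          κL * |v - pstar| ^ α ≤ R pstar - R v ∧
          R pstar - R v ≤ κU * |v - pstar| ^ α) →
      (∃ κL κU ℓ : ℝ, 0 < κL ∧ 0 < κU ∧ 0 < ℓ ∧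
        Set.Ioo (pstar - ℓ) (pstar + ℓ) ⊆ Set.Ioo (0:ℝ) vbar ∧
        ∀ v ∈ Set.Ioo (pstar - ℓ) (pstar + ℓ),
          κL * α * |v - pstar| ^ α ≤ (pstar - v) * deriv R v ∧
          (pstar - v) * deriv R v ≤ κU * α * |v - pstar| ^ α)) ∧
    ((∃ κL κU ℓ : ℝ, 0 < κL ∧ 0 < κU ∧ 0 < ℓ ∧
        Set.Ioo (pstar - ℓ) (pstar + ℓ) ⊆ Set.Ioo (0:ℝ) vbar ∧
        ∀ v ∈ Set.Ioo (pstar - ℓ) (pstar + ℓ),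
          κL * α * |v - pstar| ^ α ≤ (pstar - v) * deriv R v ∧
          (pstar - v) * deriv R v ≤ κU * α * |v - pstar| ^ α) →
      (∃ κL κU ℓ : ℝ, 0 < κL ∧ 0 < κU ∧ 0 < ℓ ∧
        Set.Ioo (pstar - ℓ) (pstar + ℓ) ⊆ Set.Ioo (0:ℝ) vbar ∧
        ∀ v ∈ Set.Ioo (pstar - ℓ) (pstar + ℓ),
          κL * |v - pstar| ^ α ≤ R pstar - R v ∧
          R pstar - R v ≤ κU * |v - pstar| ^ α)) := by
  have hα₀ : 0 < α := by linarith
  have hball : ∀ ℓ, Ioo (pstar - min ℓ ℓc) (pstar + min ℓ ℓc) ⊆ Icc (pstar - ℓc) (pstar + ℓc) :=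
    fun ℓ v hv => ⟨by linarith [hv.1, min_le_right ℓ ℓc], by linarith [hv.2, min_le_right ℓ ℓc]⟩
  have hconc' : ∀ ℓ, ConcaveOn ℝ (Ioo (pstar - min ℓ ℓc) (pstar + min ℓ ℓc)) R :=
    fun ℓ => hconc.subset (hball ℓ) (convex_Ioo _ _)
  have hdiff' : ∀ ℓ, ∀ v ∈ Ioo (pstar - min ℓ ℓc) (pstar + min ℓ ℓc), DifferentiableAt ℝ R v :=
    fun ℓ v hv => hdiff v (hsub (hball ℓ hv))
  constructor
  · rintro ⟨κL, κU, ℓ, hκL, hκU, hℓ, -, hval⟩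
    have hr : 0 < min ℓ ℓc := lt_min hℓ hℓc
    have hder := ValueEnvelope.derivEnvelope (ValueEnvelope.mono hval (min_le_left ℓ ℓc)) hκL.le
      (hconc' ℓ) (hdiff' ℓ)
    refine ⟨κL / α, κU * 2 ^ α / α, min ℓ ℓc / 2, by positivity, by positivity, by positivity,
      (Ioo_subset_Ioo (by linarith) (by linarith)).trans ((hball ℓ).trans hsub), ?_⟩
    rwa [div_mul_cancel₀ _ hα₀.ne', div_mul_cancel₀ _ hα₀.ne']
  · rintro ⟨κL, κU, ℓ, hκL, hκU, hℓ, -, hder⟩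
    refine ⟨κL * α / 2 ^ α, κU * α, min ℓ ℓc, by positivity, by positivity, lt_min hℓ hℓc,
      (hball ℓ).trans hsub, ?_⟩
    exact DerivEnvelope.valueEnvelope (DerivEnvelope.mono hder (min_le_left ℓ ℓc)) (hconc' ℓ)
      (hdiff' ℓ) fun v hv => hmax v (hsub (hball ℓ hv))

/-- Equivalence of the value and derivative forms of the local α-power envelope
condition for a locally concave revenue function around an interior maximizer:
the bounds `κ̃_L·|v−p*|^α ≤ R(p*) − R(v) ≤ κ̃_U·|v−p*|^α` hold on a neighborhood
of `p*` iff the bounds `κ_L·α·|v−p*|^α ≤ (p*−v)·R'(v) ≤ κ_U·α·|v−p*|^α` hold on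
a (possibly smaller) neighborhood. -/
theorem alpha_power_envelope_equivalence
    (vbar pstar α : ℝ) (hα : 1 < α)
    (hp : 0 < pstar) (hpv : pstar < vbar)
    (R : ℝ → ℝ)
    (hdiff : ∀ v ∈ Set.Ioo (0:ℝ) vbar, DifferentiableAt ℝ R v)
    (hmax : ∀ v ∈ Set.Ioo (0:ℝ) vbar, R v ≤ R pstar)
    (ℓc : ℝ) (hℓc : 0 < ℓc)
    (hsub : Set.Icc (pstar - ℓc) (pstar + ℓc) ⊆ Set.Ioo (0:ℝ) vbar)
    (hconc : ConcaveOn ℝ (Set.Icc (pstar - ℓc) (pstar + ℓc)) R) :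
    ((∃ κL κU ℓ : ℝ, 0 < κL ∧ 0 < κU ∧ 0 < ℓ ∧
        Set.Ioo (pstar - ℓ) (pstar + ℓ) ⊆ Set.Ioo (0:ℝ) vbar ∧
        ∀ v ∈ Set.Ioo (pstar - ℓ) (pstar + ℓ),
          κL * |v - pstar| ^ α ≤ R pstar - R v ∧
          R pstar - R v ≤ κU * |v - pstar| ^ α) →
      (∃ κL κU ℓ : ℝ, 0 < κL ∧ 0 < κU ∧ 0 < ℓ ∧
        Set.Ioo (pstar - ℓ) (pstar + ℓ) ⊆ Set.Ioo (0:ℝ) vbar ∧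
        ∀ v ∈ Set.Ioo (pstar - ℓ) (pstar + ℓ),
          κL * α * |v - pstar| ^ α ≤ (pstar - v) * deriv R v ∧
          (pstar - v) * deriv R v ≤ κU * α * |v - pstar| ^ α)) ∧
    ((∃ κL κU ℓ : ℝ, 0 < κL ∧ 0 < κU ∧ 0 < ℓ ∧
        Set.Ioo (pstar - ℓ) (pstar + ℓ) ⊆ Set.Ioo (0:ℝ) vbar ∧
        ∀ v ∈ Set.Ioo (pstar - ℓ) (pstar + ℓ),
          κL * α * |v - pstar| ^ α ≤ (pstar - v) * deriv R v ∧
          (pstar - v) * deriv R v ≤ κU * α * |v - pstar| ^ α) →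
      (∃ κL κU ℓ : ℝ, 0 < κL ∧ 0 < κU ∧ 0 < ℓ ∧
        Set.Ioo (pstar - ℓ) (pstar + ℓ) ⊆ Set.Ioo (0:ℝ) vbar ∧
        ∀ v ∈ Set.Ioo (pstar - ℓ) (pstar + ℓ),
          κL * |v - pstar| ^ α ≤ R pstar - R v ∧
          R pstar - R v ≤ κU * |v - pstar| ^ α)) :=
  alpha_power_envelope_equivalence_general vbar pstar α hα R hdiff hmax ℓc hℓc hsub hconc
end

section
/- Let F be a CDF with density f on [0, v̄], and let (x, t) be the perturbed delayed mechanism with parameters (μ, δ): x solves the ODE/DDE system with x(v) = 1 for v > p*+δ, v*(v) is the piecewise best-response map (0 below p*−δ, v−μ on [p*−δ, p*+δ+μ], p*+δ above), and t(v) = v·x(v) for v < p*−δ, t(v) = v·x(v) − ∫_0^v x(v*(s))ds + ε for v ≥ p*−δ. Then the expected revenue equals ∫_0^{p*+δ} x(v)·(v − (1−F(v+μ))·w'(v)/f(v))·f(v) dv + R(p*+δ) + ∫_{p*+δ}^{p*+δ+μ} (1−F(v)) dv, where w is the generalized inverse of v* (w(v) = p*−δ for v ≤ p*−δ−μ and w(v)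 = v+μ otherwise) and R(v) = v(1−F(v)). -/
/-!
For `v ≥ p* − δ` the boundary value `x 0 = ε / (p* − δ)` makes `∫₀^{p*−δ} x(v*(s)) ds = ε`, so
the transfer is `t v = v x(v) − ∫_{p*−δ}^v x(v*(s)) ds`, and on that range `x(v*(s)) = x(s − μ)`
because, by continuity, `x ≡ 1` already from `p* + δ` on. Integrating by parts against `F − F v̄` turns the
integrated transfer into `∫ x(v*(v)) (1 − F v) dv`; shifting by `μ` gives `∫ x(v) (1 − F (v + μ))`
over `[p* − δ − μ, p* + δ]`, which is the `w'` part of the delayed virtual value because `w'`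
is `0` below `p* − δ − μ` and `1` above. A last integration by parts of `v f(v)` over
`[p* + δ, v̄]`, where `x ≡ 1`, produces `R(p* + δ)` and the integral of `1 − F`.
-/

open Set MeasureTheory intervalIntegral Filter Topology

section IntegrationByParts

variable {F f : ℝ → ℝ} {a b : ℝ}

theorem integral_mul_deriv_eq_add_integral {u u' : ℝ → ℝ}
    (hu : ∀ v ∈ uIcc a b, HasDerivAt u (u' v) v) (hu' : IntervalIntegrable u' volume a b)
    (hF : ∀ v ∈ uIcc a b, HasDerivAt F (f v) v) (hf : IntervalIntegrable f volume a b) :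
    ∫ v in a..b, u v * f v = u a * (F b - F a) + ∫ v in a..b, u' v * (F b - F v) := by
  have hFb (v : ℝ) (hv : v ∈ uIcc a b) : HasDerivAt (fun v => F v - F b) (f v) v :=
    (hF v hv).sub_const _
  have hflip : ∫ v in a..b, u' v * (F v - F b) = -∫ v in a..b, u' v * (F b - F v) := by
    rw [← intervalIntegral.integral_neg]
    congr 1 with v
    ring
  rw [integral_mul_deriv_eq_deriv_mul hu hFb hu' hf, hflip]
  ring

theorem integral_primitive_mul_deriv {g : ℝ → ℝ} (hg : Continuous g)
    (hF : ∀ v ∈ uIcc a b, HasDerivAt F (f v) v) (hf : IntervalIntegrable f volume a b) :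
    ∫ v in a..b, (∫ s in a..v, g s) * f v = ∫ v in a..b, g v * (F b - F v) := by
  rw [integral_mul_deriv_eq_add_integral (fun v _ => (hg.integral_hasStrictDerivAt a v).hasDerivAt)
    (hg.intervalIntegrable a b) hF hf, integral_same, zero_mul, zero_add]

theorem integral_id_mul_mul_deriv_of_eq_one {y : ℝ → ℝ} (hab : a ≤ b)
    (hy : ∀ z, a ≤ z → y z = 1) (hF : ∀ v ∈ uIcc a b, HasDerivAt F (f v) v)
    (hf : IntervalIntegrable f volume a b) :
    ∫ v in a..b, v * y v * f v = a * (F b - F a) + ∫ v in a..b, (F b - F v) := by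
  rw [integral_congr (g := fun v => v * f v) fun v hv => by
    simp only [hy v (uIcc_of_le hab ▸ hv).1, mul_one]]
  simpa using integral_mul_deriv_eq_add_integral (fun v _ => hasDerivAt_id v)
    intervalIntegrable_const hF hf

theorem integral_eq_add_of_eqOn_Ioo {φ g₁ g₂ : ℝ → ℝ} {c : ℝ} (hac : a ≤ c) (hcb : c ≤ b)
    (hg₁ : IntervalIntegrable g₁ volume a c) (hg₂ : IntervalIntegrable g₂ volume c b)
    (h₁ : EqOn φ g₁ (Ioo a c)) (h₂ : EqOn φ g₂ (Ioo c b)) :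
    ∫ v in a..b, φ v = (∫ v in a..c, g₁ v) + ∫ v in c..b, g₂ v := by
  have hφ₁ : IntervalIntegrable φ volume a c := hg₁.congr_uIoo (by rwa [uIoo_of_le hac, eqOn_comm])
  have hφ₂ : IntervalIntegrable φ volume c b := hg₂.congr_uIoo (by rwa [uIoo_of_le hcb, eqOn_comm])
  rw [← integral_add_adjacent_intervals hφ₁ hφ₂, integral_congr_Ioo_of_le hac h₁,
    integral_congr_Ioo_of_le hcb h₂]

theorem integral_mul_deriv_of_eqOn_sub_primitive {t u g : ℝ → ℝ} {c : ℝ} (hac : a ≤ c)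
    (hcb : c ≤ b) (hu : Continuous u) (hg : Continuous g)
    (hF : ∀ v ∈ uIcc c b, HasDerivAt F (f v) v) (hf : Continuous f)
    (ht₁ : EqOn t u (Ioo a c)) (ht₂ : EqOn t (fun v => u v - ∫ s in c..v, g s) (Ioo c b)) :
    ∫ v in a..b, t v * f v = (∫ v in a..b, u v * f v) - ∫ v in c..b, g v * (F b - F v) := by
  have hG : Continuous fun v => ∫ s in c..v, g s :=
    continuous_primitive (fun _ _ => hg.intervalIntegrable _ _) c
  have huf (a b : ℝ) : IntervalIntegrable (fun v => u v * f v) volume a b :=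
    (hu.mul hf).intervalIntegrable a b
  have hGf : IntervalIntegrable (fun v => (∫ s in c..v, g s) * f v) volume c b :=
    (hG.mul hf).intervalIntegrable c b
  rw [integral_eq_add_of_eqOn_Ioo hac hcb (huf a c) ((huf c b).sub hGf)
      (fun v hv => by rw [ht₁ hv]) (fun v hv => by simp only [ht₂ hv, sub_mul]),
    integral_sub (huf c b) hGf, integral_primitive_mul_deriv hg hF (hf.intervalIntegrable _ _),
    ← add_sub_assoc, integral_add_adjacent_intervals (huf a c) (huf c b)]

theorem integral_mul_virtualValue {x y h w : ℝ → ℝ} {m : ℝ} (ham : a ≤ m) (hmb : m ≤ b)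
    (hy : Continuous y) (hh : Continuous h) (hf : Continuous f) (hxy : EqOn x y (Ioo a b))
    (hf₀ : ∀ v ∈ Ioo m b, f v ≠ 0) (hw₀ : ∀ v < m, deriv w v = 0)
    (hw₁ : ∀ v, m < v → deriv w v = 1) :
    ∫ v in a..b, x v * (v - h v * deriv w v / f v) * f v
      = (∫ v in a..b, v * y v * f v) - ∫ v in m..b, y v * h v := by
  have hyf (a b : ℝ) : IntervalIntegrable (fun v => v * y v * f v) volume a b :=
    ((continuous_id.mul hy).mul hf).intervalIntegrable a b
  have hyh : IntervalIntegrable (fun v => y v * h v) volume m b :=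
    (hy.mul hh).intervalIntegrable m b
  rw [integral_eq_add_of_eqOn_Ioo ham hmb (hyf a m) ((hyf m b).sub hyh), integral_sub (hyf m b) hyh,
    ← add_sub_assoc, integral_add_adjacent_intervals (hyf a m) (hyf m b)]
  · intro v hv
    simp only [hw₀ v hv.2, hxy ⟨hv.1, hv.2.trans_le hmb⟩, mul_zero, zero_div, sub_zero]
    ring
  · intro v hv
    have := hf₀ v hv
    simp only [hw₁ v hv.1, hxy ⟨ham.trans_lt hv.1, hv.2⟩]
    field_simp

theorem integral_comp_sub_mul_of_eq_one {y k : ℝ → ℝ} {μ c : ℝ} (hc : c + μ ≤ b)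
    (hy : Continuous y) (hk : Continuous k) (hy₁ : ∀ z, c ≤ z → y z = 1) :
    ∫ v in a..b, y (v - μ) * k v
      = (∫ v in (a - μ)..c, y v * k (v + μ)) + ∫ v in (c + μ)..b, k v := by
  have hyk (a b : ℝ) : IntervalIntegrable (fun v => y (v - μ) * k v) volume a b :=
    ((hy.comp (continuous_sub_right μ)).mul hk).intervalIntegrable a b
  rw [← integral_add_adjacent_intervals (hyk a (c + μ)) (hyk (c + μ) b)]
  congr 1
  · simpa using integral_comp_sub_right (fun v => y v * k (v + μ)) μ (a := a) (b := c + μ)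
  · refine integral_congr fun v hv => ?_
    rw [uIcc_of_le hc] at hv
    simp only [hy₁ (v - μ) (by linarith [hv.1]), one_mul]

end IntegrationByParts

theorem ContinuousOn.exists_continuous_extension_of_eq_const {x : ℝ → ℝ} {a b c k : ℝ}
    (hx : ContinuousOn x (Icc a b)) (hac : a ≤ c) (hcb : c < b) (hk : ∀ z, c < z → x z = k) :
    ∃ y : ℝ → ℝ, Continuous y ∧ (∀ z, a ≤ z → y z = x z) ∧ ∀ z, c ≤ z → y z = k := by
  have hxc : x c = k :=
    ((hx c ⟨hac, hcb.le⟩).mono (s := Ioc c b) fun z hz => ⟨hac.trans hz.1.le, hz.2⟩)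
      |>.eq_const_of_mem_closure (by rw [closure_Ioc hcb.ne]; exact left_mem_Icc.2 hcb.le)
        fun z hz => hk z hz.1
  refine ⟨fun z => x (projIcc a c hac z), (hx.mono (Icc_subset_Icc_right hcb.le)).comp_continuous
    (continuous_subtype_val.comp continuous_projIcc) fun z => (projIcc a c hac z).2,
    fun z hz => ?_, fun z hz => by simp only [projIcc_of_right_le _ hz, hxc]⟩
  dsimp only
  rcases le_or_gt z c with hzc | hcz
  · rw [projIcc_of_mem _ ⟨hz, hzc⟩]
  · rw [projIcc_of_right_le _ hcz.le, hxc, hk z hcz]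

section Mechanism

variable {w : ℝ → ℝ} {m c μ : ℝ}

theorem deriv_ite_of_lt (hw : ∀ v, w v = if v ≤ m then c else v + μ) {v : ℝ} (hv : v < m) :
    deriv w v = 0 := by
  have hloc : w =ᶠ[𝓝 v] fun _ => c :=
    eventually_of_mem (Iio_mem_nhds hv) fun u hu => by rw [hw, if_pos (le_of_lt hu)]
  rw [hloc.deriv_eq, deriv_const]

theorem deriv_ite_of_gt (hw : ∀ v, w v = if v ≤ m then c else v + μ) {v : ℝ} (hv : m < v) :
    deriv w v = 1 := by
  have hloc : w =ᶠ[𝓝 v] fun u => u + μ :=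
    eventually_of_mem (Ioi_mem_nhds hv) fun u hu => by rw [hw, if_neg (not_le.2 hu)]
  rw [hloc.deriv_eq, deriv_add_const, deriv_id'']

variable {pstar δ ε : ℝ} {x y vstar : ℝ → ℝ}

theorem comp_bestResponse_eq (hm : 0 ≤ pstar - δ - μ) (hB : 0 ≤ pstar + δ)
    (hvstar : ∀ v, vstar v =
      if v < pstar - δ then 0 else if v ≤ pstar + δ + μ then v - μ else pstar + δ)
    (hyx : ∀ z, 0 ≤ z → y z = x z) (hy₁ : ∀ z, pstar + δ ≤ z → y z = 1) {s : ℝ}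
    (hs : pstar - δ ≤ s) : x (vstar s) = y (s - μ) := by
  rw [hvstar, if_neg hs.not_gt]
  split_ifs
  · rw [hyx _ (by linarith)]
  · rw [← hyx _ hB, hy₁ _ le_rfl, hy₁ _ (by linarith)]

theorem integral_comp_bestResponse (hm : 0 ≤ pstar - δ - μ) (hA : 0 < pstar - δ)
    (hB : 0 ≤ pstar + δ)
    (hvstar : ∀ v, vstar v =
      if v < pstar - δ then 0 else if v ≤ pstar + δ + μ then v - μ else pstar + δ)
    (hx₀ : x 0 = ε / (pstar - δ)) (hy : Continuous y) (hyx : ∀ z, 0 ≤ z → y z = x z)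
    (hy₁ : ∀ z, pstar + δ ≤ z → y z = 1) {v : ℝ} (hv : pstar - δ ≤ v) :
    ∫ s in 0..v, x (vstar s) = ε + ∫ s in (pstar - δ)..v, y (s - μ) := by
  rw [integral_eq_add_of_eqOn_Ioo hA.le hv (g₂ := fun s => y (s - μ))
    (intervalIntegrable_const (c := ε / (pstar - δ)))
    ((hy.comp (continuous_sub_right μ)).intervalIntegrable _ _), intervalIntegral.integral_const,
    smul_eq_mul, sub_zero, mul_div_cancel₀ _ hA.ne']
  · intro s hs
    simp only [hvstar, if_pos hs.2, hx₀]
  · intro s hs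
    exact comp_bestResponse_eq hm hB hvstar hyx hy₁ hs.1.le

end Mechanism

theorem perturbed_delayed_mechanism_revenue_general
    (vbar pstar δ μ ε : ℝ)
    (hμ : 0 < μ) (hδ : 0 < δ)
    (hlow : 0 < pstar - δ - μ) (hhigh : pstar + δ + μ < vbar)
    (F f x t vstar w : ℝ → ℝ)
    (hf : ∀ v, HasDerivAt F (f v) v)
    (hfcont : Continuous f)
    (hfpos : ∀ v ∈ Set.Icc (0:ℝ) vbar, 0 < f v)
    (hFvbar : F vbar = 1)
    (hvstar : ∀ v, vstar v =
      if v < pstar - δ then 0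
      else if v ≤ pstar + δ + μ then v - μ else pstar + δ)
    (hw : ∀ v, w v = if v ≤ pstar - δ - μ then pstar - δ else v + μ)
    (hxcont : ContinuousOn x (Set.Icc 0 vbar))
    (hx0 : x 0 = ε / (pstar - δ))
    (hx1 : ∀ v, pstar + δ < v → x v = 1)
    (ht1 : ∀ v, 0 ≤ v → v < pstar - δ → t v = v * x v)
    (ht2 : ∀ v, pstar - δ ≤ v →
      t v = v * x v - (∫ s in (0:ℝ)..v, x (vstar s)) + ε) :
    ∫ v in (0:ℝ)..vbar, t v * f v =
      (∫ v in (0:ℝ)..(pstar + δ),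
        x v * (v - (1 - F (v + μ)) * deriv w v / f v) * f v)
      + (pstar + δ) * (1 - F (pstar + δ))
      + ∫ v in (pstar + δ)..(pstar + δ + μ), (1 - F v) := by
  have hA : 0 < pstar - δ := by linarith
  have hB : 0 ≤ pstar + δ := by linarith
  have hBv : pstar + δ < vbar := by linarith
  obtain ⟨y, hy, hyx, hy₁⟩ := hxcont.exists_continuous_extension_of_eq_const hB hBv hx1
  have ht₁ : EqOn t (fun v => v * y v) (Ioo 0 (pstar - δ)) := fun v hv => by
    simp only [ht1 v hv.1.le hv.2, hyx v hv.1.le]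
  have ht₂ : EqOn t (fun v => v * y v - ∫ s in (pstar - δ)..v, y (s - μ)) (Ioo (pstar - δ) vbar) :=
    fun v hv => by
      simp only [ht2 v hv.1.le, hyx v (hA.trans hv.1).le,
        integral_comp_bestResponse hlow.le hA hB hvstar hx0 hy hyx hy₁ hv.1.le]
      ring
  have hFc : Continuous F := continuous_iff_continuousAt.2 fun v => (hf v).continuousAt
  have hyf (a b : ℝ) : IntervalIntegrable (fun v => v * y v * f v) volume a b :=
    ((continuous_id.mul hy).mul hfcont).intervalIntegrable a b
  have h1F (a b : ℝ) : IntervalIntegrable (fun v => 1 - F v) volume a b :=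
    (continuous_const.sub hFc).intervalIntegrable a b
  rw [integral_mul_deriv_of_eqOn_sub_primitive (u := fun v => v * y v) (g := fun s => y (s - μ))
      hA.le (by linarith) (continuous_id.mul hy) (hy.comp (continuous_sub_right μ))
      (fun v _ => hf v) hfcont ht₁ ht₂, hFvbar,
    integral_comp_sub_mul_of_eq_one (k := fun v => 1 - F v) (by linarith) hy
      (continuous_const.sub hFc) hy₁,
    integral_mul_virtualValue (h := fun v => 1 - F (v + μ)) hlow.le (by linarith) hy
      (continuous_const.sub (hFc.comp (continuous_add_const μ))) hfcont
      (fun v hv => (hyx v hv.1.le).symm)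
      (fun v hv => (hfpos v ⟨by linarith [hv.1], by linarith [hv.2]⟩).ne')
      (fun v hv => deriv_ite_of_lt hw hv) (fun v hv => deriv_ite_of_gt hw hv),
    ← integral_add_adjacent_intervals (hyf 0 (pstar + δ)) (hyf _ vbar),
    integral_id_mul_mul_deriv_of_eq_one hBv.le hy₁ (fun v _ => hf v)
      (hfcont.intervalIntegrable _ _),
    hFvbar, ← integral_add_adjacent_intervals (h1F (pstar + δ) (pstar + δ + μ)) (h1F _ vbar)]
  ring

/-- Revenue of the perturbed delayed mechanism: with the piecewise best-response
map `v*`, its generalized inverse `w`, the allocation `x` solving the ODE/DDE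
system (with `x ≡ 1` above `p*+δ`) and the associated transfers `t`, the
expected revenue equals
`∫₀^{p*+δ} x(v)·(v − (1−F(v+μ))·w'(v)/f(v))·f(v) dv + R(p*+δ)
 + ∫_{p*+δ}^{p*+δ+μ} (1−F(v)) dv`, where `R(v) = v(1−F(v))`. -/
theorem perturbed_delayed_mechanism_revenue
    (vbar pstar δ μ ε : ℝ)
    (hμ : 0 < μ) (hδ : 0 < δ) (hε : 0 < ε)
    (hlow : 0 < pstar - δ - μ) (hhigh : pstar + δ + μ < vbar)
    (F f x t vstar w : ℝ → ℝ)
    (hf : ∀ v, HasDerivAt F (f v) v)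
    (hfcont : Continuous f)
    (hfpos : ∀ v ∈ Set.Icc (0:ℝ) vbar, 0 < f v)
    (hFvbar : F vbar = 1)
    (hvstar : ∀ v, vstar v =
      if v < pstar - δ then 0
      else if v ≤ pstar + δ + μ then v - μ else pstar + δ)
    (hw : ∀ v, w v = if v ≤ pstar - δ - μ then pstar - δ else v + μ)
    (hxcont : ContinuousOn x (Set.Icc 0 vbar))
    (hODE : ∀ v ∈ Set.Ioo (0:ℝ) (pstar - δ),
      HasDerivAt x (x v / (w v - v)) v)
    (hDDE : ∀ v ∈ Set.Ioo (pstar - δ) (pstar + δ),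
      HasDerivAt x ((x v - x (vstar v)) / (w v - v)) v)
    (hx0 : x 0 = ε / (pstar - δ))
    (hx1 : ∀ v, pstar + δ < v → x v = 1)
    (ht1 : ∀ v, 0 ≤ v → v < pstar - δ → t v = v * x v)
    (ht2 : ∀ v, pstar - δ ≤ v →
      t v = v * x v - (∫ s in (0:ℝ)..v, x (vstar s)) + ε) :
    ∫ v in (0:ℝ)..vbar, t v * f v =
      (∫ v in (0:ℝ)..(pstar + δ),
        x v * (v - (1 - F (v + μ)) * deriv w v / f v) * f v)
      + (pstar + δ) * (1 - F (pstar + δ))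
      + ∫ v in (pstar + δ)..(pstar + δ + μ), (1 - F v) :=
  perturbed_delayed_mechanism_revenue_general vbar pstar δ μ ε hμ hδ hlow hhigh F f x t vstar w hf
    hfcont hfpos hFvbar hvstar hw hxcont hx0 hx1 ht1 ht2
end
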